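/- arXiv:1004.2778 — 9 statements merged into one kernel-verified Lean document; each statement's English description precedes it below -/
import Mathlib

section
/- Let K be a tropical cone in R_max^n (the max-plus semiring). Every extreme vector (a,b) of the polar cone of K = Row(G), where G is a p×n matrix over R_max with no identically -∞ column, is either a tropical scalar multiple of a trivial inequality (of the form (0⃗, e^i) representing x_i ≥ -∞, or (e^i, e^i) representing x_i ≤ x_i), or a tropical scalar multiple of an inequality of type i, i.e. of the form (e^i, b) with b_i = -∞, for some i ∈ [n]. -/
open Finset

abbrev Rmax : Type := WithBot ℝ

noncomputable def tdot {ι : Type*} [Fintype ι] (a x : ι → Rmax) : Rmax :=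
  univ.sup fun j => a j + x j

def rowSpace {p : ℕ} {ι : Type*} [Fintype ι] (G : Fin p → ι → Rmax) : Set (ι → Rmax) :=
  { x | ∃ lam : Fin p → Rmax, x = fun j => univ.sup fun r => lam r + G r j }

noncomputable def polar {ι : Type*} [Fintype ι] (K : Set (ι → Rmax)) :
    Set ((ι → Rmax) × (ι → Rmax)) :=
  { ab | ∀ x ∈ K, tdot ab.1 x ≤ tdot ab.2 x }

def IsTropExtreme {α : Type*} [SemilatticeSup α] [OrderBot α] (C : Set α) (v : α) : Prop :=
  v ∈ C ∧ v ≠ ⊥ ∧ ∀ y ∈ C, ∀ z ∈ C, v = y ⊔ z → v = y ∨ v = z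

noncomputable def unitv {n : ℕ} (i : Fin n) : Fin n → Rmax :=
  fun j => if j = i then (0 : Rmax) else ⊥

noncomputable def tdiv (a b : Rmax) : Rmax :=
  if a = ⊥ ∨ b = ⊥ then ⊥ else ((WithBot.unbotD 0 a - WithBot.unbotD 0 b : ℝ) : Rmax)

/-- keep only the j-th component -/
noncomputable def keepF {n : ℕ} (j : Fin n) (a : Fin n → Rmax) : Fin n → Rmax :=
  fun k => if k = j then a k else ⊥

/-- zero out the j-th component -/
noncomputable def dropF {n : ℕ} (j : Fin n) (a : Fin n → Rmax) : Fin n → Rmax :=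
  fun k => if k = j then ⊥ else a k

lemma keep_sup_drop {n : ℕ} (j : Fin n) (a : Fin n → Rmax) :
    keepF j a ⊔ dropF j a = a := by
  funext k
  by_cases h : k = j <;> simp [keepF, dropF, h]

lemma tdot_mono_left {n : ℕ} {a a' : Fin n → Rmax} (x : Fin n → Rmax) (h : a ≤ a') :
    tdot a x ≤ tdot a' x :=
  Finset.sup_mono_fun fun j _ => add_le_add_left (h j) _

lemma tdot_bot {n : ℕ} (x : Fin n → Rmax) : tdot (⊥ : Fin n → Rmax) x = ⊥ :=
  le_bot_iff.mp <| Finset.sup_le fun j _ => by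
    simp [Pi.bot_apply, WithBot.bot_add]

lemma bot_mem_polar {n : ℕ} (K : Set (Fin n → Rmax)) (b : Fin n → Rmax) :
    ((⊥ : Fin n → Rmax), b) ∈ polar K := by
  intro x _
  simp [tdot_bot]

lemma refl_mem_polar {n : ℕ} (K : Set (Fin n → Rmax)) (a : Fin n → Rmax) :
    (a, a) ∈ polar K := fun x _ => le_rfl

lemma polar_mono_left {n : ℕ} {K : Set (Fin n → Rmax)} {a a' b : Fin n → Rmax}
    (h : a' ≤ a) (hab : (a, b) ∈ polar K) : (a', b) ∈ polar K :=
  fun x hx => (tdot_mono_left x h).trans (hab x hx)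

lemma keepF_le {n : ℕ} (j : Fin n) (a : Fin n → Rmax) : keepF j a ≤ a := by
  intro k; by_cases h : k = j <;> simp [keepF, h]

lemma dropF_le {n : ℕ} (j : Fin n) (a : Fin n → Rmax) : dropF j a ≤ a := by
  intro k; by_cases h : k = j <;> simp [dropF, h]

lemma tdot_keepF {n : ℕ} (j : Fin n) (a x : Fin n → Rmax) :
    tdot (keepF j a) x = a j + x j := by
  refine le_antisymm (Finset.sup_le fun k _ => ?_) ?_
  · by_cases h : k = j <;> simp [keepF, h, WithBot.bot_add]
  · have := Finset.le_sup (f := fun k => keepF j a k + x k) (mem_univ j)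
    simpa [keepF, tdot] using this

lemma tdot_le_keep_sup_drop {n : ℕ} (j : Fin n) (b x : Fin n → Rmax) :
    tdot b x ≤ (b j + x j) ⊔ tdot (dropF j b) x := by
  refine Finset.sup_le fun k _ => ?_
  by_cases h : k = j
  · subst h; exact le_sup_left
  · refine le_trans ?_ le_sup_right
    have := Finset.le_sup (f := fun k => dropF j b k + x k) (mem_univ k)
    simpa [dropF, h, tdot] using this

/-- every extreme vector of the polar of a row space is a tropical
scalar multiple of a trivial inequality `(⊥, e^i)` or `(e^i, e^i)`, or of an
inequality of type `i`, i.e. of the form `(e^i, b)` with `b i = ⊥`. -/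
theorem statement0 {p n : ℕ} (G : Fin p → Fin n → Rmax)
    (hG : ∀ j : Fin n, ∃ r : Fin p, G r j ≠ ⊥)
    (ab : (Fin n → Rmax) × (Fin n → Rmax))
    (hab : IsTropExtreme (polar (rowSpace G)) ab) :
    ∃ (i : Fin n) (lam : ℝ),
      ab = (⊥, fun j => (lam : Rmax) + unitv i j) ∨
      ab = ((fun j => (lam : Rmax) + unitv i j), fun j => (lam : Rmax) + unitv i j) ∨
      ((ab.1 = fun j => (lam : Rmax) + unitv i j) ∧ ab.2 i = ⊥) := by
  obtain ⟨a, b⟩ := ab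
  obtain ⟨hmem, hne, hext⟩ := hab
  set K := rowSpace G with hK
  by_cases ha : a = ⊥
  · -- a = ⊥ : trivial inequality of first kind
    subst ha
    have hb : ∃ j, b j ≠ ⊥ := by
      by_contra h
      push_neg at h
      exact hne (Prod.ext rfl (funext fun k => h k))
    obtain ⟨j, hbj⟩ := hb
    have hdec : ((⊥ : Fin n → Rmax), b) = ((⊥ : Fin n → Rmax), keepF j b) ⊔ (⊥, dropF j b) := by
      rw [Prod.mk_sup_mk, sup_idem, keep_sup_drop]
    rcases hext _ (bot_mem_polar K _) _ (bot_mem_polar K _) hdec with h1 | h2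
    · have hb2 : b = keepF j b := congrArg Prod.snd h1
      obtain ⟨μ, hμ⟩ := WithBot.ne_bot_iff_exists.mp hbj
      refine ⟨j, μ, Or.inl ?_⟩
      refine Prod.ext rfl ?_
      funext k
      rw [hb2]
      by_cases h : k = j <;>
        simp [keepF, unitv, h, ← hμ, WithBot.add_bot]
    · have h2' : b = dropF j b := congrArg Prod.snd h2
      have := congrFun h2' j
      simp [dropF] at this
      exact absurd this hbj
  · -- a ≠ ⊥
    have hj : ∃ j, a j ≠ ⊥ := by
      by_contra h
      push_neg at h
      exact ha (funext fun k => h k)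
    obtain ⟨j, haj⟩ := hj
    -- step 1: a is supported only at j
    have hy : (keepF j a, b) ∈ polar K := polar_mono_left (keepF_le j a) hmem
    have hz : (dropF j a, b) ∈ polar K := polar_mono_left (dropF_le j a) hmem
    have hdec : (a, b) = (keepF j a, b) ⊔ (dropF j a, b) := by
      rw [Prod.mk_sup_mk, sup_idem, keep_sup_drop]
    have ha1 : a = keepF j a := by
      rcases hext _ hy _ hz hdec with h1 | h2
      · exact congrArg Prod.fst h1
      · exfalso
        apply haj
        have h2' : a = dropF j a := congrArg Prod.fst h2
        have := congrFun h2' j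
        simpa [dropF] using this
    obtain ⟨lam, hlam⟩ := WithBot.ne_bot_iff_exists.mp haj
    have hafun : a = fun k => (lam : Rmax) + unitv j k := by
      funext k
      rw [ha1]
      by_cases h : k = j <;>
        simp [keepF, unitv, h, ← hlam, WithBot.add_bot]
    by_cases hbj : b j = ⊥
    · exact ⟨j, lam, Or.inr (Or.inr ⟨hafun, hbj⟩)⟩
    obtain ⟨μ, hμ⟩ := WithBot.ne_bot_iff_exists.mp hbj
    by_cases hle : (lam : Rmax) ≤ (μ : Rmax)
    · -- second disjunct
      have hdec2 : (a, b) = (a, a) ⊔ ((⊥ : Fin n → Rmax), b) := by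
        rw [Prod.mk_sup_mk, Prod.mk.injEq]
        refine ⟨by simp, ?_⟩
        symm
        rw [sup_eq_right]
        intro k
        by_cases h : k = j
        · subst h
          rw [ha1]
          simpa [keepF, ← hlam, ← hμ] using hle
        · rw [ha1]; simp [keepF, h]
      rcases hext _ (refl_mem_polar K a) _ (bot_mem_polar K b) hdec2 with h1 | h2
      · refine ⟨j, lam, Or.inr (Or.inl ?_)⟩
        have hb : b = a := congrArg Prod.snd h1
        rw [hb, hafun]
      · exfalso
        apply haj
        have h2' : a = ⊥ := congrArg Prod.fst h2
        rw [h2']; rfl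
    · -- b j < lam : contradiction
      push_neg at hle
      have hy2 : (a, dropF j b) ∈ polar K := by
        intro x hx
        have h1 : tdot a x = (lam : Rmax) + x j := by
          rw [ha1, tdot_keepF, ← hlam]
        rw [h1]
        by_cases hxj : x j = ⊥
        · simp [hxj, WithBot.add_bot]
        obtain ⟨t, ht⟩ := WithBot.ne_bot_iff_exists.mp hxj
        have h2 : tdot a x ≤ (b j + x j) ⊔ tdot (dropF j b) x :=
          (hmem x hx).trans (tdot_le_keep_sup_drop j b x)
        rw [h1] at h2
        rcases le_sup_iff.mp h2 with h3 | h3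
        · exfalso
          have hlt : (μ : Rmax) + x j < (lam : Rmax) + x j := by
            rw [← ht, ← WithBot.coe_add, ← WithBot.coe_add]
            exact_mod_cast add_lt_add_left (WithBot.coe_lt_coe.mp hle) t
          rw [← hμ] at h3
          exact absurd h3 (not_le_of_gt hlt)
        · exact h3
      have hdec3 : (a, b) = (a, dropF j b) ⊔ ((⊥ : Fin n → Rmax), b) := by
        rw [Prod.mk_sup_mk, Prod.mk.injEq]
        refine ⟨by simp, ?_⟩
        symm
        rw [sup_eq_right]
        exact dropF_le j b
      rcases hext _ hy2 _ (bot_mem_polar K b) hdec3 with h1 | h2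
      · exfalso
        apply hbj
        have h1' : b = dropF j b := congrArg Prod.snd h1
        have := congrFun h1' j
        simpa [dropF] using this
      · exfalso
        apply haj
        have h2' : a = ⊥ := congrArg Prod.fst h2
        rw [h2']; rfl
end

section
/- Let G be a p×n matrix over R_max without an identically -∞ column, and let b ∈ R_max^n belong to the i-th polar of Row(G) with b_i ≠ -∞. Then b belongs to an extreme ray of the i-th polar if, and only if, for every index h ≠ i with b_h ≠ -∞ there exists a row index r ∈ [p] such that b_i + G_{ri} = max_{j≠i}(b_j + G_{rj}) ≠ -∞ and this maximum is attained only at j = h. -/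
open Finset

/-- The `i`-th polar of a set `K ⊆ Rmax^n`. -/
def ipolar {n : ℕ} (i : Fin n) (K : Set (Fin n → Rmax)) : Set (Fin n → Rmax) :=
  { b | ∀ x ∈ K, b i + x i ≤ (univ.erase i).sup fun j => b j + x j }

/- ## Auxiliary lemmas -/

lemma rmax_sup_add (a b c : Rmax) : (a ⊔ b) + c = (a + c) ⊔ (b + c) := by
  rcases le_total a b with h | h
  · rw [sup_eq_right.2 h, sup_eq_right.2 (add_le_add_left h c)]
  · rw [sup_eq_left.2 h, sup_eq_left.2 (add_le_add_left h c)]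

lemma sup_add_right' {α : Type*} (s : Finset α) (f : α → Rmax) (a : Rmax) :
    s.sup (fun j => f j + a) = s.sup f + a := by
  induction s using Finset.cons_induction with
  | empty => simp
  | cons x s hx ih =>
      rw [Finset.sup_cons, Finset.sup_cons, ih, rmax_sup_add]

lemma add_sup_left' {α : Type*} (s : Finset α) (f : α → Rmax) (a : Rmax) :
    a + s.sup f = s.sup (fun j => a + f j) := by
  rw [add_comm, ← sup_add_right']
  simp [add_comm]

lemma rmax_cancel {a b c : Rmax} (h : a + c = b + c) (hne : a + c ≠ ⊥) : a = b := by
  have hc : c ≠ ⊥ := fun hc => hne (by simp [hc])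
  have ha : a ≠ ⊥ := fun ha => hne (by simp [ha])
  have hb : b ≠ ⊥ := fun hb => hne (by rw [h]; simp [hb])
  lift a to ℝ using ha
  lift b to ℝ using hb
  lift c to ℝ using hc
  have : (a + c : ℝ) = b + c := by exact_mod_cast h
  exact_mod_cast add_right_cancel this

lemma sup_attained' {α : Type*} {s : Finset α} {f : α → Rmax} (h : s.sup f ≠ ⊥) :
    ∃ j ∈ s, f j = s.sup f := by
  have hs : s.Nonempty := by
    rcases s.eq_empty_or_nonempty with rfl | hs
    · simp at h
    · exact hs
  obtain ⟨j, hj, hje⟩ := Finset.exists_mem_eq_sup s hs f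
  exact ⟨j, hj, hje.symm⟩

lemma exists_eps' {α : Type*} (s : Finset α) (f g : α → Rmax) (h : ∀ r ∈ s, f r < g r) :
    ∃ ε : ℝ, 0 < ε ∧ ∀ r ∈ s, f r + (ε : Rmax) ≤ g r := by
  induction s using Finset.cons_induction with
  | empty => exact ⟨1, one_pos, by simp⟩
  | cons x s hx ih =>
      obtain ⟨ε, hε, hεs⟩ := ih fun r hr => h r (Finset.mem_cons.2 (Or.inr hr))
      have hx' : f x < g x := h x (Finset.mem_cons_self _ _)
      rcases eq_or_ne (f x) ⊥ with hfx | hfx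
      · refine ⟨ε, hε, fun r hr => ?_⟩
        rcases Finset.mem_cons.1 hr with rfl | hr
        · simp [hfx]
        · exact hεs r hr
      · lift f x to ℝ using hfx with a ha
        have hgx : g x ≠ ⊥ := fun hg => by simp [hg] at hx'
        lift g x to ℝ using hgx with c hc
        have hac : a < c := by exact_mod_cast hx'
        refine ⟨min ε (c - a), lt_min hε (by linarith), fun r hr => ?_⟩
        rcases Finset.mem_cons.1 hr with rfl | hr
        · rw [← ha, ← hc]
          have : ((a : Rmax) + ((min ε (c-a) : ℝ) : Rmax)) = ((a + min ε (c-a) : ℝ) : Rmax) := by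
            exact_mod_cast rfl
          rw [this]
          exact_mod_cast (by have := min_le_right ε (c-a); linarith : a + min ε (c-a) ≤ c)
        · refine le_trans ?_ (hεs r hr)
          have : ((min ε (c - a) : ℝ) : Rmax) ≤ (ε : Rmax) := by
            exact_mod_cast min_le_left _ _
          exact add_le_add_right this _

lemma mem_ipolar_rows {p n : ℕ} (G : Fin p → Fin n → Rmax) (i : Fin n) (y : Fin n → Rmax) :
    y ∈ ipolar i (rowSpace G) ↔
      ∀ r, y i + G r i ≤ (univ.erase i).sup fun j => y j + G r j := by
  constructor
  · intro hy r
    refine hy (G r) ⟨fun r' => if r' = r then 0 else ⊥, ?_⟩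
    funext j
    refine (le_antisymm (Finset.sup_le fun r' _ => ?_) ?_).symm
    · by_cases h : r' = r <;> simp [h]
    · have := Finset.le_sup (f := fun r' => (if r' = r then (0:Rmax) else ⊥) + G r' j)
        (Finset.mem_univ r)
      simpa using this
  · rintro hrows x ⟨lam, rfl⟩
    simp only
    rw [add_sup_left']
    refine Finset.sup_le fun r _ => ?_
    calc y i + (lam r + G r i) = lam r + (y i + G r i) := by
          rw [add_left_comm]
      _ ≤ lam r + ((univ.erase i).sup fun j => y j + G r j) := add_le_add_right (hrows r) _
      _ = (univ.erase i).sup fun j => lam r + (y j + G r j) := add_sup_left' _ _ _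
      _ ≤ (univ.erase i).sup fun j => y j + univ.sup fun r' => lam r' + G r' j := by
          refine Finset.sup_mono_fun fun j hj => ?_
          rw [add_left_comm]
          exact add_le_add_right (Finset.le_sup (f := fun r' => lam r' + G r' j)
            (Finset.mem_univ r)) _

/-- characterization of extreme vectors of the `i`-th polar via
edges `({h},{i})` of the tangent directed hypergraph. -/
theorem statement1 {p n : ℕ} (G : Fin p → Fin n → Rmax)
    (hG : ∀ j : Fin n, ∃ r : Fin p, G r j ≠ ⊥) (i : Fin n) (b : Fin n → Rmax)
    (hb : b ∈ ipolar i (rowSpace G)) (hbi : b i ≠ ⊥) :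
    IsTropExtreme (ipolar i (rowSpace G)) b ↔
      ∀ h : Fin n, h ≠ i → b h ≠ ⊥ →
        ∃ r : Fin p,
          b i + G r i = ((univ.erase i).sup fun j => b j + G r j) ∧
          b i + G r i ≠ ⊥ ∧
          ∀ j : Fin n, j ≠ i → b j + G r j = b i + G r i → j = h := by
  classical
  constructor
  · -- extreme → condition
    intro hext h hhi hbh
    by_contra hcon
    push_neg at hcon
    set T := univ.filter (fun r : Fin p =>
      b i + G r i < (univ.erase i).sup fun j => b j + G r j) with hT
    obtain ⟨ε, hε, hεT⟩ := exists_eps' T (fun r => b i + G r i)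
      (fun r => (univ.erase i).sup fun j => b j + G r j)
      (fun r hr => (Finset.mem_filter.1 hr).2)
    have hih : ¬ (i = h) := fun e => hhi e.symm
    set y : Fin n → Rmax := fun j => if j = h then b h + ((-ε : ℝ) : Rmax) else b j with hy_def
    set z : Fin n → Rmax := fun j => if j = h then b h else (⊥ : Rmax) with hz_def
    have hneg : ((-ε : ℝ) : Rmax) ≤ 0 := by exact_mod_cast (neg_nonpos.2 hε.le)
    have hylt : ∀ j, y j ≤ b j := by
      intro j
      by_cases hj : j = h
      · subst hj
        simp only [hy_def, if_pos rfl]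
        calc b j + ((-ε : ℝ) : Rmax) ≤ b j + 0 := add_le_add_right hneg _
          _ = b j := add_zero _
      · simp [hy_def, hj]
    have hεε : (ε : Rmax) + ((-ε : ℝ) : Rmax) = 0 := by
      exact_mod_cast (add_neg_cancel ε)
    have hy : y ∈ ipolar i (rowSpace G) := by
      rw [mem_ipolar_rows]
      intro r
      have hyi : y i = b i := if_neg hih
      rw [hyi]
      rcases eq_or_ne (b i + G r i) ⊥ with hB | hB
      · rw [hB]; exact bot_le
      rcases lt_or_eq_of_le ((mem_ipolar_rows G i b).1 hb r) with hlt | heq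
      · have hrT : r ∈ T := Finset.mem_filter.2 ⟨Finset.mem_univ r, hlt⟩
        have h1 := hεT r hrT
        have h2 : ((univ.erase i).sup fun j => b j + G r j) + ((-ε : ℝ) : Rmax) ≤
            (univ.erase i).sup fun j => y j + G r j := by
          rw [← sup_add_right']
          refine Finset.sup_mono_fun fun j hj => ?_
          by_cases hjh : j = h
          · subst hjh
            have : y j = b j + ((-ε : ℝ) : Rmax) := if_pos rfl
            rw [this, add_right_comm]
          · have : y j = b j := if_neg hjh
            rw [this]
            calc (b j + G r j) + ((-ε : ℝ) : Rmax) ≤ (b j + G r j) + 0 :=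
                add_le_add_right hneg _
              _ = b j + G r j := add_zero _
        calc b i + G r i = (b i + G r i) + ((ε : Rmax) + ((-ε : ℝ) : Rmax)) := by
              rw [hεε, add_zero]
          _ = ((b i + G r i) + (ε : Rmax)) + ((-ε : ℝ) : Rmax) := (add_assoc _ _ _).symm
          _ ≤ ((univ.erase i).sup fun j => b j + G r j) + ((-ε : ℝ) : Rmax) :=
              add_le_add_left h1 _
          _ ≤ _ := h2
      · obtain ⟨j, hji, hjeq, hjh⟩ := hcon r heq hB
        have hyj : y j = b j := if_neg hjh
        refine le_trans ?_ (Finset.le_sup (f := fun j => y j + G r j)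
          (Finset.mem_erase.2 ⟨hji, Finset.mem_univ j⟩))
        show b i + G r i ≤ y j + G r j
        rw [hyj, hjeq]
    have hz : z ∈ ipolar i (rowSpace G) := by
      intro x hx
      have hzi : z i = ⊥ := if_neg hih
      rw [hzi, WithBot.bot_add]
      exact bot_le
    have hsup : b = y ⊔ z := by
      funext j
      rw [Pi.sup_apply]
      by_cases hj : j = h
      · subst hj
        have h1 : y j = b j + ((-ε : ℝ) : Rmax) := if_pos rfl
        have h2 : z j = b j := if_pos rfl
        rw [h1, h2]
        exact (sup_eq_right.2 (h1 ▸ hylt j)).symm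
      · have h1 : y j = b j := if_neg hj
        have h2 : z j = ⊥ := if_neg hj
        rw [h1, h2, sup_bot_eq]
    rcases hext.2.2 y hy z hz hsup with hby | hbz
    · have hbh' : b h = b h + ((-ε : ℝ) : Rmax) := by
        conv_lhs => rw [hby]
        simp [hy_def]
      lift b h to ℝ using hbh with c hc
      have : c = c + (-ε) := by exact_mod_cast hbh'
      linarith
    · exact hbi (by rw [hbz]; exact if_neg hih)
  · -- condition → extreme
    intro hcond
    refine ⟨hb, fun hbot => hbi (by simp [hbot]), ?_⟩
    have key : ∀ w ∈ ipolar i (rowSpace G), w ≤ b → w i = b i → b = w := by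
      intro w hw hwb hwi
      refine le_antisymm (fun j => ?_) hwb
      by_cases hji : j = i
      · subst hji; exact le_of_eq hwi.symm
      rcases eq_or_ne (b j) ⊥ with hbj | hbj
      · rw [hbj]; exact bot_le
      obtain ⟨r, hre, hrb, hru⟩ := hcond j hji hbj
      have h1 : w i + G r i ≤ (univ.erase i).sup fun j' => w j' + G r j' :=
        (mem_ipolar_rows G i w).1 hw r
      have h2 : ((univ.erase i).sup fun j' => w j' + G r j') ≤
          (univ.erase i).sup fun j' => b j' + G r j' :=
        Finset.sup_mono_fun fun j' _ => add_le_add_left (hwb j') _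
      have h3 : w i + G r i = b i + G r i := by rw [hwi]
      have hSw : ((univ.erase i).sup fun j' => w j' + G r j') = b i + G r i :=
        le_antisymm (h2.trans hre.ge) (h3 ▸ h1)
      have hSwne : ((univ.erase i).sup fun j' => w j' + G r j') ≠ ⊥ := by
        rw [hSw]; exact hrb
      obtain ⟨j₀, hj₀mem, hj₀⟩ := sup_attained' hSwne
      have hj₀i : j₀ ≠ i := (Finset.mem_erase.1 hj₀mem).1
      have e1 : w j₀ + G r j₀ = b i + G r i := by rw [hj₀, hSw]
      have e2 : b j₀ + G r j₀ = b i + G r i := by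
        refine le_antisymm ?_ ?_
        · exact le_trans (Finset.le_sup (f := fun j' => b j' + G r j') hj₀mem) hre.ge
        · rw [← e1]; exact add_le_add_left (hwb j₀) _
      have hj₀j : j₀ = j := hru j₀ hj₀i e2
      subst hj₀j
      have : w j₀ + G r j₀ = b j₀ + G r j₀ := by rw [e1, e2]
      have hwbj : w j₀ = b j₀ := rmax_cancel this (by rw [e1]; exact hrb)
      exact le_of_eq hwbj.symm
    intro y hy z hz hyz
    have hyb : y ≤ b := hyz ▸ le_sup_left
    have hzb : z ≤ b := hyz ▸ le_sup_right
    have hbi' : b i = y i ⊔ z i := by rw [hyz]; rfl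
    rcases le_total (y i) (z i) with hle | hle
    · right
      have hzi : z i = b i := by rw [hbi', sup_eq_right.2 hle]
      exact key z hz hzb hzi
    · left
      have hyi : y i = b i := by rw [hbi', sup_eq_left.2 hle]
      exact key y hy hyb hyi
end

section
/- Let G be a p×n matrix over R_max without identically -∞ column, fix i ∈ [n], and let Z_i = { z ∈ R_max^{n-1} : max_{j≠i}(z_j + G_{kj}) ≥ G_{ki} for all k ∈ [p] }. Then an inequality of type i, namely x_i ≤ max_{j≠i}(z_j + x_j), is extreme for Row(G) (i.e., corresponds to an extreme vector of the polar of Row(G)) if, and only if, z is a minimal element of Z_i with respect to the componentwise order. -/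
open Finset

/-- The tropical polyhedron `Z_i` of coefficient vectors of valid type-`i`
inequalities (encoded as vectors on `Fin n` vanishing at `i`). -/
def Zset {p n : ℕ} (G : Fin p → Fin n → Rmax) (i : Fin n) : Set (Fin n → Rmax) :=
  { z | z i = ⊥ ∧ ∀ k : Fin p, G k i ≤ (univ.erase i).sup fun j => z j + G k j }

/- Auxiliary lemmas -/

lemma rmax_add_sup {ι : Type*} [DecidableEq ι] (a : Rmax) (s : Finset ι) (f : ι → Rmax) :
    a + s.sup f = s.sup fun j => a + f j := by
  induction s using Finset.induction_on with
  | empty => simp [WithBot.add_bot]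
  | insert _ _ h ih =>
    rw [Finset.sup_insert, Finset.sup_insert, ← ih,
      ← max_add_add_left]

/-- tdot of a scaled unit vector. -/
lemma tdot_scaled_unitv {n : ℕ} (i : Fin n) (c : Rmax) (x : Fin n → Rmax) :
    tdot (fun j => if j = i then c else ⊥) x = c + x i := by
  apply le_antisymm
  · apply Finset.sup_le
    intro j _
    by_cases h : j = i
    · subst h; simp
    · simp [h]
  · have := Finset.le_sup (f := fun j => (if j = i then c else ⊥) + x j) (mem_univ i)
    simpa [tdot] using this

lemma tdot_unitv {n : ℕ} (i : Fin n) (x : Fin n → Rmax) :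
    tdot (unitv i) x = x i := by
  have := tdot_scaled_unitv i (0 : Rmax) x
  rw [zero_add] at this
  exact this

lemma row_mem_rowSpace {p n : ℕ} (G : Fin p → Fin n → Rmax) (k : Fin p) :
    G k ∈ rowSpace G := by
  refine ⟨unitv k, ?_⟩
  funext j
  exact (tdot_unitv k fun r => G r j).symm

/-- For `z` with `z i = ⊥`, the sup over `univ` equals the sup over `univ.erase i`. -/
lemma sup_erase_of_bot {n : ℕ} {i : Fin n} {z : Fin n → Rmax} (hzi : z i = ⊥)
    (g : Fin n → Rmax) :
    (univ.sup fun j => z j + g j) = (univ.erase i).sup fun j => z j + g j := by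
  apply le_antisymm
  · apply Finset.sup_le
    intro j _
    by_cases h : j = i
    · rw [h, hzi, WithBot.bot_add]; exact bot_le
    · exact Finset.le_sup (f := fun j => z j + g j) (Finset.mem_erase.mpr ⟨h, mem_univ j⟩)
  · exact Finset.sup_mono (Finset.erase_subset i univ)

/-- Polar membership of `(unitv i, z)` is equivalent to `z ∈ Zset G i` (given `z i = ⊥`). -/
lemma mem_polar_iff_Zset {p n : ℕ} (G : Fin p → Fin n → Rmax) (i : Fin n)
    (z : Fin n → Rmax) (hzi : z i = ⊥) :
    (unitv i, z) ∈ polar (rowSpace G) ↔ z ∈ Zset G i := by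
  constructor
  · intro h
    refine ⟨hzi, fun k => ?_⟩
    have hx := h (G k) (row_mem_rowSpace G k)
    rw [tdot_unitv] at hx
    calc G k i ≤ tdot z (G k) := hx
      _ = _ := sup_erase_of_bot hzi (G k)
  · rintro ⟨-, hz⟩
    rintro x ⟨lam, rfl⟩
    rw [tdot_unitv]
    simp only
    apply Finset.sup_le
    intro r _
    calc lam r + G r i ≤ lam r + (univ.erase i).sup (fun j => z j + G r j) :=
          add_le_add_right (hz r) _
      _ = (univ.erase i).sup fun j => lam r + (z j + G r j) := rmax_add_sup _ _ _
      _ ≤ tdot z fun j => univ.sup fun r' => lam r' + G r' j := by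
          apply Finset.sup_le
          intro j hj
          have h1 : lam r + (z j + G r j) = z j + (lam r + G r j) := add_left_comm _ _ _
          rw [h1]
          have h2 : lam r + G r j ≤ univ.sup fun r' => lam r' + G r' j :=
            Finset.le_sup (f := fun r' => lam r' + G r' j) (mem_univ r)
          calc z j + (lam r + G r j) ≤ z j + univ.sup fun r' => lam r' + G r' j :=
                add_le_add_right h2 _
            _ ≤ _ := Finset.le_sup (f := fun j => z j + univ.sup fun r' => lam r' + G r' j)
                (mem_univ j)

/-- an inequality of type `i`, `x_i ≤ max_{j≠i}(z_j + x_j)`, is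
extreme for `Row(G)` iff `z` is a minimal element of `Z_i`. -/
theorem statement2 {p n : ℕ} (G : Fin p → Fin n → Rmax)
    (hG : ∀ j : Fin n, ∃ r : Fin p, G r j ≠ ⊥) (i : Fin n)
    (z : Fin n → Rmax) (hzi : z i = ⊥) :
    IsTropExtreme (polar (rowSpace G)) (unitv i, z) ↔
      (z ∈ Zset G i ∧ ∀ z' ∈ Zset G i, z' ≤ z → z' = z) := by
  constructor
  · rintro ⟨hmem, -, hext⟩
    have hzZ : z ∈ Zset G i := (mem_polar_iff_Zset G i z hzi).mp hmem
    refine ⟨hzZ, fun z' hz' hle => ?_⟩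
    -- set up the decomposition
    set a' : Fin n → Rmax := fun j => if j = i then ((-1 : ℝ) : Rmax) else ⊥ with ha'
    have hy : (unitv i, z') ∈ polar (rowSpace G) :=
      (mem_polar_iff_Zset G i z' hz'.1).mpr hz'
    have hw : (a', z) ∈ polar (rowSpace G) := by
      intro x hx
      rw [tdot_scaled_unitv]
      have h1 : ((-1 : ℝ) : Rmax) + x i ≤ x i := by
        calc ((-1 : ℝ) : Rmax) + x i ≤ ((0 : ℝ) : Rmax) + x i := by
              apply add_le_add_left
              exact WithBot.coe_le_coe.mpr (by norm_num)
          _ = x i := by rw [WithBot.coe_zero, zero_add]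
      exact h1.trans ((tdot_unitv i x ▸ (mem_polar_iff_Zset G i z hzi).mpr hzZ x hx))
    have hdec : (unitv i, z) = (unitv i, z') ⊔ (a', z) := by
      refine Prod.ext ?_ ?_
      · funext j
        show unitv i j = unitv i j ⊔ a' j
        by_cases h : j = i
        · have h0 : unitv i j = ((0 : ℝ) : Rmax) := by simp [unitv, h]
          have hm : a' j = ((-1 : ℝ) : Rmax) := by simp [ha', h]
          rw [h0, hm]
          symm
          apply max_eq_left
          exact WithBot.coe_le_coe.mpr (by norm_num)
        · simp [unitv, ha', h]
      · funext j
        show z j = z' j ⊔ z j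
        exact (sup_eq_right.mpr (hle j)).symm
    rcases hext _ hy _ hw hdec with h | h
    · exact (congrArg Prod.snd h).symm
    · exfalso
      have h0 : unitv i i = ((0 : ℝ) : Rmax) := by simp [unitv]
      have hm : a' i = ((-1 : ℝ) : Rmax) := by simp [ha']
      have heq : unitv i i = a' i := congrFun (congrArg Prod.fst h) i
      rw [h0, hm] at heq
      have : (0 : ℝ) = -1 := WithBot.coe_inj.mp heq
      norm_num at this
  · rintro ⟨hzZ, hmin⟩
    refine ⟨(mem_polar_iff_Zset G i z hzi).mpr hzZ, ?_, ?_⟩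
    · intro h
      have := congrFun (congrArg Prod.fst h) i
      rw [Prod.fst_bot] at this
      simp [unitv] at this
    · rintro ⟨a, b⟩ hy ⟨c, d⟩ hw hdec
      have h1 : unitv i = a ⊔ c := congrArg Prod.fst hdec
      have h2 : z = b ⊔ d := congrArg Prod.snd hdec
      have hi : a i ⊔ c i = (0 : Rmax) := (congrFun h1 i).symm.trans (by simp [unitv])
      have key : ∀ (a₀ : Fin n → Rmax) (b₀ : Fin n → Rmax),
          (a₀, b₀) ∈ polar (rowSpace G) → a₀ ≤ unitv i → b₀ ≤ z → a₀ i = 0 →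
          (unitv i, z) = (a₀, b₀) := by
        intro a₀ b₀ hpol hale hble hai
        have ha₀ : a₀ = unitv i := by
          funext j
          by_cases h : j = i
          · subst h; simp [unitv, hai]
          · have := hale j
            simp only [unitv, if_neg h] at this ⊢
            exact le_bot_iff.mp this
        subst ha₀
        have hbi : b₀ i = ⊥ := le_bot_iff.mp (hzi ▸ hble i)
        have hbZ : b₀ ∈ Zset G i := (mem_polar_iff_Zset G i b₀ hbi).mp hpol
        have : b₀ = z := hmin b₀ hbZ hble
        rw [this]
      have hale : a ≤ unitv i := h1 ▸ le_sup_left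
      have hcle : c ≤ unitv i := h1 ▸ le_sup_right
      have hble : b ≤ z := h2 ▸ le_sup_left
      have hdle : d ≤ z := h2 ▸ le_sup_right
      rcases max_choice (a i) (c i) with h | h
      · left
        exact key a b hy hale hble (by rw [← h, hi])
      · right
        exact key c d hw hcle hdle (by rw [← h, hi])
end

section
/- Let p divide n-1 and q = (n-1)/p. Let G = [F_1, ..., F_p, e] be the p×n matrix over R_max where e is the p-dimensional vector of zeros (tropical units), and each F_k is a p×q real matrix such that in every column of F_k the maximum is attained on row k and only on row k. Then the tropical polyhedron Z_n = { z ∈ R_max^{n-1} : max_j (z_j + G_{kj}) ≥ 0 for all k ∈ [p] } has at least q^p = ((n-1)/p)^p minimal elements. Consequently, the polar of Row(G) has at least ((n-1)/p)^p extreme rays. -/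
open Finset

lemma supSum {α β : Type*} [Fintype α] [Fintype β] (h : α ⊕ β → Rmax) :
    univ.sup h = (univ.sup fun x : α => h (Sum.inl x)) ⊔ (univ.sup fun y : β => h (Sum.inr y)) := by
  apply le_antisymm
  · apply Finset.sup_le
    rintro (x | y) -
    · exact le_sup_of_le_left (Finset.le_sup (f := fun x => h (Sum.inl x)) (mem_univ x))
    · exact le_sup_of_le_right (Finset.le_sup (f := fun y => h (Sum.inr y)) (mem_univ y))
  · exact sup_le (Finset.sup_le fun x _ => Finset.le_sup (mem_univ _))
      (Finset.sup_le fun y _ => Finset.le_sup (mem_univ _))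

lemma addSup {ι : Type*} (s : Finset ι) (a : Rmax) (g : ι → Rmax) :
    a + s.sup g = s.sup fun i => a + g i := by
  classical
  induction s using Finset.induction with
  | empty => simp
  | insert _ _ hx ih =>
      rw [Finset.sup_insert, Finset.sup_insert, ← ih]
      exact Monotone.map_max (fun u v h => add_le_add_right h a)

/-- for the block matrix `G = [F_1, …, F_p, e]` (columns indexed by
`(Fin p × Fin q) ⊕ Unit`, `n - 1 = p*q`), where each column of `F_k` attains its
maximum only on row `k`, the polyhedron `Z_n` has at least `q^p` minimal
elements (an injection from `Fin p → Fin q`), and consequently the polar of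
`Row(G)` has at least `q^p` extreme rays (pairwise non-proportional extreme
vectors). -/
theorem statement6 {p q : ℕ} (hp : 0 < p) (hq : 0 < q)
    (F : Fin p → Fin p → Fin q → ℝ)
    (hF : ∀ (k : Fin p) (j : Fin q) (r : Fin p), r ≠ k → F k r j < F k k j)
    (G : Fin p → ((Fin p × Fin q) ⊕ Unit) → Rmax)
    (hG1 : ∀ (r : Fin p) (kj : Fin p × Fin q),
      G r (Sum.inl kj) = ((F kj.1 r kj.2 : ℝ) : Rmax))
    (hG2 : ∀ r : Fin p, G r (Sum.inr ()) = (0 : Rmax)) :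
    (∃ f : (Fin p → Fin q) → ((Fin p × Fin q) → Rmax),
      Function.Injective f ∧
      ∀ c : Fin p → Fin q,
        (∀ k : Fin p, (0 : Rmax) ≤ univ.sup fun j => f c j + G k (Sum.inl j)) ∧
        ∀ z' : (Fin p × Fin q) → Rmax,
          (∀ k : Fin p, (0 : Rmax) ≤ univ.sup fun j => z' j + G k (Sum.inl j)) →
          z' ≤ f c → z' = f c)
    ∧ (∃ g : (Fin p → Fin q) →
          (((Fin p × Fin q) ⊕ Unit) → Rmax) × (((Fin p × Fin q) ⊕ Unit) → Rmax),
        (∀ c, IsTropExtreme (polar (rowSpace G)) (g c)) ∧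
        ∀ c c', c ≠ c' → ∀ lam : ℝ,
          g c ≠ ((fun j => (lam : Rmax) + (g c').1 j),
                 fun j => (lam : Rmax) + (g c').2 j)) := by
  classical
  set f : (Fin p → Fin q) → (Fin p × Fin q) → Rmax :=
    fun c rj => if rj.2 = c rj.1 then (((-F rj.1 rj.1 rj.2 : ℝ)) : Rmax) else ⊥ with hf
  -- feasibility
  have feas : ∀ c k, (0 : Rmax) ≤ univ.sup fun j => f c j + G k (Sum.inl j) := by
    intro c k
    have h0 : f c (k, c k) + G k (Sum.inl (k, c k)) = 0 := by
      simp [hf, hG1, ← WithBot.coe_add]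
    exact h0 ▸ Finset.le_sup (f := fun j => f c j + G k (Sum.inl j)) (mem_univ (k, c k))
  -- minimality
  have minim : ∀ c (z' : Fin p × Fin q → Rmax),
      (∀ k, (0 : Rmax) ≤ univ.sup fun j => z' j + G k (Sum.inl j)) → z' ≤ f c → z' = f c := by
    intro c z' hz hle
    have key : ∀ k : Fin p, ((-F k k (c k) : ℝ) : Rmax) ≤ z' (k, c k) := by
      intro k
      obtain ⟨⟨r, j⟩, -, hw⟩ :=
        (Finset.le_sup_iff (by exact_mod_cast WithBot.bot_lt_coe (0:ℝ) : (⊥ : Rmax) < 0)).1 (hz k)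
      by_cases hj : j = c r
      · subst hj
        rw [hG1] at hw
        by_cases hr : r = k
        · subst hr
          have hne : z' (r, c r) ≠ ⊥ := by
            intro hb; rw [hb, WithBot.bot_add] at hw; simp at hw
          lift z' (r, c r) to ℝ using hne with t ht
          rw [← WithBot.coe_add, ← WithBot.coe_zero, WithBot.coe_le_coe] at hw
          exact WithBot.coe_le_coe.2 (by linarith)
        · exfalso
          have h1 : z' (r, c r) ≤ ((-F r r (c r) : ℝ) : Rmax) := by
            simpa [hf] using hle (r, c r)
          have h2 : (0 : Rmax) ≤ ((-F r r (c r) : ℝ) : Rmax) + ((F r k (c r) : ℝ) : Rmax) :=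
            le_trans hw (add_le_add_left h1 _)
          rw [← WithBot.coe_add, ← WithBot.coe_zero, WithBot.coe_le_coe] at h2
          have h3 := hF r (c r) k (fun h => hr h.symm)
          linarith
      · have h1 : z' (r, j) = ⊥ := le_bot_iff.1 (by simpa [hf, hj] using hle (r, j))
        rw [h1, WithBot.bot_add] at hw
        exact absurd hw (by simp)
    funext rj
    obtain ⟨r, j⟩ := rj
    by_cases hj : j = c r
    · subst hj
      exact le_antisymm (hle _) (by simpa [hf] using key r)
    · have h1 : z' (r, j) = ⊥ := le_bot_iff.1 (by simpa [hf, hj] using hle (r, j))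
      simp [hf, hj, h1]
  -- injectivity
  have finj : Function.Injective f := by
    intro c c' h
    funext k
    by_contra hk
    have h1 := congrFun h (k, c k)
    simp [hf, hk] at h1
  -- the polar part
  set a : (Fin p × Fin q) ⊕ Unit → Rmax := Sum.elim (fun _ => ⊥) (fun _ => 0) with ha
  set b : (Fin p → Fin q) → ((Fin p × Fin q) ⊕ Unit) → Rmax :=
    fun c => Sum.elim (f c) (fun _ => ⊥) with hb
  have tdotA : ∀ x : ((Fin p × Fin q) ⊕ Unit) → Rmax, tdot a x = x (Sum.inr ()) := by
    intro x
    apply le_antisymm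
    · apply Finset.sup_le
      rintro (j | u) -
      · simp [ha]
      · cases u; simp [ha]
    · have h0 : a (Sum.inr ()) + x (Sum.inr ()) = x (Sum.inr ()) := by simp [ha]
      exact h0 ▸ Finset.le_sup (f := fun j => a j + x j) (mem_univ (Sum.inr ()))
  have rowMem : ∀ r : Fin p, G r ∈ rowSpace G := by
    intro r
    refine ⟨fun r' => if r' = r then 0 else ⊥, ?_⟩
    funext j
    apply le_antisymm
    · have h0 : (if r = r then (0 : Rmax) else ⊥) + G r j = G r j := by simp
      exact h0 ▸ Finset.le_sup
        (f := fun r' => (if r' = r then (0 : Rmax) else ⊥) + G r' j) (mem_univ r)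
    · apply Finset.sup_le
      intro r' _
      by_cases h : r' = r
      · subst h; simp
      · simp [h]
  have memPolar : ∀ c, (a, b c) ∈ polar (rowSpace G) := by
    rintro c x ⟨lam, rfl⟩
    show tdot a _ ≤ tdot (b c) _
    rw [tdotA]
    apply Finset.sup_le
    intro r _
    rw [hG2, add_zero]
    have h1 : lam r + (univ.sup fun j : Fin p × Fin q => f c j + G r (Sum.inl j))
        ≤ tdot (b c) fun j => univ.sup fun r' => lam r' + G r' j := by
      rw [addSup]
      apply Finset.sup_le
      intro j _
      have h2 : lam r + G r (Sum.inl j) ≤ univ.sup fun r' => lam r' + G r' (Sum.inl j) :=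
        Finset.le_sup (f := fun r' => lam r' + G r' (Sum.inl j)) (mem_univ r)
      calc lam r + (f c j + G r (Sum.inl j))
          = f c j + (lam r + G r (Sum.inl j)) := by rw [add_left_comm]
        _ ≤ f c j + univ.sup fun r' => lam r' + G r' (Sum.inl j) := add_le_add_right h2 _
        _ = b c (Sum.inl j) + univ.sup fun r' => lam r' + G r' (Sum.inl j) := by simp [hb]
        _ ≤ _ := Finset.le_sup
            (f := fun col => b c col + univ.sup fun r' => lam r' + G r' col)
            (mem_univ (Sum.inl j))
    calc lam r = lam r + 0 := (add_zero _).symm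
      _ ≤ lam r + univ.sup fun j : Fin p × Fin q => f c j + G r (Sum.inl j) :=
          add_le_add_right (feas c r) _
      _ ≤ _ := h1
  have keyw : ∀ c, ∀ w : (((Fin p × Fin q) ⊕ Unit) → Rmax) × (((Fin p × Fin q) ⊕ Unit) → Rmax),
      w ∈ polar (rowSpace G) → w ≤ (a, b c) → w.1 (Sum.inr ()) = 0 → w = (a, b c) := by
    intro c w hwP hwle hw0
    have hw1 : w.1 = a := by
      funext col
      rcases col with j | u
      · have h1 : w.1 (Sum.inl j) ≤ ⊥ := by simpa [ha] using hwle.1 (Sum.inl j)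
        simp [ha, le_bot_iff.1 h1]
      · cases u; rw [hw0]; simp [ha]
    have hw2bot : w.2 (Sum.inr ()) = ⊥ := le_bot_iff.1 (by simpa [hb] using hwle.2 (Sum.inr ()))
    have hz : ∀ k, (0 : Rmax) ≤ univ.sup fun j => w.2 (Sum.inl j) + G k (Sum.inl j) := by
      intro k
      have h4 := hwP (G k) (rowMem k)
      rw [hw1, tdotA, hG2] at h4
      rw [tdot, supSum] at h4
      have h5 : (univ.sup fun u : Unit => w.2 (Sum.inr u) + G k (Sum.inr u)) = ⊥ := by
        apply le_bot_iff.1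
        apply Finset.sup_le
        intro u _
        cases u; rw [hw2bot]; simp
      rw [h5, sup_bot_eq] at h4
      exact h4
    have hle2 : (fun j => w.2 (Sum.inl j)) ≤ f c := fun j => by
      simpa [hb] using hwle.2 (Sum.inl j)
    have heq2 := minim c _ hz hle2
    have hw2 : w.2 = b c := by
      funext col
      rcases col with j | u
      · have := congrFun heq2 j
        simpa [hb] using this
      · cases u; rw [hw2bot]; simp [hb]
    exact Prod.ext hw1 hw2
  have hext : ∀ c, IsTropExtreme (polar (rowSpace G)) (a, b c) := by
    intro c
    refine ⟨memPolar c, ?_, ?_⟩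
    · intro hbot
      have h1 := congrFun (congrArg Prod.fst hbot) (Sum.inr ())
      simp [ha, Prod.fst_bot, Pi.bot_apply] at h1
    · intro y hy z hz hsup
      have h1 : y ≤ (a, b c) := hsup ▸ le_sup_left
      have h2 : z ≤ (a, b c) := hsup ▸ le_sup_right
      have h0 : y.1 (Sum.inr ()) ⊔ z.1 (Sum.inr ()) = 0 := by
        have h3 := congrFun (congrArg Prod.fst hsup) (Sum.inr ())
        rw [Prod.fst_sup, Pi.sup_apply] at h3
        simpa [ha] using h3.symm
      rcases le_total (y.1 (Sum.inr ())) (z.1 (Sum.inr ())) with h | h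
      · right; exact (keyw c z hz h2 (by rwa [sup_eq_right.2 h] at h0)).symm
      · left; exact (keyw c y hy h1 (by rwa [sup_eq_left.2 h] at h0)).symm
  refine ⟨⟨f, finj, fun c => ⟨feas c, fun z' h1 h2 => minim c z' h1 h2⟩⟩,
    ⟨fun c => (a, b c), hext, ?_⟩⟩
  intro c c' hcc lam heq
  obtain ⟨k, hk⟩ := Function.ne_iff.1 hcc
  have h1 := congrFun (congrArg Prod.snd heq) (Sum.inl (k, c k))
  simp [hb, hf, hk] at h1
end

section
/- Let H be a subgroup of (R, +), and let A, B be p×n matrices and c, d row vectors with entries in H_max = H ∪ {-∞}. Then the implication (Ax ≤ Bx ⟹ cx ≤ dx) holds for all x ∈ R_max^n if, and only if, it holds for all x ∈ H_max^n. -/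
open Finset

/-- auxiliary: a finite set of reals has a uniform positive gap between
its strictly ordered pairs. -/
lemma exists_gap_aux (V : Finset ℝ) :
    ∃ ε > (0 : ℝ), ∀ s ∈ V, ∀ t ∈ V, s < t → ε ≤ t - s := by
  classical
  set D : Finset ℝ := ((V ×ˢ V).image fun p => p.2 - p.1).filter fun r => 0 < r with hD
  have hmemD : ∀ s ∈ V, ∀ t ∈ V, s < t → t - s ∈ D := by
    intro s hs t ht hlt
    refine Finset.mem_filter.2 ⟨Finset.mem_image.2 ⟨(s, t), Finset.mem_product.2 ⟨hs, ht⟩, rfl⟩,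
      sub_pos.2 hlt⟩
  by_cases hne : D.Nonempty
  · refine ⟨D.min' hne, ?_, fun s hs t ht hlt => D.min'_le _ (hmemD s hs t ht hlt)⟩
    have := D.min'_mem hne
    exact (Finset.mem_filter.1 this).2
  · exact ⟨1, one_pos, fun s hs t ht hlt => absurd ⟨_, hmemD s hs t ht hlt⟩ hne⟩

/-- Key rounding lemma: given a subgroup `H` of `(ℝ,+)`, a finite set `V` of reals and
a basepoint `u ∈ V`, there is a map `φ : ℝ → Rmax` taking values in `H ∪ {⊥}`, which is
`H`-equivariant, monotone on `V`, and strictly monotone at `u` from below. -/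
lemma exists_rounding (H : AddSubgroup ℝ) (V : Finset ℝ) (u : ℝ) (hu : u ∈ V) :
    ∃ φ : ℝ → Rmax,
      (∀ t, φ t = ⊥ ∨ ∃ h ∈ H, φ t = ((h : ℝ) : Rmax)) ∧
      (∀ h ∈ H, ∀ t : ℝ, φ (t + h) = φ t + ((h : ℝ) : Rmax)) ∧
      (∀ s ∈ V, ∀ t ∈ V, s ≤ t → φ s ≤ φ t) ∧
      (∀ v ∈ V, v < u → φ v < φ u) ∧
      φ u ≠ ⊥ := by
  classical
  rcases AddSubgroup.dense_or_cyclic H with hdense | ⟨a, ha⟩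
  · -- dense case
    obtain ⟨ε, hε, hgap⟩ := exists_gap_aux V
    have hnear : ∀ r : ℝ, ∃ h, h ∈ H ∧ |h - r| < ε / 2 := by
      intro r
      obtain ⟨y, hyH, hy⟩ := hdense.exists_dist_lt r (by linarith : (0:ℝ) < ε / 2)
      exact ⟨y, hyH, by rwa [Real.dist_eq, abs_sub_comm] at hy⟩
    choose near hnearH hnearlt using hnear
    have hout_mem : ∀ t : ℝ, (QuotientAddGroup.mk (s := H) t : ℝ ⧸ H).out - t ∈ H := by
      intro t
      have : (QuotientAddGroup.mk (s := H) (QuotientAddGroup.mk (s := H) t : ℝ ⧸ H).out)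
          = QuotientAddGroup.mk (s := H) t := QuotientAddGroup.out_eq' _
      exact (QuotientAddGroup.eq_iff_sub_mem).1 this
    have hout_add : ∀ t h : ℝ, h ∈ H →
        (QuotientAddGroup.mk (s := H) (t + h) : ℝ ⧸ H).out
          = (QuotientAddGroup.mk (s := H) t : ℝ ⧸ H).out := by
      intro t h hh
      have : (QuotientAddGroup.mk (s := H) (t + h)) = QuotientAddGroup.mk (s := H) t := by
        rw [QuotientAddGroup.eq_iff_sub_mem]
        simpa using hh
      rw [this]
    obtain ⟨δ, hδH, hδlt, hδadd⟩ :
        ∃ δ : ℝ → ℝ, (∀ t, t + δ t ∈ H) ∧ (∀ t, |δ t| < ε / 2) ∧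
          (∀ t h, h ∈ H → δ (t + h) = δ t) := by
      refine ⟨fun t => near (QuotientAddGroup.mk (s := H) t : ℝ ⧸ H).out
          - (QuotientAddGroup.mk (s := H) t : ℝ ⧸ H).out, ?_, ?_, ?_⟩
      · intro t
        have heq : t + (near (QuotientAddGroup.mk (s := H) t : ℝ ⧸ H).out
            - (QuotientAddGroup.mk (s := H) t : ℝ ⧸ H).out)
            = near (QuotientAddGroup.mk (s := H) t : ℝ ⧸ H).out
              - ((QuotientAddGroup.mk (s := H) t : ℝ ⧸ H).out - t) := by ring
        rw [heq]
        exact H.sub_mem (hnearH _) (hout_mem t)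
      · intro t
        exact hnearlt _
      · intro t h hh
        beta_reduce
        rw [hout_add t h hh]
    refine ⟨fun t => ((t + δ t : ℝ) : Rmax), fun t => Or.inr ⟨t + δ t, hδH t, rfl⟩, ?_, ?_, ?_, ?_⟩
    · intro h hh t
      show ((t + h + δ (t + h) : ℝ) : Rmax) = ((t + δ t : ℝ) : Rmax) + ((h : ℝ) : Rmax)
      rw [hδadd t h hh, ← WithBot.coe_add, WithBot.coe_inj]
      ring
    · intro s hs t ht hle
      show ((s + δ s : ℝ) : Rmax) ≤ ((t + δ t : ℝ) : Rmax)
      rcases eq_or_lt_of_le hle with rfl | hlt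
      · exact le_rfl
      · have h1 := hgap s hs t ht hlt
        obtain ⟨h2, h2'⟩ := abs_lt.1 (hδlt s)
        obtain ⟨h3, h3'⟩ := abs_lt.1 (hδlt t)
        exact WithBot.coe_le_coe.2 (by linarith)
    · intro v hv hlt
      show ((v + δ v : ℝ) : Rmax) < ((u + δ u : ℝ) : Rmax)
      have h1 := hgap v hv u hu hlt
      obtain ⟨h2, h2'⟩ := abs_lt.1 (hδlt v)
      obtain ⟨h3, h3'⟩ := abs_lt.1 (hδlt u)
      exact WithBot.coe_lt_coe.2 (by linarith)
    · exact WithBot.coe_ne_bot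
  · rcases eq_or_ne a 0 with rfl | hane
    · -- trivial subgroup
      have hH0 : ∀ h : ℝ, h ∈ H → h = 0 := by
        intro h hh
        rw [ha] at hh
        obtain ⟨k, hk⟩ := AddSubgroup.mem_closure_singleton.1 hh
        simpa using hk.symm
      refine ⟨fun t => if u ≤ t then ((0 : ℝ) : Rmax) else ⊥, ?_, ?_, ?_, ?_, ?_⟩
      · intro t
        by_cases h : u ≤ t
        · exact Or.inr ⟨0, H.zero_mem, by simp [h]⟩
        · exact Or.inl (by simp [h])
      · intro h hh t
        show (if u ≤ t + h then ((0 : ℝ) : Rmax) else ⊥)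
            = (if u ≤ t then ((0 : ℝ) : Rmax) else ⊥) + ((h : ℝ) : Rmax)
        rw [hH0 h hh]
        simp
      · intro s hs t ht hle
        show (if u ≤ s then ((0 : ℝ) : Rmax) else ⊥) ≤ (if u ≤ t then ((0 : ℝ) : Rmax) else ⊥)
        by_cases h1 : u ≤ s
        · rw [if_pos h1, if_pos (h1.trans hle)]
        · rw [if_neg h1]; exact bot_le
      · intro v hv hlt
        show (if u ≤ v then ((0 : ℝ) : Rmax) else ⊥) < (if u ≤ u then ((0 : ℝ) : Rmax) else ⊥)
        rw [if_neg (not_le.2 hlt), if_pos le_rfl]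
        exact WithBot.bot_lt_coe _
      · show (if u ≤ u then ((0 : ℝ) : Rmax) else ⊥) ≠ ⊥
        rw [if_pos le_rfl]; exact WithBot.coe_ne_bot
    · -- infinite cyclic subgroup
      set b : ℝ := |a| with hb
      have hbpos : 0 < b := abs_pos.2 hane
      have hmem : ∀ h : ℝ, h ∈ H ↔ ∃ k : ℤ, h = k * b := by
        intro h
        rw [ha, AddSubgroup.mem_closure_singleton]
        constructor
        · rintro ⟨k, rfl⟩
          rcases abs_cases a with ⟨h1, _⟩ | ⟨h1, _⟩
          · exact ⟨k, by rw [hb, h1, zsmul_eq_mul]⟩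
          · exact ⟨-k, by rw [hb, h1, zsmul_eq_mul]; push_cast; ring⟩
        · rintro ⟨k, rfl⟩
          rcases abs_cases a with ⟨h1, _⟩ | ⟨h1, _⟩
          · exact ⟨k, by rw [hb, h1, zsmul_eq_mul]⟩
          · exact ⟨-k, by rw [hb, h1, zsmul_eq_mul]; push_cast; ring⟩
      refine ⟨fun t => ((b * (⌊(t - u) / b⌋ : ℤ) : ℝ) : Rmax), ?_, ?_, ?_, ?_, ?_⟩
      · intro t
        exact Or.inr ⟨b * (⌊(t - u) / b⌋ : ℤ), (hmem _).2 ⟨⌊(t - u) / b⌋, by ring⟩, rfl⟩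
      · intro h hh t
        obtain ⟨k, rfl⟩ := (hmem h).1 hh
        show ((b * (⌊(t + ↑k * b - u) / b⌋ : ℤ) : ℝ) : Rmax)
            = ((b * (⌊(t - u) / b⌋ : ℤ) : ℝ) : Rmax) + (((k : ℝ) * b : ℝ) : Rmax)
        have h1 : (t + ↑k * b - u) / b = (t - u) / b + k := by
          field_simp
          ring
        rw [h1, Int.floor_add_intCast, ← WithBot.coe_add, WithBot.coe_inj]
        push_cast
        ring
      · intro s hs t ht hle
        show ((b * (⌊(s - u) / b⌋ : ℤ) : ℝ) : Rmax) ≤ ((b * (⌊(t - u) / b⌋ : ℤ) : ℝ) : Rmax)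
        refine WithBot.coe_le_coe.2 (mul_le_mul_of_nonneg_left ?_ hbpos.le)
        exact_mod_cast Int.floor_le_floor (by gcongr)
      · intro v hv hlt
        show ((b * (⌊(v - u) / b⌋ : ℤ) : ℝ) : Rmax) < ((b * (⌊(u - u) / b⌋ : ℤ) : ℝ) : Rmax)
        refine WithBot.coe_lt_coe.2 ?_
        have h1 : ⌊(v - u) / b⌋ < 0 := by
          rw [Int.floor_lt]
          push_cast
          exact div_neg_of_neg_of_pos (by linarith) hbpos
        have h2 : ⌊(u - u) / b⌋ = 0 := by norm_num
        rw [h2]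
        have h3 : (⌊(v - u) / b⌋ : ℝ) < 0 := by exact_mod_cast h1
        push_cast
        nlinarith
      · exact WithBot.coe_ne_bot

/-- for matrices and vectors with entries in `H_max = H ∪ {⊥}`
(`H` a subgroup of `(ℝ,+)`), the implication `Ax ≤ Bx ⟹ cx ≤ dx` holds for all
`x ∈ Rmax^n` iff it holds for all `x ∈ H_max^n`. -/
theorem statement11 {p n : ℕ} (H : AddSubgroup ℝ)
    (A B : Fin p → Fin n → Rmax) (c d : Fin n → Rmax)
    (hA : ∀ i j, A i j = ⊥ ∨ ∃ h ∈ H, A i j = ((h : ℝ) : Rmax))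
    (hB : ∀ i j, B i j = ⊥ ∨ ∃ h ∈ H, B i j = ((h : ℝ) : Rmax))
    (hc : ∀ j, c j = ⊥ ∨ ∃ h ∈ H, c j = ((h : ℝ) : Rmax))
    (hd : ∀ j, d j = ⊥ ∨ ∃ h ∈ H, d j = ((h : ℝ) : Rmax)) :
    (∀ x : Fin n → Rmax,
        (∀ i, tdot (A i) x ≤ tdot (B i) x) → tdot c x ≤ tdot d x) ↔
    (∀ x : Fin n → Rmax, (∀ j, x j = ⊥ ∨ ∃ h ∈ H, x j = ((h : ℝ) : Rmax)) →
        (∀ i, tdot (A i) x ≤ tdot (B i) x) → tdot c x ≤ tdot d x) := by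
  classical
  constructor
  · intro h x _ hax
    exact h x hax
  · intro hH x hax
    by_contra hcon
    have hlt : tdot d x < tdot c x := not_le.1 hcon
    -- the finite set of relevant real values
    set S : Finset Rmax :=
      (((univ : Finset (Fin p × Fin n)).image fun ij => A ij.1 ij.2 + x ij.2) ∪
        ((univ : Finset (Fin p × Fin n)).image fun ij => B ij.1 ij.2 + x ij.2) ∪
        ((univ : Finset (Fin n)).image fun j => c j + x j) ∪
        ((univ : Finset (Fin n)).image fun j => d j + x j)) with hS
    set V : Finset ℝ := S.image (fun v => WithBot.unbotD 0 v) with hV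
    have hVmem : ∀ v ∈ S, ∀ r : ℝ, v = (r : Rmax) → r ∈ V := by
      intro v hv r hr
      subst hr
      exact Finset.mem_image.2 ⟨_, hv, rfl⟩
    -- find the maximizing index for c
    have hbot : (⊥ : Rmax) < tdot c x := lt_of_le_of_lt bot_le hlt
    obtain ⟨j0, -, hj0⟩ := (Finset.le_sup_iff hbot).1 (le_of_eq (rfl : tdot c x = _))
    have hj0' : tdot d x < c j0 + x j0 := lt_of_lt_of_le hlt hj0
    have hj0bot : c j0 + x j0 ≠ ⊥ := (lt_of_le_of_lt bot_le hj0').ne'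
    have hcj0 : c j0 ≠ ⊥ := fun h => hj0bot (by rw [h, WithBot.bot_add])
    have hxj0 : x j0 ≠ ⊥ := fun h => hj0bot (by rw [h, WithBot.add_bot])
    obtain ⟨γ, hγH, hγ⟩ := (hc j0).resolve_left hcj0
    obtain ⟨ξ0, hξ0⟩ := WithBot.ne_bot_iff_exists.1 hxj0
    set u : ℝ := γ + ξ0 with hu
    have hcx : c j0 + x j0 = ((u : ℝ) : Rmax) := by
      rw [hγ, ← hξ0, ← WithBot.coe_add]
    have huV : u ∈ V := by
      refine hVmem (c j0 + x j0) ?_ u hcx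
      exact Finset.mem_union.2 (Or.inl (Finset.mem_union.2 (Or.inr
        (Finset.mem_image.2 ⟨j0, mem_univ _, rfl⟩))))
    obtain ⟨φ, hφH, hφeq, hφmono, hφstrict, hφne⟩ := exists_rounding H V u huV
    -- the rounded vector
    set x' : Fin n → Rmax := fun j =>
      if h : x j = ⊥ then ⊥ else φ (WithBot.unbotD 0 (x j)) with hx'
    have hx'bot : ∀ j, x j = ⊥ → x' j = ⊥ := by
      intro j h; simp [hx', h]
    have hx'coe : ∀ j (r : ℝ), x j = (r : Rmax) → x' j = φ r := by
      intro j r h; simp [hx', h]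
    have hx'H : ∀ j, x' j = ⊥ ∨ ∃ h ∈ H, x' j = ((h : ℝ) : Rmax) := by
      intro j
      by_cases hxj : x j = ⊥
      · exact Or.inl (hx'bot j hxj)
      · obtain ⟨r, hr⟩ := WithBot.ne_bot_iff_exists.1 hxj
        rw [hx'coe j r hr.symm]
        exact hφH r
    -- x' satisfies the constraints
    have hax' : ∀ i, tdot (A i) x' ≤ tdot (B i) x' := by
      intro i
      refine Finset.sup_le ?_
      intro j _
      rcases hA i j with hAij | ⟨α, hαH, hAij⟩
      · rw [hAij, WithBot.bot_add]; exact bot_le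
      by_cases hxj : x j = ⊥
      · rw [hx'bot j hxj, WithBot.add_bot]; exact bot_le
      obtain ⟨ξ, hξ⟩ := WithBot.ne_bot_iff_exists.1 hxj
      have h1 : A i j + x j ≤ tdot (B i) x :=
        le_trans (Finset.le_sup (f := fun j => A i j + x j) (mem_univ j)) (hax i)
      have h2 : ((α + ξ : ℝ) : Rmax) ≤ tdot (B i) x := by
        rwa [hAij, ← hξ, ← WithBot.coe_add] at h1
      obtain ⟨k, -, hk⟩ := (Finset.le_sup_iff (WithBot.bot_lt_coe _)).1 h2
      have hkbot : B i k + x k ≠ ⊥ := fun h =>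
        absurd (hk.trans_eq h) (by simp)
      have hBik : B i k ≠ ⊥ := fun h => hkbot (by rw [h, WithBot.bot_add])
      have hxk : x k ≠ ⊥ := fun h => hkbot (by rw [h, WithBot.add_bot])
      obtain ⟨β, hβH, hβ⟩ := (hB i k).resolve_left hBik
      obtain ⟨ξk, hξk⟩ := WithBot.ne_bot_iff_exists.1 hxk
      have hreal : α + ξ ≤ β + ξk := by
        rw [hβ, ← hξk, ← WithBot.coe_add] at hk
        exact WithBot.coe_le_coe.1 hk
      have hmemL : α + ξ ∈ V := by
        refine hVmem (A i j + x j) ?_ _ (by rw [hAij, ← hξ, ← WithBot.coe_add])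
        exact Finset.mem_union.2 (Or.inl (Finset.mem_union.2 (Or.inl
          (Finset.mem_union.2 (Or.inl (Finset.mem_image.2 ⟨(i, j), mem_univ _, rfl⟩))))))
      have hmemR : β + ξk ∈ V := by
        refine hVmem (B i k + x k) ?_ _ (by rw [hβ, ← hξk, ← WithBot.coe_add])
        exact Finset.mem_union.2 (Or.inl (Finset.mem_union.2 (Or.inl
          (Finset.mem_union.2 (Or.inr (Finset.mem_image.2 ⟨(i, k), mem_univ _, rfl⟩))))))
      have hφle : φ (α + ξ) ≤ φ (β + ξk) := hφmono _ hmemL _ hmemR hreal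
      have heq1 : A i j + x' j = φ (α + ξ) := by
        rw [hAij, hx'coe j ξ hξ.symm, add_comm α ξ, hφeq α hαH ξ]
        exact add_comm _ _
      have heq2 : B i k + x' k = φ (β + ξk) := by
        rw [hβ, hx'coe k ξk hξk.symm, add_comm β ξk, hφeq β hβH ξk]
        exact add_comm _ _
      calc A i j + x' j = φ (α + ξ) := heq1
        _ ≤ φ (β + ξk) := hφle
        _ = B i k + x' k := heq2.symm
        _ ≤ tdot (B i) x' := Finset.le_sup (f := fun j => B i j + x' j) (mem_univ k)
    have hmain := hH x' hx'H hax'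
    -- but c x' > d x'
    have hlhs : φ u ≤ tdot c x' := by
      have heq : c j0 + x' j0 = φ u := by
        rw [hγ, hx'coe j0 ξ0 hξ0.symm, hu, add_comm γ ξ0, hφeq γ hγH ξ0]
        exact add_comm _ _
      calc φ u = c j0 + x' j0 := heq.symm
        _ ≤ tdot c x' := Finset.le_sup (f := fun j => c j + x' j) (mem_univ j0)
    have hrhs : tdot d x' < φ u := by
      refine (Finset.sup_lt_iff (bot_lt_iff_ne_bot.2 hφne)).2 ?_
      intro k _
      rcases hd k with hdk | ⟨δ, hδH, hdk⟩
      · rw [hdk, WithBot.bot_add]; exact bot_lt_iff_ne_bot.2 hφne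
      by_cases hxk : x k = ⊥
      · rw [hx'bot k hxk, WithBot.add_bot]; exact bot_lt_iff_ne_bot.2 hφne
      obtain ⟨ξk, hξk⟩ := WithBot.ne_bot_iff_exists.1 hxk
      have h1 : d k + x k < ((u : ℝ) : Rmax) := by
        refine lt_of_le_of_lt ?_ (hcx ▸ hj0')
        exact Finset.le_sup (f := fun j => d j + x j) (mem_univ k)
      have hreal : δ + ξk < u := by
        rw [hdk, ← hξk, ← WithBot.coe_add] at h1
        exact WithBot.coe_lt_coe.1 h1
      have hmemk : δ + ξk ∈ V := by
        refine hVmem (d k + x k) ?_ _ (by rw [hdk, ← hξk, ← WithBot.coe_add])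
        exact Finset.mem_union.2 (Or.inr (Finset.mem_image.2 ⟨k, mem_univ _, rfl⟩))
      have heq : d k + x' k = φ (δ + ξk) := by
        rw [hdk, hx'coe k ξk hξk.symm, add_comm δ ξk, hφeq δ hδH ξk]
        exact add_comm _ _
      rw [heq]
      exact hφstrict _ hmemk hreal
    exact absurd (lt_of_le_of_lt (hlhs.trans hmain) hrhs) (lt_irrefl _)
end

section
/- Define d' ∈ R^n by d'_i = d_i if d_i ≠ -∞, and d'_i = -M - 1 + min{ c_j : j ∈ [n], c_j ≠ -∞ } otherwise, where M = (n−1) max_{s,t} M_{st} is the bound from the extreme-generator separation estimate. Then the implication Ax ≤ Bx ⟹ cx ≤ dx holds for all x ∈ R_max^n if, and only if, the implication Ax ≤ Bx ⟹ cx ≤ d'x holds for all x ∈ R_max^n. -/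
open Finset

/-- `M_{st} = max{ |A_{is} - B_{it}| : i, A_{is}, B_{it} finite }`. -/
noncomputable def Mst {p n : ℕ} (A B : Fin p → Fin n → Rmax) (s t : Fin n) : Rmax :=
  univ.sup fun i : Fin p =>
    if A i s ≠ ⊥ ∧ B i t ≠ ⊥ then
      ((|WithBot.unbotD 0 (A i s) - WithBot.unbotD 0 (B i t)| : ℝ) : Rmax)
    else ⊥

namespace Stmt13

open scoped Classical in
noncomputable def shiftTop {n : ℕ} (x : Fin n → Rmax) (lo δ : ℝ) : Fin n → Rmax :=
  fun j => if x j ≠ ⊥ ∧ lo < (x j).unbotD 0 then (((x j).unbotD 0 - δ : ℝ) : Rmax) else x j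

open scoped Classical in
noncomputable def dropBot {n : ℕ} (x : Fin n → Rmax) (lo : ℝ) : Fin n → Rmax :=
  fun j => if x j ≠ ⊥ ∧ lo < (x j).unbotD 0 then x j else ⊥

open scoped Classical in
noncomputable def measSet {n : ℕ} (μ : ℝ) (x : Fin n → Rmax) : Finset (Fin n × Fin n) :=
  (univ : Finset (Fin n × Fin n)).filter fun jk =>
    x jk.1 ≠ ⊥ ∧ x jk.2 ≠ ⊥ ∧ μ < (x jk.1).unbotD 0 - (x jk.2).unbotD 0

noncomputable def meas {n : ℕ} (μ : ℝ) (x : Fin n → Rmax) : ℕ := (measSet μ x).card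

lemma mem_measSet {n : ℕ} {μ : ℝ} {x : Fin n → Rmax} {jk : Fin n × Fin n} :
    jk ∈ measSet μ x ↔
      x jk.1 ≠ ⊥ ∧ x jk.2 ≠ ⊥ ∧ μ < (x jk.1).unbotD 0 - (x jk.2).unbotD 0 := by
  classical
  simp [measSet]

variable {n : ℕ} {x : Fin n → Rmax} {lo δ μ : ℝ} {j : Fin n}

lemma shiftTop_bot_iff (j : Fin n) : shiftTop x lo δ j = ⊥ ↔ x j = ⊥ := by
  by_cases h : x j ≠ ⊥ ∧ lo < (x j).unbotD 0
  · simp only [shiftTop, if_pos h]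
    simp [h.1]
  · simp [shiftTop, h]

lemma shiftTop_val (hj : x j ≠ ⊥) :
    (shiftTop x lo δ j).unbotD 0 =
      if lo < (x j).unbotD 0 then (x j).unbotD 0 - δ else (x j).unbotD 0 := by
  obtain ⟨r, hr⟩ := WithBot.ne_bot_iff_exists.mp hj
  rw [← hr, WithBot.unbotD_coe]
  by_cases h : lo < r
  · rw [if_pos h]
    simp only [shiftTop, ← hr, WithBot.unbotD_coe]
    rw [if_pos ⟨WithBot.coe_ne_bot, h⟩, WithBot.unbotD_coe]
  · rw [if_neg h]
    simp only [shiftTop, ← hr, WithBot.unbotD_coe]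
    rw [if_neg (fun hc => h hc.2), WithBot.unbotD_coe]

lemma measA (hμ0 : 0 ≤ μ) (hδ : 0 < δ)
    (hgapδ : ∀ j, x j ≠ ⊥ → lo < (x j).unbotD 0 → lo + μ + δ ≤ (x j).unbotD 0)
    (jhi jlo : Fin n) (hjhi : x jhi ≠ ⊥) (hjhiv : (x jhi).unbotD 0 = lo + μ + δ)
    (hjlo : x jlo ≠ ⊥) (hjlov : (x jlo).unbotD 0 = lo) :
    meas μ (shiftTop x lo δ) < meas μ x := by
  apply Finset.card_lt_card
  have hsub : measSet μ (shiftTop x lo δ) ⊆ measSet μ x := by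
    intro jk hjk
    rw [mem_measSet] at hjk ⊢
    obtain ⟨h1, h2, h3⟩ := hjk
    have hx1 : x jk.1 ≠ ⊥ := fun hb => h1 ((shiftTop_bot_iff jk.1).mpr hb)
    have hx2 : x jk.2 ≠ ⊥ := fun hb => h2 ((shiftTop_bot_iff jk.2).mpr hb)
    refine ⟨hx1, hx2, ?_⟩
    rw [shiftTop_val hx1, shiftTop_val hx2] at h3
    by_cases ht1 : lo < (x jk.1).unbotD 0 <;> by_cases ht2 : lo < (x jk.2).unbotD 0
    · rw [if_pos ht1, if_pos ht2] at h3; linarith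
    · rw [if_pos ht1, if_neg ht2] at h3; linarith
    · rw [if_neg ht1, if_pos ht2] at h3
      have hg := hgapδ jk.2 hx2 ht2
      have := not_lt.mp ht1
      linarith
    · rw [if_neg ht1, if_neg ht2] at h3; linarith
  refine (Finset.ssubset_iff_of_subset hsub).mpr ⟨(jhi, jlo), ?_, ?_⟩
  · rw [mem_measSet]
    exact ⟨hjhi, hjlo, by rw [hjhiv, hjlov]; linarith⟩
  · rw [mem_measSet]
    push_neg
    intro _ _
    rw [shiftTop_val hjhi, shiftTop_val hjlo, hjhiv, hjlov]
    rw [if_pos (by linarith), if_neg (by linarith)]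
    linarith

lemma dropBot_cases (j : Fin n) :
    (x j ≠ ⊥ ∧ lo < (x j).unbotD 0 ∧ dropBot x lo j = x j) ∨ dropBot x lo j = ⊥ := by
  by_cases h : x j ≠ ⊥ ∧ lo < (x j).unbotD 0
  · exact Or.inl ⟨h.1, h.2, by simp [dropBot, h]⟩
  · exact Or.inr (by simp [dropBot, h])

lemma measB (hμ0 : 0 ≤ μ)
    (hgap : ∀ j, x j ≠ ⊥ → lo < (x j).unbotD 0 → lo + μ < (x j).unbotD 0)
    (jhi jlo : Fin n) (hjhi : x jhi ≠ ⊥) (hjhiv : lo < (x jhi).unbotD 0)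
    (hjlo : x jlo ≠ ⊥) (hjlov : (x jlo).unbotD 0 = lo) :
    meas μ (dropBot x lo) < meas μ x := by
  apply Finset.card_lt_card
  have hsub : measSet μ (dropBot x lo) ⊆ measSet μ x := by
    intro jk hjk
    rw [mem_measSet] at hjk ⊢
    obtain ⟨h1, h2, h3⟩ := hjk
    rcases dropBot_cases (x := x) (lo := lo) jk.1 with ⟨hx1, _, he1⟩ | he1
    · rcases dropBot_cases (x := x) (lo := lo) jk.2 with ⟨hx2, _, he2⟩ | he2
      · rw [he1, he2] at h3
        exact ⟨hx1, hx2, h3⟩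
      · exact absurd he2 h2
    · exact absurd he1 h1
  refine (Finset.ssubset_iff_of_subset hsub).mpr ⟨(jhi, jlo), ?_, ?_⟩
  · rw [mem_measSet]
    refine ⟨hjhi, hjlo, ?_⟩
    have := hgap jhi hjhi hjhiv
    rw [hjlov]
    linarith
  · rw [mem_measSet]
    push_neg
    intro _ h2
    exfalso
    apply h2
    simp [dropBot, hjlov]



lemma le_tdot {n : ℕ} (a x : Fin n → Rmax) (j : Fin n) : a j + x j ≤ tdot a x := by
  unfold tdot; exact Finset.le_sup (f := fun j => a j + x j) (mem_univ j)

lemma tdot_le {n : ℕ} {a x : Fin n → Rmax} {m : Rmax} (h : ∀ j, a j + x j ≤ m) :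
    tdot a x ≤ m := by
  unfold tdot; exact Finset.sup_le fun j _ => h j

lemma tdot_mono_left {n : ℕ} {a a' x : Fin n → Rmax} (h : ∀ j, a j ≤ a' j) :
    tdot a x ≤ tdot a' x :=
  tdot_le fun j => le_trans (add_le_add (h j) le_rfl) (le_tdot a' x j)

lemma tdot_mono_right {n : ℕ} {a x x' : Fin n → Rmax} (h : ∀ j, x j ≤ x' j) :
    tdot a x ≤ tdot a x' :=
  tdot_le fun j => le_trans (add_le_add le_rfl (h j)) (le_tdot a x' j)

lemma tdot_attain {n : ℕ} {c x : Fin n → Rmax} (h : tdot c x ≠ ⊥) :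
    ∃ j, c j ≠ ⊥ ∧ x j ≠ ⊥ ∧ tdot c x = c j + x j := by
  have hne : (univ : Finset (Fin n)).Nonempty := by
    by_contra hemp
    rw [not_nonempty_iff_eq_empty] at hemp
    exact h (by simp [tdot, hemp])
  obtain ⟨j, _, hj⟩ := Finset.exists_mem_eq_sup univ hne fun j => c j + x j
  refine ⟨j, ?_, ?_, hj⟩
  · intro hb; apply h; rw [tdot, hj, hb]; simp
  · intro hb; apply h; rw [tdot, hj, hb]; simp

lemma ne_bot_coe {a : Rmax} (h : a ≠ ⊥) : ∃ r : ℝ, a = (r : Rmax) := by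
  obtain ⟨r, hr⟩ := WithBot.ne_bot_iff_exists.mp h
  exact ⟨r, hr.symm⟩

lemma gapfree_bound (μ : ℝ) (hμ0 : 0 ≤ μ) (V : Finset ℝ)
    (h : ∀ lo ∈ V, (∃ v ∈ V, lo < v) → ∃ v ∈ V, lo < v ∧ v ≤ lo + μ) :
    ∀ a ∈ V, ∀ b ∈ V, a - b ≤ ((V.card - 1 : ℕ) : ℝ) * μ := by
  have key : ∀ N : ℕ, ∀ b ∈ V, (V.filter (b < ·)).card ≤ N →
      ∀ a ∈ V, a - b ≤ ((V.filter (b < ·)).card : ℝ) * μ := by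
    intro N
    induction N with
    | zero =>
      intro b hb hcard a ha
      have hfe : (V.filter (b < ·)) = ∅ := Finset.card_eq_zero.mp (Nat.le_zero.mp hcard)
      have hab : a ≤ b := by
        by_contra hlt
        have : a ∈ V.filter (b < ·) := Finset.mem_filter.mpr ⟨ha, not_le.mp hlt⟩
        simp [hfe] at this
      have : ((V.filter (b < ·)).card : ℝ) * μ = 0 := by rw [hfe]; simp
      rw [this]; linarith
    | succ N ih =>
      intro b hb hcard a ha
      have hnn : (0:ℝ) ≤ ((V.filter (b < ·)).card : ℝ) * μ :=
        mul_nonneg (Nat.cast_nonneg _) hμ0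
      rcases le_or_gt a b with hab | hab
      · linarith
      · obtain ⟨v, hvV, hbv, hvb⟩ := h b hb ⟨a, ha, hab⟩
        have hsub : V.filter (v < ·) ⊆ V.filter (b < ·) := by
          intro w hw; rw [Finset.mem_filter] at *
          exact ⟨hw.1, lt_trans hbv hw.2⟩
        have hvmem : v ∈ V.filter (b < ·) := Finset.mem_filter.mpr ⟨hvV, hbv⟩
        have hvnot : v ∉ V.filter (v < ·) := by simp
        have hlt : (V.filter (v < ·)).card < (V.filter (b < ·)).card :=
          Finset.card_lt_card (Finset.ssubset_iff_of_subset hsub |>.mpr ⟨v, hvmem, hvnot⟩)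
        have h1 : a - v ≤ ((V.filter (v < ·)).card : ℝ) * μ :=
          ih v hvV (by omega) a ha
        have h2 : ((V.filter (v < ·)).card : ℝ) + 1 ≤ ((V.filter (b < ·)).card : ℝ) := by
          exact_mod_cast Nat.succ_le_of_lt hlt
        nlinarith
  intro a ha b hb
  have h1 := key (V.filter (b < ·)).card b hb le_rfl a ha
  have h2 : (V.filter (b < ·)).card ≤ V.card - 1 := by
    have : V.filter (b < ·) ⊆ V.erase b := by
      intro w hw; rw [Finset.mem_filter] at hw
      exact Finset.mem_erase.mpr ⟨ne_of_gt hw.2, hw.1⟩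
    calc (V.filter (b < ·)).card ≤ (V.erase b).card := Finset.card_le_card this
      _ = V.card - 1 := Finset.card_erase_of_mem hb
  have : ((V.filter (b < ·)).card : ℝ) ≤ ((V.card - 1 : ℕ) : ℝ) := Nat.cast_le.mpr h2
  nlinarith

section Moves
variable {p n : ℕ} {A B : Fin p → Fin n → Rmax} {μ : ℝ} {x : Fin n → Rmax} {lo δ : ℝ}

/-- From a row constraint, extract a real witness. -/
lemma witness (hC : ∀ i, tdot (A i) x ≤ tdot (B i) x) (i : Fin p) (s : Fin n)
    {a xs : ℝ} (hA : A i s = (a : Rmax)) (hxs : x s = (xs : Rmax)) :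
    ∃ t, ∃ b xt : ℝ, B i t = (b : Rmax) ∧ x t = (xt : Rmax) ∧ a + xs ≤ b + xt := by
  have h1 : ((a + xs : ℝ) : Rmax) ≤ tdot (B i) x := by
    have := le_trans (le_tdot (A i) x s) (hC i)
    rwa [hA, hxs, ← WithBot.coe_add] at this
  rw [tdot] at h1
  obtain ⟨t, _, ht⟩ := (Finset.le_sup_iff (bot_lt_iff_ne_bot.mpr (WithBot.coe_ne_bot))).mp h1
  have hne : B i t + x t ≠ ⊥ := fun hb => by simp [hb] at ht
  have hB : B i t ≠ ⊥ := fun hb => hne (by simp [hb])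
  have hx : x t ≠ ⊥ := fun hb => hne (by simp [hb])
  obtain ⟨b, hb⟩ := WithBot.ne_bot_iff_exists.mp hB
  obtain ⟨xt, hxt⟩ := WithBot.ne_bot_iff_exists.mp hx
  refine ⟨t, b, xt, hb.symm, hxt.symm, ?_⟩
  rw [← hb, ← hxt, ← WithBot.coe_add, WithBot.coe_le_coe] at ht
  exact ht

lemma moveA (hμ : ∀ i s t, A i s ≠ ⊥ → B i t ≠ ⊥ →
      |(A i s).unbotD 0 - (B i t).unbotD 0| ≤ μ)
    (hC : ∀ i, tdot (A i) x ≤ tdot (B i) x) (hδ : 0 < δ)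
    (hgapδ : ∀ j, x j ≠ ⊥ → lo < (x j).unbotD 0 → lo + μ + δ ≤ (x j).unbotD 0) :
    ∀ i, tdot (A i) (shiftTop x lo δ) ≤ tdot (B i) (shiftTop x lo δ) := by
  intro i
  apply tdot_le
  intro s
  set y := shiftTop x lo δ with hy
  by_cases hA : A i s = ⊥
  · simp [hA]
  by_cases hxsb : x s = ⊥
  · have : y s = ⊥ := by simp [hy, shiftTop, hxsb]
    simp [this]
  obtain ⟨a, ha⟩ := WithBot.ne_bot_iff_exists.mp hA
  obtain ⟨xs, hxs⟩ := WithBot.ne_bot_iff_exists.mp hxsb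
  obtain ⟨t, b, xt, hB, hxt, hab⟩ := witness hC i s ha.symm hxs.symm
  have habs : |a - b| ≤ μ := by
    have := hμ i s t hA (by rw [hB]; exact WithBot.coe_ne_bot)
    rwa [← ha, hB, WithBot.unbotD_coe, WithBot.unbotD_coe] at this
  refine le_trans ?_ (le_tdot (B i) y t)
  have hus : (x s).unbotD 0 = xs := by rw [← hxs, WithBot.unbotD_coe]
  have hut : (x t).unbotD 0 = xt := by rw [hxt, WithBot.unbotD_coe]
  have habs1 : a - b ≤ μ := (abs_le.mp habs).2
  have habs2 : b - a ≤ μ := by have := (abs_le.mp habs).1; linarith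
  by_cases hPs : lo < xs <;> by_cases hPt : lo < xt
  · -- both top
    have hys : y s = ((xs - δ : ℝ) : Rmax) := by
      simp [hy, shiftTop, hxsb, hus, hPs]
    have hyt : y t = ((xt - δ : ℝ) : Rmax) := by
      simp [hy, shiftTop, hxt, hut, hPt]
    rw [hys, hyt, ← ha, hB, ← WithBot.coe_add, ← WithBot.coe_add, WithBot.coe_le_coe]
    linarith
  · -- s top, t bot : impossible
    exfalso
    have hgs : lo + μ + δ ≤ xs := by have := hgapδ s hxsb (by rw [hus]; exact hPs); rwa [hus] at this
    have hxtlo : xt ≤ lo := not_lt.mp hPt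
    linarith
  · -- s bot, t top
    have hys : y s = ((xs : ℝ) : Rmax) := by
      simp [hy, shiftTop, hxsb, hus, hPs, ← hxs]
    have hyt : y t = ((xt - δ : ℝ) : Rmax) := by
      simp [hy, shiftTop, hxt, hut, hPt]
    rw [hys, hyt, ← ha, hB, ← WithBot.coe_add, ← WithBot.coe_add, WithBot.coe_le_coe]
    have hgt : lo + μ + δ ≤ xt := by have := hgapδ t (by rw [hxt]; exact WithBot.coe_ne_bot) (by rw [hut]; exact hPt); rwa [hut] at this
    have hxslo : xs ≤ lo := not_lt.mp hPs
    linarith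
  · -- both bot
    have hys : y s = x s := by simp [hy, shiftTop, hus, hPs]
    have hyt : y t = x t := by simp [hy, shiftTop, hut, hPt]
    rw [hys, hyt, ← ha, ← hxs, hB, hxt, ← WithBot.coe_add, ← WithBot.coe_add, WithBot.coe_le_coe]
    exact hab

lemma moveB (hμ : ∀ i s t, A i s ≠ ⊥ → B i t ≠ ⊥ →
      |(A i s).unbotD 0 - (B i t).unbotD 0| ≤ μ)
    (hC : ∀ i, tdot (A i) x ≤ tdot (B i) x) (hμ0 : 0 ≤ μ)
    (hgap : ∀ j, x j ≠ ⊥ → lo < (x j).unbotD 0 → lo + μ < (x j).unbotD 0) :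
    ∀ i, tdot (A i) (dropBot x lo) ≤ tdot (B i) (dropBot x lo) := by
  intro i
  apply tdot_le
  intro s
  set y := dropBot x lo with hy
  by_cases hA : A i s = ⊥
  · simp [hA]
  by_cases hysb : y s = ⊥
  · simp [hysb]
  have hPs : x s ≠ ⊥ ∧ lo < (x s).unbotD 0 := by
    by_contra hP
    exact hysb (by simp [hy, dropBot, hP])
  have hyseq : y s = x s := by simp [hy, dropBot, hPs.1, hPs.2]
  obtain ⟨a, ha⟩ := WithBot.ne_bot_iff_exists.mp hA
  obtain ⟨xs, hxs⟩ := WithBot.ne_bot_iff_exists.mp hPs.1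
  obtain ⟨t, b, xt, hB, hxt, hab⟩ := witness hC i s ha.symm hxs.symm
  have habs : |a - b| ≤ μ := by
    have := hμ i s t hA (by rw [hB]; exact WithBot.coe_ne_bot)
    rwa [← ha, hB, WithBot.unbotD_coe, WithBot.unbotD_coe] at this
  have hus : (x s).unbotD 0 = xs := by rw [← hxs, WithBot.unbotD_coe]
  have hut : (x t).unbotD 0 = xt := by rw [hxt, WithBot.unbotD_coe]
  have hPt : lo < xt := by
    by_contra hPt
    have hgs : lo + μ < xs := by have := hgap s hPs.1 hPs.2; rwa [hus] at this
    have habs2 : b - a ≤ μ := by have := (abs_le.mp habs).1; linarith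
    have : xt ≤ lo := not_lt.mp hPt
    linarith
  have hyt : y t = x t := by
    simp [hy, dropBot, hxt, hut, hPt]
  refine le_trans ?_ (le_tdot (B i) y t)
  rw [hyseq, hyt, ← ha, ← hxs, hB, hxt, ← WithBot.coe_add, ← WithBot.coe_add, WithBot.coe_le_coe]
  exact hab

end Moves

lemma smallCounter {p n : ℕ} (A B : Fin p → Fin n → Rmax) (c d : Fin n → Rmax)
    (μ : ℝ) (hμ0 : 0 ≤ μ)
    (hμ : ∀ i s t, A i s ≠ ⊥ → B i t ≠ ⊥ → |(A i s).unbotD 0 - (B i t).unbotD 0| ≤ μ) :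
    ∀ x : Fin n → Rmax, (∀ i, tdot (A i) x ≤ tdot (B i) x) → tdot d x < tdot c x →
    ∃ y : Fin n → Rmax, (∀ i, tdot (A i) y ≤ tdot (B i) y) ∧ tdot d y < tdot c y ∧
      ∀ j k, y j ≠ ⊥ → y k ≠ ⊥ →
        (y j).unbotD 0 - (y k).unbotD 0 ≤ ((n - 1 : ℕ) : ℝ) * μ := by
  classical
  suffices H : ∀ N : ℕ, ∀ x : Fin n → Rmax, meas μ x ≤ N →
      (∀ i, tdot (A i) x ≤ tdot (B i) x) → tdot d x < tdot c x →
      ∃ y : Fin n → Rmax, (∀ i, tdot (A i) y ≤ tdot (B i) y) ∧ tdot d y < tdot c y ∧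
      ∀ j k, y j ≠ ⊥ → y k ≠ ⊥ →
        (y j).unbotD 0 - (y k).unbotD 0 ≤ ((n - 1 : ℕ) : ℝ) * μ by
    exact fun x hC hcd => H (meas μ x) x le_rfl hC hcd
  intro N
  induction N using Nat.strong_induction_on with
  | _ N ih =>
  intro x hN hC hcd
  by_cases hsp : ∀ j k, x j ≠ ⊥ → x k ≠ ⊥ →
      (x j).unbotD 0 - (x k).unbotD 0 ≤ ((n - 1 : ℕ) : ℝ) * μ
  · exact ⟨x, hC, hcd, hsp⟩
  push_neg at hsp
  obtain ⟨j₁, k₁, hj₁, hk₁, hbig⟩ := hsp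
  set V : Finset ℝ := (univ.filter fun j => x j ≠ ⊥).image fun j => (x j).unbotD 0 with hV
  have hmemV : ∀ j : Fin n, x j ≠ ⊥ → (x j).unbotD 0 ∈ V := fun j hj =>
    Finset.mem_image.mpr ⟨j, Finset.mem_filter.mpr ⟨mem_univ j, hj⟩, rfl⟩
  have hcardV : V.card ≤ n := by
    calc V.card ≤ (univ.filter fun j : Fin n => x j ≠ ⊥).card := Finset.card_image_le
      _ ≤ (univ : Finset (Fin n)).card := Finset.card_filter_le _ _
      _ = n := by simp
  -- find a gap above `lo`
  have hgapex : ∃ lo ∈ V, (∃ v ∈ V, lo < v) ∧ ∀ v ∈ V, lo < v → lo + μ < v := by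
    by_contra hno
    push_neg at hno
    have hb := gapfree_bound μ hμ0 V hno _ (hmemV j₁ hj₁) _ (hmemV k₁ hk₁)
    have hcast : ((V.card - 1 : ℕ) : ℝ) ≤ ((n - 1 : ℕ) : ℝ) :=
      Nat.cast_le.mpr (Nat.sub_le_sub_right hcardV 1)
    have : ((V.card - 1 : ℕ) : ℝ) * μ ≤ ((n - 1 : ℕ) : ℝ) * μ :=
      mul_le_mul_of_nonneg_right hcast hμ0
    linarith
  obtain ⟨lo, hloV, ⟨v₀, hv₀V, hv₀⟩, hgap⟩ := hgapex
  have htopne : (V.filter (lo < ·)).Nonempty := ⟨v₀, Finset.mem_filter.mpr ⟨hv₀V, hv₀⟩⟩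
  set hi : ℝ := (V.filter (lo < ·)).min' htopne with hhi
  have hhimem := Finset.min'_mem (V.filter (lo < ·)) htopne
  rw [Finset.mem_filter] at hhimem
  set δ : ℝ := hi - lo - μ with hδdef
  have hδ : 0 < δ := by
    have := hgap hi hhimem.1 hhimem.2
    simp only [hδdef]
    linarith
  have hhieq : hi = lo + μ + δ := by rw [hδdef]; ring
  have hgapδ : ∀ j, x j ≠ ⊥ → lo < (x j).unbotD 0 → lo + μ + δ ≤ (x j).unbotD 0 := by
    intro j hj hlt
    rw [← hhieq]
    exact Finset.min'_le _ _ (Finset.mem_filter.mpr ⟨hmemV j hj, hlt⟩)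
  have hgap' : ∀ j, x j ≠ ⊥ → lo < (x j).unbotD 0 → lo + μ < (x j).unbotD 0 := by
    intro j hj hlt
    have := hgapδ j hj hlt
    linarith
  -- witnesses at levels hi and lo
  obtain ⟨jhi, hjhiF, hjhival⟩ := Finset.mem_image.mp (show hi ∈ (univ.filter fun j => x j ≠ ⊥).image (fun j => (x j).unbotD 0) from hhimem.1)
  have hjhib : x jhi ≠ ⊥ := (Finset.mem_filter.mp hjhiF).2
  have hjhiv : (x jhi).unbotD 0 = lo + μ + δ := by rw [hjhival, ← hhieq]
  obtain ⟨jlo, hjloF, hjloval⟩ := Finset.mem_image.mp (show lo ∈ (univ.filter fun j => x j ≠ ⊥).image (fun j => (x j).unbotD 0) from hloV)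
  have hjlob : x jlo ≠ ⊥ := (Finset.mem_filter.mp hjloF).2
  have hjlov : (x jlo).unbotD 0 = lo := hjloval
  -- index attaining tdot c x
  have hcxb : tdot c x ≠ ⊥ := fun hb => by
    rw [hb] at hcd
    exact absurd hcd (by simp)
  obtain ⟨j₀, hcj₀, hxj₀, hattain⟩ := tdot_attain hcxb
  by_cases hwhere : lo < (x j₀).unbotD 0
  · -- j₀ in the top part: drop the bottom
    set y := dropBot x lo with hy
    have hCy := moveB hμ hC hμ0 hgap'
    have hyj₀ : y j₀ = x j₀ := by simp [hy, dropBot, hxj₀, hwhere]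
    have hylex : ∀ j, y j ≤ x j := by
      intro j
      show dropBot x lo j ≤ x j
      rcases dropBot_cases (x := x) (lo := lo) j with ⟨_, _, he⟩ | he
      · rw [he]
      · rw [he]; exact bot_le
    have hcdy : tdot d y < tdot c y :=
      lt_of_le_of_lt (tdot_mono_right hylex)
        (lt_of_lt_of_le (by rw [hattain, ← hyj₀] at hcd; exact hcd) (le_tdot c y j₀))
    have hmlt : meas μ y < meas μ x := measB hμ0 hgap' jhi jlo hjhib (by rw [hjhiv]; linarith) hjlob hjlov
    exact ih (meas μ y) (lt_of_lt_of_le hmlt hN) y le_rfl hCy hcdy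
  · -- j₀ in the bottom part: compress the gap
    set y := shiftTop x lo δ with hy
    have hCy := moveA hμ hC hδ hgapδ
    have hyj₀ : y j₀ = x j₀ := by simp [hy, shiftTop, hwhere]
    have hylex : ∀ j, y j ≤ x j := by
      intro j
      show shiftTop x lo δ j ≤ x j
      by_cases hc : x j ≠ ⊥ ∧ lo < (x j).unbotD 0
      · obtain ⟨r, hr⟩ := WithBot.ne_bot_iff_exists.mp hc.1
        have hur : (x j).unbotD 0 = r := by rw [← hr, WithBot.unbotD_coe]
        unfold shiftTop
        rw [if_pos hc, hur, ← hr]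
        exact WithBot.coe_le_coe.mpr (sub_le_self r hδ.le)
      · simp [shiftTop, hc]
    have hcdy : tdot d y < tdot c y :=
      lt_of_le_of_lt (tdot_mono_right hylex)
        (lt_of_lt_of_le (by rw [hattain, ← hyj₀] at hcd; exact hcd) (le_tdot c y j₀))
    have hmlt : meas μ y < meas μ x := measA hμ0 hδ hgapδ jhi jlo hjhib hjhiv hjlob hjlov
    exact ih (meas μ y) (lt_of_lt_of_le hmlt hN) y le_rfl hCy hcdy


lemma nsmul_bot (k : ℕ) (hk : k ≠ 0) : k • (⊥ : Rmax) = ⊥ := by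
  cases k with
  | zero => exact absurd rfl hk
  | succ m => rw [succ_nsmul]; exact WithBot.add_bot _

end Stmt13

/-- replacing the `⊥` entries of `d` by
`-M - 1 + min{c_j : c_j ≠ ⊥}`, where `M = (n-1) max_{s,t} M_{st}`, does not
change the validity of the implication `Ax ≤ Bx ⟹ cx ≤ dx`. -/
theorem statement13 {p n : ℕ} (A B : Fin p → Fin n → Rmax) (c d : Fin n → Rmax)
    (hc : (univ.filter fun j : Fin n => c j ≠ ⊥).Nonempty)
    (d' : Fin n → Rmax)
    (hd' : ∀ i : Fin n, d' i =
      if d i ≠ ⊥ then d i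
      else
        WithBot.map
          (fun m : ℝ => -m - 1 +
            (univ.filter fun j : Fin n => c j ≠ ⊥).inf' hc fun j => WithBot.unbotD 0 (c j))
          ((n - 1) • univ.sup fun st : Fin n × Fin n => Mst A B st.1 st.2)) :
    (∀ x : Fin n → Rmax,
        (∀ i, tdot (A i) x ≤ tdot (B i) x) → tdot c x ≤ tdot d x) ↔
    (∀ x : Fin n → Rmax,
        (∀ i, tdot (A i) x ≤ tdot (B i) x) → tdot c x ≤ tdot d' x) := by
  have hdd' : ∀ i, d i ≤ d' i := by
    intro i
    rw [hd' i]
    by_cases h : d i ≠ ⊥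
    · rw [if_pos h]
    · rw [if_neg h]
      push_neg at h
      rw [h]
      exact bot_le
  constructor
  · intro H x hC
    exact le_trans (H x hC) (Stmt13.tdot_mono_left hdd')
  · intro H x hC
    set s : Rmax := univ.sup (fun st : Fin n × Fin n => Mst A B st.1 st.2) with hs
    set Mb : Rmax := (n - 1) • s with hMb
    rcases eq_or_ne Mb ⊥ with hMbot | hMne
    · -- in this case `d' = d`
      have hdeq : ∀ i, d' i = d i := by
        intro i
        rw [hd' i]
        by_cases h : d i ≠ ⊥
        · rw [if_pos h]
        · rw [if_neg h]
          push_neg at h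
          rw [h, hMbot, WithBot.map_bot]
      have := H x hC
      exact le_trans this (Stmt13.tdot_mono_left fun i => le_of_eq (hdeq i))
    · obtain ⟨M, hM⟩ := Stmt13.ne_bot_coe hMne
      -- produce a uniform bound μ with `(n-1)·μ = M`
      have hμpack : ∃ μ : ℝ, 0 ≤ μ ∧
          (∀ i s' t, A i s' ≠ ⊥ → B i t ≠ ⊥ →
            |(A i s').unbotD 0 - (B i t).unbotD 0| ≤ μ) ∧
          ((n - 1 : ℕ) : ℝ) * μ = M := by
        rcases eq_or_ne s ⊥ with hsbot | hsne
        · -- then `n - 1 = 0` and `M = 0`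
          have hn1 : n - 1 = 0 := by
            by_contra hn
            exact hMne (by rw [hMb, hsbot]; exact Stmt13.nsmul_bot _ hn)
          have hM0 : M = 0 := by
            have h0 : Mb = 0 := by rw [hMb, hn1, zero_nsmul]
            rw [hM] at h0
            exact_mod_cast h0
          refine ⟨0, le_rfl, ?_, by rw [hM0]; ring⟩
          intro i s' t hA hB
          exfalso
          have h1 : Mst A B s' t = ⊥ :=
            (Finset.sup_eq_bot_iff _ _).mp (hs.symm.trans hsbot) (s', t) (mem_univ _)
          rw [Mst] at h1
          have h2 := (Finset.sup_eq_bot_iff _ _).mp h1 i (mem_univ i)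
          rw [if_pos ⟨hA, hB⟩] at h2
          exact WithBot.coe_ne_bot h2
        · obtain ⟨μ, hμeq⟩ := Stmt13.ne_bot_coe hsne
          have hle : ∀ i s' t, A i s' ≠ ⊥ → B i t ≠ ⊥ →
              |(A i s').unbotD 0 - (B i t).unbotD 0| ≤ μ := by
            intro i s' t hA hB
            have h1 : ((|(A i s').unbotD 0 - (B i t).unbotD 0| : ℝ) : Rmax) ≤ Mst A B s' t := by
              rw [Mst]
              refine le_trans (le_of_eq ?_) (Finset.le_sup (mem_univ i))
              rw [if_pos ⟨hA, hB⟩]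
            have h2 : Mst A B s' t ≤ s := by
              rw [hs]
              exact Finset.le_sup (f := fun st : Fin n × Fin n => Mst A B st.1 st.2)
                (mem_univ (s', t))
            have := le_trans h1 h2
            rw [hμeq] at this
            exact_mod_cast this
          have hμ0 : 0 ≤ μ := by
            have hsup : (univ.sup fun st : Fin n × Fin n => Mst A B st.1 st.2) ≠ ⊥ := by
              rw [← hs]; exact hsne
            have hex : ∃ st : Fin n × Fin n, Mst A B st.1 st.2 ≠ ⊥ := by
              by_contra hall
              push_neg at hall
              exact hsup ((Finset.sup_eq_bot_iff _ _).mpr fun st _ => hall st)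
            obtain ⟨st, hst⟩ := hex
            rw [Mst] at hst
            have hex2 : ∃ i : Fin p, (if A i st.1 ≠ ⊥ ∧ B i st.2 ≠ ⊥ then
                ((|(A i st.1).unbotD 0 - (B i st.2).unbotD 0| : ℝ) : Rmax) else ⊥) ≠ ⊥ := by
              by_contra hall
              push_neg at hall
              exact hst ((Finset.sup_eq_bot_iff _ _).mpr fun i _ => hall i)
            obtain ⟨i, hi⟩ := hex2
            by_cases hcond : A i st.1 ≠ ⊥ ∧ B i st.2 ≠ ⊥
            · have := hle i st.1 st.2 hcond.1 hcond.2
              exact le_trans (abs_nonneg _) this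
            · rw [if_neg hcond] at hi
              exact absurd rfl hi
          refine ⟨μ, hμ0, hle, ?_⟩
          have h1 : Mb = (((n - 1 : ℕ) • μ : ℝ) : Rmax) := by
            rw [hMb, hμeq]
            push_cast
            ring_nf
          rw [hM] at h1
          have h2 : M = (n - 1 : ℕ) • μ := by exact_mod_cast h1
          rw [h2, nsmul_eq_mul]
      obtain ⟨μ, hμ0, hμ, hkey⟩ := hμpack
      by_contra hnle
      have hcd : tdot d x < tdot c x := not_le.mp hnle
      obtain ⟨y, hCy, hcdy, hspread⟩ := Stmt13.smallCounter A B c d μ hμ0 hμ x hC hcd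
      have hcy := H y hCy
      have hcyb : tdot c y ≠ ⊥ := by
        intro hb
        rw [hb] at hcdy
        exact absurd hcdy (by simp)
      obtain ⟨js, hcj, hyj, hatt⟩ := Stmt13.tdot_attain hcyb
      obtain ⟨cj, hcjv⟩ := Stmt13.ne_bot_coe hcj
      obtain ⟨yj, hyjv⟩ := Stmt13.ne_bot_coe hyj
      set mc : ℝ := (univ.filter fun j : Fin n => c j ≠ ⊥).inf' hc (fun j => (c j).unbotD 0)
        with hmc
      have hmcle : mc ≤ (c js).unbotD 0 :=
        Finset.inf'_le (fun j => (c j).unbotD 0)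
          (Finset.mem_filter.mpr ⟨Finset.mem_univ js, hcj⟩)
      have hlt : tdot d' y < tdot c y := by
        rw [tdot]
        apply (Finset.sup_lt_iff (bot_lt_iff_ne_bot.mpr hcyb)).mpr
        intro i _
        rw [hd' i]
        by_cases hdi : d i ≠ ⊥
        · rw [if_pos hdi]
          exact lt_of_le_of_lt (Stmt13.le_tdot d y i) hcdy
        · rw [if_neg hdi, hM, WithBot.map_coe]
          by_cases hyi : y i = ⊥
          · rw [hyi]
            rw [WithBot.add_bot]
            exact bot_lt_iff_ne_bot.mpr hcyb
          · obtain ⟨yi, hyiv⟩ := Stmt13.ne_bot_coe hyi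
            have hsp := hspread i js hyi hyj
            rw [hyiv, WithBot.unbotD_coe] at hsp
            have hyjv' : (y js).unbotD 0 = yj := by rw [hyjv, WithBot.unbotD_coe]
            rw [hyjv'] at hsp
            have hcjv' : (c js).unbotD 0 = cj := by rw [hcjv, WithBot.unbotD_coe]
            rw [hcjv'] at hmcle
            rw [hyiv, hatt, hcjv, hyjv, ← WithBot.coe_add, ← WithBot.coe_add,
              WithBot.coe_lt_coe]
            rw [hkey] at hsp
            linarith
      exact absurd hcy (not_le.mpr hlt)
end

section
/- (Tropical Farkas lemma) With A, B ∈ R_max^{p×n}, c, d ∈ R_max^n satisfying the nondegeneracy and degeneracy assumptions, the implication Ax ≤ Bx ⟹ cx ≤ dx holds for all x ∈ R_max^n if, and only if, there exists a strategy σ for Player Min (a map assigning to each column node j ∈ [n] a row node σ(j) ∈ [p+1] with A_{σ(j)j} ∈ R if σ(j) ≤ p, or d_j ∈ R if σ(j) = p+1) such that in the induced weighted digraph G_0^σ every circuit has nonpositive weight, and every circuit of zero weight passes through row node p+1. -/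
open Finset

/-- In the digraph `G_0^σ`, validity of the arc from row node `σ j` to column
node `j'`. -/
def arcOK {p n : ℕ} (B : Fin p → Fin n → Rmax) (c : Fin n → Rmax)
    (sig : Fin n → Option (Fin p)) (j j' : Fin n) : Prop :=
  match sig j with
  | some i => B i j' ≠ ⊥
  | none => c j' ≠ ⊥

/-- Weight of the arc leaving column node `j` in `G_0^σ`: `-A_{σ(j) j}`, or
`-0 - d_j = -d_j` if `σ j` is the extra row node `p+1`. -/
noncomputable def outW {p n : ℕ} (A : Fin p → Fin n → Rmax) (d : Fin n → Rmax)
    (sig : Fin n → Option (Fin p)) (j : Fin n) : ℝ :=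
  match sig j with
  | some i => -(WithBot.unbotD 0 (A i j))
  | none => -(WithBot.unbotD 0 (d j))

/-- Weight of the arc from row node `σ j` to column node `j'`: `B_{σ(j) j'}`,
or `c_{j'}` if `σ j` is the extra row node `p+1`. -/
noncomputable def inW {p n : ℕ} (B : Fin p → Fin n → Rmax) (c : Fin n → Rmax)
    (sig : Fin n → Option (Fin p)) (j j' : Fin n) : ℝ :=
  match sig j with
  | some i => WithBot.unbotD 0 (B i j')
  | none => WithBot.unbotD 0 (c j')

lemma le_tdot {ι : Type*} [Fintype ι] (a x : ι → Rmax) (j : ι) : a j + x j ≤ tdot a x := by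
  rw [tdot]; exact Finset.le_sup (f := fun j => a j + x j) (mem_univ j)

lemma easy_dir {p n : ℕ} (A B : Fin p → Fin n → Rmax) (c d : Fin n → Rmax)
    (sig : Fin n → Option (Fin p))
    (hval : ∀ j : Fin n, (∀ i : Fin p, sig j = some i → A i j ≠ ⊥) ∧
        (sig j = none → d j ≠ ⊥))
    (hcirc : ∀ (m : ℕ) (js : Fin (m + 1) → Fin n),
        (∀ t : Fin (m + 1), arcOK B c sig (js t) (js (t + 1))) →
        (∑ t : Fin (m + 1),
            (outW A d sig (js t) + inW B c sig (js t) (js (t + 1)))) ≤ 0 ∧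
        ((∑ t : Fin (m + 1),
            (outW A d sig (js t) + inW B c sig (js t) (js (t + 1)))) = 0 →
          ∃ t : Fin (m + 1), sig (js t) = none))
    (x : Fin n → Rmax) (hAB : ∀ i, tdot (A i) x ≤ tdot (B i) x) :
    tdot c x ≤ tdot d x := by
  by_contra hlt
  rw [not_le] at hlt
  obtain ⟨js0, -, hjs0⟩ := Finset.lt_sup_iff.mp hlt
  have hxjs0 : x js0 ≠ ⊥ := by
    rintro h; rw [h, WithBot.add_bot] at hjs0; exact absurd hjs0 (by simp)
  have hcjs0 : c js0 ≠ ⊥ := by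
    rintro h; rw [h, WithBot.bot_add] at hjs0; exact absurd hjs0 (by simp)
  have step : ∀ j : Fin n, x j ≠ ⊥ → ∃ j' : Fin n, x j' ≠ ⊥ ∧ arcOK B c sig j j' ∧
      WithBot.unbotD 0 (x j) - WithBot.unbotD 0 (x j') ≤ outW A d sig j + inW B c sig j j' ∧
      (sig j = none → WithBot.unbotD 0 (x j) - WithBot.unbotD 0 (x j') <
        outW A d sig j + inW B c sig j j') := by
    intro j hxj
    obtain ⟨xj, hxjv⟩ := WithBot.ne_bot_iff_exists.mp hxj
    cases hs : sig j with
    | some i =>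
      have hA : A i j ≠ ⊥ := (hval j).1 i hs
      obtain ⟨a, ha⟩ := WithBot.ne_bot_iff_exists.mp hA
      have h1 : A i j + x j ≤ tdot (B i) x := le_trans (le_tdot (A i) x j) (hAB i)
      rw [← ha, ← hxjv, ← WithBot.coe_add] at h1
      rw [tdot] at h1
      obtain ⟨j', -, hj'⟩ :=
        (Finset.le_sup_iff (bot_lt_iff_ne_bot.mpr (by simp))).mp h1
      have hBj' : B i j' ≠ ⊥ := by
        rintro h; rw [h, WithBot.bot_add] at hj'; exact absurd hj' (by simp)
      have hxj' : x j' ≠ ⊥ := by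
        rintro h; rw [h, WithBot.add_bot] at hj'; exact absurd hj' (by simp)
      obtain ⟨b, hb⟩ := WithBot.ne_bot_iff_exists.mp hBj'
      obtain ⟨xj', hxj'v⟩ := WithBot.ne_bot_iff_exists.mp hxj'
      refine ⟨j', hxj', ?_, ?_, ?_⟩
      · unfold arcOK; rw [hs]; exact hBj'
      · rw [← hb, ← hxj'v, ← WithBot.coe_add, WithBot.coe_le_coe] at hj'
        simp only [outW, inW, hs]
        rw [← ha, ← hxjv, ← hb, ← hxj'v]
        simp only [WithBot.unbotD_coe]
        linarith
      · intro hnone; exact absurd hnone (Option.some_ne_none i)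
    | none =>
      have hd : d j ≠ ⊥ := (hval j).2 hs
      obtain ⟨dj, hdj⟩ := WithBot.ne_bot_iff_exists.mp hd
      have h2 : d j + x j < c js0 + x js0 := lt_of_le_of_lt (le_tdot d x j) hjs0
      obtain ⟨cc, hcc⟩ := WithBot.ne_bot_iff_exists.mp hcjs0
      obtain ⟨xx, hxx⟩ := WithBot.ne_bot_iff_exists.mp hxjs0
      rw [← hdj, ← hxjv, ← hcc, ← hxx, ← WithBot.coe_add, ← WithBot.coe_add,
        WithBot.coe_lt_coe] at h2
      have key : WithBot.unbotD 0 (x j) - WithBot.unbotD 0 (x js0) <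
          outW A d sig j + inW B c sig j js0 := by
        simp only [outW, inW, hs]
        rw [← hdj, ← hxjv, ← hcc, ← hxx]
        simp only [WithBot.unbotD_coe]
        linarith
      exact ⟨js0, hxjs0, by unfold arcOK; rw [hs]; exact hcjs0, le_of_lt key,
        fun _ => key⟩
  let U : ℕ → {j : Fin n // x j ≠ ⊥} := fun k =>
    Nat.rec ⟨js0, hxjs0⟩ (fun _ prev =>
      ⟨Classical.choose (step prev.1 prev.2),
       (Classical.choose_spec (step prev.1 prev.2)).1⟩) k
  set u : ℕ → Fin n := fun k => (U k).1 with hu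
  have huspec : ∀ k, arcOK B c sig (u k) (u (k+1)) ∧
      WithBot.unbotD 0 (x (u k)) - WithBot.unbotD 0 (x (u (k+1))) ≤
        outW A d sig (u k) + inW B c sig (u k) (u (k+1)) ∧
      (sig (u k) = none → WithBot.unbotD 0 (x (u k)) - WithBot.unbotD 0 (x (u (k+1))) <
        outW A d sig (u k) + inW B c sig (u k) (u (k+1))) := by
    intro k
    have h := Classical.choose_spec (step (u k) (U k).2)
    exact ⟨h.2.1, h.2.2.1, h.2.2.2⟩
  have hcard : Fintype.card (Fin n) < Fintype.card (Fin (n+1)) := by simp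
  obtain ⟨a, b, hab, hueq⟩ :=
    Fintype.exists_ne_map_eq_of_card_lt (fun k : Fin (n+1) => u k.val) hcard
  wlog hlt2 : a.val < b.val generalizing a b
  · exact this b a hab.symm hueq.symm (by omega)
  set m : ℕ := b.val - a.val - 1 with hm
  have hm1 : a.val + m + 1 = b.val := by omega
  set js : Fin (m+1) → Fin n := fun t => u (a.val + t.val) with hjs
  have hsucc : ∀ t : Fin (m+1), js (t+1) = u (a.val + t.val + 1) := by
    intro t
    by_cases hlast : t = Fin.last m
    · have ht1 : (t + 1 : Fin (m+1)).val = 0 := by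
        rw [Fin.val_add_one, if_pos hlast]
      have htv : t.val = m := by rw [hlast, Fin.val_last]
      show u (a.val + (t+1).val) = u (a.val + t.val + 1)
      rw [ht1, htv, add_zero, hm1]
      exact hueq
    · have ht1 : (t + 1 : Fin (m+1)).val = t.val + 1 := by
        rw [Fin.val_add_one, if_neg hlast]
      show u (a.val + (t+1).val) = u (a.val + t.val + 1)
      rw [ht1, Nat.add_assoc]
  have harcs : ∀ t : Fin (m+1), arcOK B c sig (js t) (js (t+1)) := by
    intro t; rw [hsucc t]; exact (huspec (a.val + t.val)).1
  have hweights : ∀ t : Fin (m+1),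
      WithBot.unbotD 0 (x (js t)) - WithBot.unbotD 0 (x (js (t+1))) ≤
        outW A d sig (js t) + inW B c sig (js t) (js (t+1)) := by
    intro t; rw [hsucc t]; exact (huspec (a.val + t.val)).2.1
  have hstrict : ∀ t : Fin (m+1), sig (js t) = none →
      WithBot.unbotD 0 (x (js t)) - WithBot.unbotD 0 (x (js (t+1))) <
        outW A d sig (js t) + inW B c sig (js t) (js (t+1)) := by
    intro t ht; rw [hsucc t]; exact (huspec (a.val + t.val)).2.2 ht
  have htele : ∑ t : Fin (m+1),
      (WithBot.unbotD 0 (x (js t)) - WithBot.unbotD 0 (x (js (t+1)))) = 0 := by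
    rw [Finset.sum_sub_distrib]
    have : ∑ t : Fin (m+1), WithBot.unbotD 0 (x (js (t+1))) =
        ∑ t : Fin (m+1), WithBot.unbotD 0 (x (js t)) :=
      Fintype.sum_equiv (Equiv.addRight 1) _ _ (fun t => rfl)
    rw [this, sub_self]
  obtain ⟨hle, hzero⟩ := hcirc m js harcs
  by_cases hnone : ∃ t : Fin (m+1), sig (js t) = none
  · obtain ⟨t0, ht0⟩ := hnone
    have : (0:ℝ) < ∑ t : Fin (m+1),
        (outW A d sig (js t) + inW B c sig (js t) (js (t+1))) := by
      rw [← htele]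
      exact Finset.sum_lt_sum (fun t _ => hweights t) ⟨t0, mem_univ t0, hstrict t0 ht0⟩
    linarith
  · have hge : (0:ℝ) ≤ ∑ t : Fin (m+1),
        (outW A d sig (js t) + inW B c sig (js t) (js (t+1))) := by
      rw [← htele]
      exact Finset.sum_le_sum (fun t _ => hweights t)
    exact hnone (hzero (le_antisymm hle hge))

section Hard

variable {p n : ℕ}

open Classical in
/-- Column nodes reachable from row `i` (finite entries of row `i` of `B`). -/
noncomputable def SBf (B : Fin p → Fin n → Rmax) (i : Fin p) : Finset (Fin n) :=
  univ.filter (fun j' => B i j' ≠ ⊥)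

open Classical in
noncomputable def Scf (c : Fin n → Rmax) : Finset (Fin n) :=
  univ.filter (fun j' => c j' ≠ ⊥)

open Classical in
/-- Valid options of Player Min at column `j`. -/
noncomputable def VOf (A : Fin p → Fin n → Rmax) (d : Fin n → Rmax) (j : Fin n) :
    Finset (Option (Fin p)) :=
  univ.filter (fun o => match o with | some i => A i j ≠ ⊥ | none => d j ≠ ⊥)

lemma mem_SBf {B : Fin p → Fin n → Rmax} {i : Fin p} {j' : Fin n} :
    j' ∈ SBf B i ↔ B i j' ≠ ⊥ := by simp [SBf]

lemma mem_Scf {c : Fin n → Rmax} {j' : Fin n} : j' ∈ Scf c ↔ c j' ≠ ⊥ := by simp [Scf]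

lemma mem_VOf_some {A : Fin p → Fin n → Rmax} {d : Fin n → Rmax} {j : Fin n} {i : Fin p} :
    some i ∈ VOf A d j ↔ A i j ≠ ⊥ := by simp [VOf]

lemma mem_VOf_none {A : Fin p → Fin n → Rmax} {d : Fin n → Rmax} {j : Fin n} :
    none ∈ VOf A d j ↔ d j ≠ ⊥ := by simp [VOf]

variable (A B : Fin p → Fin n → Rmax) (c d : Fin n → Rmax) (lam : ℝ)
variable (hB : ∀ i, (SBf B i).Nonempty) (hc : (Scf c).Nonempty)
variable (hV : ∀ j, (VOf A d j).Nonempty)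

/-- Value of option `o` at column `j` in the one-step game, from values `y`. -/
noncomputable def oval (y : Fin n → ℝ) (j : Fin n) : Option (Fin p) → ℝ
  | some i => -(WithBot.unbotD 0 (A i j)) +
      (SBf B i).sup' (hB i) (fun j' => WithBot.unbotD 0 (B i j') + y j')
  | none => -lam - (WithBot.unbotD 0 (d j)) +
      (Scf c).sup' hc (fun j' => WithBot.unbotD 0 (c j') + y j')

/-- One-step dynamic programming operator of Player Min. -/
noncomputable def gop (y : Fin n → ℝ) (j : Fin n) : ℝ :=
  (VOf A d j).inf' (hV j) (oval A B c d lam hB hc y j)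

/-- Value iteration capped from above. -/
noncomputable def yit : ℕ → Fin n → ℝ
  | 0 => fun _ => 0
  | (k+1) => fun j => min (yit k j) (gop A B c d lam hB hc hV (yit k) j)

lemma yit_succ_le (k : ℕ) (j : Fin n) :
    yit A B c d lam hB hc hV (k+1) j ≤ yit A B c d lam hB hc hV k j :=
  min_le_left _ _

lemma yit_antitone {k l : ℕ} (h : k ≤ l) (j : Fin n) :
    yit A B c d lam hB hc hV l j ≤ yit A B c d lam hB hc hV k j := by
  induction l with
  | zero => simp_all
  | succ l ih =>
    rcases Nat.eq_or_lt_of_le h with h1 | h1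
    · rw [h1]
    · exact le_trans (yit_succ_le A B c d lam hB hc hV l j) (ih (by omega))

lemma yit_le_oval (k : ℕ) (j : Fin n) {o : Option (Fin p)} (ho : o ∈ VOf A d j) :
    yit A B c d lam hB hc hV (k+1) j ≤
      oval A B c d lam hB hc (yit A B c d lam hB hc hV k) j o :=
  le_trans (min_le_right _ _) (Finset.inf'_le _ ho)

lemma oval_some (y : Fin n → ℝ) (j : Fin n) (i : Fin p) :
    oval A B c d lam hB hc y j (some i) = -(WithBot.unbotD 0 (A i j)) +
      (SBf B i).sup' (hB i) (fun j' => WithBot.unbotD 0 (B i j') + y j') := rfl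

lemma oval_none (y : Fin n → ℝ) (j : Fin n) :
    oval A B c d lam hB hc y j none = -lam - (WithBot.unbotD 0 (d j)) +
      (Scf c).sup' hc (fun j' => WithBot.unbotD 0 (c j') + y j') := rfl

lemma oval_some_ge (y : Fin n → ℝ) (j : Fin n) (i : Fin p) {j' : Fin n}
    (hj' : B i j' ≠ ⊥) :
    -(WithBot.unbotD 0 (A i j)) + (WithBot.unbotD 0 (B i j') + y j') ≤
      oval A B c d lam hB hc y j (some i) := by
  rw [oval_some]
  have := Finset.le_sup' (fun j' => WithBot.unbotD 0 (B i j') + y j') (mem_SBf.mpr hj')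
  linarith

lemma oval_none_ge (y : Fin n → ℝ) (j : Fin n) {j' : Fin n} (hj' : c j' ≠ ⊥) :
    -lam - (WithBot.unbotD 0 (d j)) + (WithBot.unbotD 0 (c j') + y j') ≤
      oval A B c d lam hB hc y j none := by
  rw [oval_none]
  have := Finset.le_sup' (fun j' => WithBot.unbotD 0 (c j') + y j') (mem_Scf.mpr hj')
  linarith

/-- If every coordinate of the value iteration eventually decreases, then Min
has a strategy all whose circuits have negative `λ`-weight. -/
lemma Hdiv (hdec : ∀ j, ∃ k, yit A B c d lam hB hc hV k j < 0) :
    ∃ sig : Fin n → Option (Fin p),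
      (∀ j : Fin n, (∀ i : Fin p, sig j = some i → A i j ≠ ⊥) ∧
        (sig j = none → d j ≠ ⊥)) ∧
      ∀ (m : ℕ) (js : Fin (m + 1) → Fin n),
        (∀ t : Fin (m + 1), arcOK B c sig (js t) (js (t + 1))) →
        (∑ t : Fin (m + 1),
            (outW A d sig (js t) + inW B c sig (js t) (js (t + 1)) -
              if sig (js t) = none then lam else 0)) < 0 := by
  classical
  set Y := yit A B c d lam hB hc hV with hY
  choose K hK using hdec
  set T := univ.sup K with hT
  have hTj : ∀ j, Y T j < 0 := by
    intro j
    exact lt_of_le_of_lt (yit_antitone A B c d lam hB hc hV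
      (Finset.le_sup (mem_univ j)) j) (hK j)
  -- each coordinate has a strict decrease before T
  have hdec1 : ∀ j, ∃ s, s < T ∧ Y (s+1) j < Y s j := by
    intro j
    by_contra hcon
    push_neg at hcon
    have hall : ∀ t, t ≤ T → Y t j = 0 := by
      intro t
      induction t with
      | zero => intro _; rfl
      | succ t ih =>
        intro ht
        have h1 : Y t j = 0 := ih (by omega)
        have h3 := yit_succ_le A B c d lam hB hc hV t j
        rw [← hY] at h3
        have h4 : Y (t+1) j = Y t j := le_antisymm h3 (hcon t (by omega))
        rw [h4, h1]
    have h5 := hall T le_rfl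
    have h6 := hTj j
    linarith
  -- last decrease time
  set s : Fin n → ℕ := fun j => Nat.findGreatest (fun t => Y (t+1) j < Y t j) (T-1)
    with hs
  have hseq : ∀ j, s j = Nat.findGreatest (fun t => Y (t+1) j < Y t j) (T-1) :=
    fun _ => rfl
  have hsdec : ∀ j, Y (s j + 1) j < Y (s j) j := by
    intro j
    obtain ⟨t0, ht0, ht0'⟩ := hdec1 j
    rw [hseq j]
    exact Nat.findGreatest_spec (P := fun t => Y (t+1) j < Y t j) (m := t0)
      (by omega) ht0'
  have hsT : ∀ j, s j + 1 ≤ T := by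
    intro j
    obtain ⟨t0, ht0, -⟩ := hdec1 j
    have h8 : s j ≤ T - 1 := by rw [hseq j]; exact Nat.findGreatest_le (T-1)
    omega
  have hconst : ∀ j, Y T j = Y (s j + 1) j := by
    intro j
    have key : ∀ dt, s j + 1 + dt ≤ T → Y (s j + 1 + dt) j = Y (s j + 1) j := by
      intro dt
      induction dt with
      | zero => intro _; rfl
      | succ dt ih =>
        intro hle
        have h1 : ¬ (Y (s j + 1 + dt + 1) j < Y (s j + 1 + dt) j) := by
          apply Nat.findGreatest_is_greatest (P := fun t => Y (t+1) j < Y t j)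
            (n := T - 1) (k := s j + 1 + dt) (by rw [← hseq j]; omega) (by omega)
        have h2 := yit_succ_le A B c d lam hB hc hV (s j + 1 + dt) j
        rw [← hY] at h2
        have : Y (s j + 1 + dt + 1) j = Y (s j + 1 + dt) j :=
          le_antisymm h2 (not_lt.mp h1)
        rw [show s j + 1 + (dt + 1) = s j + 1 + dt + 1 by omega, this, ih (by omega)]
    have := key (T - (s j + 1)) (by have := hsT j; omega)
    rw [show s j + 1 + (T - (s j + 1)) = T by have := hsT j; omega] at this
    exact this
  -- the strategy: option attaining the min at time s j
  have hex : ∀ j, ∃ o ∈ VOf A d j,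
      gop A B c d lam hB hc hV (Y (s j)) j = oval A B c d lam hB hc (Y (s j)) j o :=
    fun j => Finset.exists_mem_eq_inf' (hV j) _
  choose sig hsigmem hsigeq using hex
  have hYT : ∀ j, Y T j = oval A B c d lam hB hc (Y (s j)) j (sig j) := by
    intro j
    rw [hconst j, ← hsigeq j]
    have hlt := hsdec j
    have : Y (s j + 1) j = min (Y (s j) j) (gop A B c d lam hB hc hV (Y (s j)) j) := rfl
    rw [this] at hlt ⊢
    rcases min_cases (Y (s j) j) (gop A B c d lam hB hc hV (Y (s j)) j) with h | h
    · exfalso; rw [h.1] at hlt; exact lt_irrefl _ hlt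
    · exact h.1
  have hvalid : ∀ j : Fin n, (∀ i : Fin p, sig j = some i → A i j ≠ ⊥) ∧
      (sig j = none → d j ≠ ⊥) := by
    intro j
    have := hsigmem j
    constructor
    · intro i hi; rw [hi] at this; exact mem_VOf_some.mp this
    · intro hi; rw [hi] at this; exact mem_VOf_none.mp this
  refine ⟨sig, hvalid, ?_⟩
  -- per-arc inequality
  have hArc : ∀ j j', arcOK B c sig j j' →
      outW A d sig j + inW B c sig j j' - (if sig j = none then lam else 0) ≤
        Y T j - Y (s j) j' := by
    intro j j' hark
    cases hsj : sig j with
    | some i =>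
      have hark' : B i j' ≠ ⊥ := by unfold arcOK at hark; rw [hsj] at hark; exact hark
      have h1 := oval_some_ge A B c d lam hB hc (Y (s j)) j i hark'
      rw [← hsj, ← hYT j] at h1
      rw [if_neg (Option.some_ne_none i)]
      simp only [outW, inW, hsj]
      linarith
    | none =>
      have hark' : c j' ≠ ⊥ := by unfold arcOK at hark; rw [hsj] at hark; exact hark
      have h1 := oval_none_ge A B c d lam hB hc (Y (s j)) j hark'
      rw [← hsj, ← hYT j] at h1
      rw [if_pos rfl]
      simp only [outW, inW, hsj]
      linarith
  have hMid : ∀ j j', Y T j' ≤ Y (s j) j' := by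
    intro j j'
    exact yit_antitone A B c d lam hB hc hV (by have := hsT j; omega) j'
  have hTight : ∀ j j', Y (s j) j' = Y T j' → s j' < s j := by
    intro j j' heq
    by_contra hcon
    push_neg at hcon   -- s j ≤ s j'
    have h1 : Y (s j') j' ≤ Y (s j) j' :=
      yit_antitone A B c d lam hB hc hV hcon j'
    have h2 : Y T j' ≤ Y (s j' + 1) j' :=
      yit_antitone A B c d lam hB hc hV (hsT j') j'
    have h3 := hsdec j'
    rw [heq] at h1
    linarith
  -- circuit analysis
  intro m js harc
  by_contra hcon
  push_neg at hcon
  set F : Fin (m+1) → ℝ := fun t => Y T (js t) with hF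
  set G : Fin (m+1) → ℝ := fun t => Y (s (js t)) (js (t+1)) with hG
  have hw : ∀ t : Fin (m+1),
      outW A d sig (js t) + inW B c sig (js t) (js (t+1)) -
        (if sig (js t) = none then lam else 0) ≤ F t - G t := by
    intro t; exact hArc (js t) (js (t+1)) (harc t)
  have hGF : ∀ t : Fin (m+1), F (t+1) ≤ G t := fun t => hMid (js t) (js (t+1))
  have hFsum : ∑ t : Fin (m+1), F (t+1) = ∑ t, F t :=
    Fintype.sum_equiv (Equiv.addRight 1) _ _ (fun t => rfl)
  have hsum1 : ∑ t : Fin (m+1), (F t - G t) ≤ 0 := by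
    rw [Finset.sum_sub_distrib]
    have : ∑ t : Fin (m+1), F (t+1) ≤ ∑ t : Fin (m+1), G t :=
      Finset.sum_le_sum (fun t _ => hGF t)
    rw [hFsum] at this
    linarith
  have hsum2 : (0:ℝ) ≤ ∑ t : Fin (m+1), (F t - G t) :=
    le_trans hcon (Finset.sum_le_sum (fun t _ => hw t))
  have hGeq : ∀ t : Fin (m+1), G t = F (t+1) := by
    have hzero : ∑ t : Fin (m+1), (G t - F (t+1)) = 0 := by
      rw [Finset.sum_sub_distrib, hFsum]
      have := le_antisymm hsum1 hsum2
      rw [Finset.sum_sub_distrib] at this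
      linarith [this]
    intro t
    have := (Finset.sum_eq_zero_iff_of_nonneg
      (fun t _ => by have := hGF t; simp only [sub_nonneg]; exact this)).mp hzero t
      (mem_univ t)
    have h2 := this
    linarith [h2]
  have hdecs : ∀ t : Fin (m+1), s (js (t+1)) < s (js t) := by
    intro t
    apply hTight (js t) (js (t+1))
    have := hGeq t
    rw [hG, hF] at this
    exact this
  have hsum3 : ∑ t : Fin (m+1), ((s (js t) : ℤ) - (s (js (t+1)) : ℤ)) = 0 := by
    rw [Finset.sum_sub_distrib]
    have : ∑ t : Fin (m+1), (s (js (t+1)) : ℤ) = ∑ t : Fin (m+1), (s (js t) : ℤ) :=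
      Fintype.sum_equiv (Equiv.addRight 1) _ _ (fun t => rfl)
    rw [this, sub_self]
  have hsum4 : (m+1 : ℤ) ≤ ∑ t : Fin (m+1), ((s (js t) : ℤ) - (s (js (t+1)) : ℤ)) := by
    calc (m+1 : ℤ) = ∑ _t : Fin (m+1), (1:ℤ) := by simp
    _ ≤ _ := Finset.sum_le_sum (fun t _ => by have := hdecs t; omega)
  omega

/-- Key step: from a bounded coordinate and a valid option, find a successor
that is bounded and satisfies the sub-fixed-point inequality for the limit. -/
lemma key_some (j : Fin n) (hj : BddBelow (Set.range fun k => yit A B c d lam hB hc hV k j))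
    (i : Fin p) (hi : A i j ≠ ⊥) :
    ∃ j', B i j' ≠ ⊥ ∧ BddBelow (Set.range fun k => yit A B c d lam hB hc hV k j') ∧
      (⨅ k, yit A B c d lam hB hc hV k j) ≤ -(WithBot.unbotD 0 (A i j)) +
        (WithBot.unbotD 0 (B i j') + ⨅ k, yit A B c d lam hB hc hV k j') := by
  classical
  set Y := yit A B c d lam hB hc hV with hYdef
  by_contra hcon
  push_neg at hcon
  set Yj := ⨅ k, Y k j with hYj
  have hK : ∀ j', ∃ K : ℕ, ∀ k, K ≤ k → j' ∈ SBf B i →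
      -(WithBot.unbotD 0 (A i j)) + (WithBot.unbotD 0 (B i j') + Y k j') < Yj := by
    intro j'
    by_cases hmem : j' ∈ SBf B i
    · have hBij' : B i j' ≠ ⊥ := mem_SBf.mp hmem
      by_cases hbb : BddBelow (Set.range fun k => Y k j')
      · have hlt := hcon j' hBij' hbb
        have h2 : (⨅ k, Y k j') < Yj + WithBot.unbotD 0 (A i j) - WithBot.unbotD 0 (B i j') := by
          linarith
        obtain ⟨k0, hk0⟩ := exists_lt_of_ciInf_lt h2
        refine ⟨k0, fun k hk _ => ?_⟩
        have := yit_antitone A B c d lam hB hc hV hk j'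
        rw [← hYdef] at this
        linarith
      · obtain ⟨y0, ⟨k0, rfl⟩, hy0⟩ := (not_bddBelow_iff.mp hbb)
          (Yj + WithBot.unbotD 0 (A i j) - WithBot.unbotD 0 (B i j'))
        refine ⟨k0, fun k hk _ => ?_⟩
        have := yit_antitone A B c d lam hB hc hV hk j'
        rw [← hYdef] at this
        linarith
    · exact ⟨0, fun k _ hmem' => absurd hmem' hmem⟩
  choose K hKs using hK
  set KK := univ.sup K with hKK
  have h1 : Yj ≤ Y (KK + 1) j := ciInf_le hj (KK + 1)
  have h2 := yit_le_oval A B c d lam hB hc hV KK j (mem_VOf_some.mpr hi)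
  rw [← hYdef, oval_some] at h2
  have h3 : (SBf B i).sup' (hB i) (fun j' => WithBot.unbotD 0 (B i j') + Y KK j') <
      Yj + WithBot.unbotD 0 (A i j) := by
    rw [Finset.sup'_lt_iff]
    intro j' hj'
    have := hKs j' KK (Finset.le_sup (mem_univ j')) hj'
    linarith
  linarith

lemma key_none (j : Fin n) (hj : BddBelow (Set.range fun k => yit A B c d lam hB hc hV k j))
    (hd : d j ≠ ⊥) :
    ∃ j', c j' ≠ ⊥ ∧ BddBelow (Set.range fun k => yit A B c d lam hB hc hV k j') ∧
      (⨅ k, yit A B c d lam hB hc hV k j) ≤ -lam - (WithBot.unbotD 0 (d j)) +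
        (WithBot.unbotD 0 (c j') + ⨅ k, yit A B c d lam hB hc hV k j') := by
  classical
  set Y := yit A B c d lam hB hc hV with hYdef
  by_contra hcon
  push_neg at hcon
  set Yj := ⨅ k, Y k j with hYj
  have hK : ∀ j', ∃ K : ℕ, ∀ k, K ≤ k → j' ∈ Scf c →
      -lam - (WithBot.unbotD 0 (d j)) + (WithBot.unbotD 0 (c j') + Y k j') < Yj := by
    intro j'
    by_cases hmem : j' ∈ Scf c
    · have hcj' : c j' ≠ ⊥ := mem_Scf.mp hmem
      by_cases hbb : BddBelow (Set.range fun k => Y k j')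
      · have hlt := hcon j' hcj' hbb
        have h2 : (⨅ k, Y k j') < Yj + lam + WithBot.unbotD 0 (d j) - WithBot.unbotD 0 (c j') := by
          linarith
        obtain ⟨k0, hk0⟩ := exists_lt_of_ciInf_lt h2
        refine ⟨k0, fun k hk _ => ?_⟩
        have := yit_antitone A B c d lam hB hc hV hk j'
        rw [← hYdef] at this
        linarith
      · obtain ⟨y0, ⟨k0, rfl⟩, hy0⟩ := (not_bddBelow_iff.mp hbb)
          (Yj + lam + WithBot.unbotD 0 (d j) - WithBot.unbotD 0 (c j'))
        refine ⟨k0, fun k hk _ => ?_⟩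
        have := yit_antitone A B c d lam hB hc hV hk j'
        rw [← hYdef] at this
        linarith
    · exact ⟨0, fun k _ hmem' => absurd hmem' hmem⟩
  choose K hKs using hK
  set KK := univ.sup K with hKK
  have h1 : Yj ≤ Y (KK + 1) j := ciInf_le hj (KK + 1)
  have h2 := yit_le_oval A B c d lam hB hc hV KK j (mem_VOf_none.mpr hd)
  rw [← hYdef, oval_none] at h2
  have h3 : (Scf c).sup' hc (fun j' => WithBot.unbotD 0 (c j') + Y KK j') <
      Yj + lam + WithBot.unbotD 0 (d j) := by
    rw [Finset.sup'_lt_iff]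
    intro j' hj'
    have := hKs j' KK (Finset.le_sup (mem_univ j')) hj'
    linarith
  linarith

/-- If some coordinate of the value iteration is bounded below, we get a
nontrivial sub-fixed point in `Rmax`. -/
lemma Hbdd (j₁ : Fin n)
    (hj₁ : BddBelow (Set.range fun k => yit A B c d lam hB hc hV k j₁)) :
    ∃ x : Fin n → Rmax, x j₁ ≠ ⊥ ∧ (∀ i, tdot (A i) x ≤ tdot (B i) x) ∧
      tdot d x ≤ ((-lam : ℝ) : Rmax) + tdot c x := by
  classical
  set Y := yit A B c d lam hB hc hV with hYdef
  set x : Fin n → Rmax := fun j =>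
    if BddBelow (Set.range fun k => Y k j) then (((⨅ k, Y k j : ℝ)) : Rmax) else ⊥
    with hx
  have hxval : ∀ j, BddBelow (Set.range fun k => Y k j) → x j = ((⨅ k, Y k j : ℝ) : Rmax) :=
    fun j h => by rw [hx]; simp only [if_pos h]
  have hxbot : ∀ j, ¬ BddBelow (Set.range fun k => Y k j) → x j = ⊥ :=
    fun j h => by rw [hx]; simp only [if_neg h]
  refine ⟨x, ?_, ?_, ?_⟩
  · rw [hxval j₁ hj₁]; exact WithBot.coe_ne_bot
  · intro i
    show (univ.sup fun j => A i j + x j) ≤ tdot (B i) x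
    apply Finset.sup_le
    intro j _
    by_cases hbb : BddBelow (Set.range fun k => Y k j)
    · by_cases hA : A i j = ⊥
      · rw [hA, WithBot.bot_add]; exact bot_le
      · obtain ⟨j', hB', hbb', hineq⟩ := key_some A B c d lam hB hc hV j hbb i hA
        rw [← hYdef] at hineq
        rw [hxval j hbb]
        obtain ⟨a, ha⟩ := WithBot.ne_bot_iff_exists.mp hA
        obtain ⟨b, hb⟩ := WithBot.ne_bot_iff_exists.mp hB'
        have haval : WithBot.unbotD 0 (A i j) = a := by rw [← ha]; rfl
        have hbval : WithBot.unbotD 0 (B i j') = b := by rw [← hb]; rfl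
        rw [haval, hbval] at hineq
        calc A i j + ((⨅ k, Y k j : ℝ) : Rmax)
            = ((a + ⨅ k, Y k j : ℝ) : Rmax) := by rw [← ha, ← WithBot.coe_add]
          _ ≤ ((b + ⨅ k, Y k j' : ℝ) : Rmax) := by
              rw [WithBot.coe_le_coe]; linarith
          _ = B i j' + x j' := by rw [← hb, hxval j' hbb', ← WithBot.coe_add]
          _ ≤ tdot (B i) x := le_tdot (B i) x j'
    · rw [hxbot j hbb, WithBot.add_bot]; exact bot_le
  · show (univ.sup fun j => d j + x j) ≤ ((-lam : ℝ) : Rmax) + tdot c x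
    apply Finset.sup_le
    intro j _
    by_cases hbb : BddBelow (Set.range fun k => Y k j)
    · by_cases hd : d j = ⊥
      · rw [hd, WithBot.bot_add]; exact bot_le
      · obtain ⟨j', hc', hbb', hineq⟩ := key_none A B c d lam hB hc hV j hbb hd
        rw [← hYdef] at hineq
        rw [hxval j hbb]
        obtain ⟨dd, hdd⟩ := WithBot.ne_bot_iff_exists.mp hd
        obtain ⟨cc, hcc⟩ := WithBot.ne_bot_iff_exists.mp hc'
        have hdval : WithBot.unbotD 0 (d j) = dd := by rw [← hdd]; rfl
        have hcval : WithBot.unbotD 0 (c j') = cc := by rw [← hcc]; rfl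
        rw [hdval, hcval] at hineq
        calc d j + ((⨅ k, Y k j : ℝ) : Rmax)
            = ((dd + ⨅ k, Y k j : ℝ) : Rmax) := by rw [← hdd, ← WithBot.coe_add]
          _ ≤ ((-lam + (cc + ⨅ k, Y k j') : ℝ) : Rmax) := by
              rw [WithBot.coe_le_coe]; linarith
          _ = ((-lam : ℝ) : Rmax) + (c j' + x j') := by
              rw [← hcc, hxval j' hbb', ← WithBot.coe_add, ← WithBot.coe_add]
          _ ≤ ((-lam : ℝ) : Rmax) + tdot c x :=
              add_le_add le_rfl (le_tdot c x j')
    · rw [hxbot j hbb, WithBot.add_bot]; exact bot_le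

end Hard

theorem hard_dir {p n : ℕ} (A B : Fin p → Fin n → Rmax) (c d : Fin n → Rmax)
    (hnd1 : ∀ j : Fin n, d j ≠ ⊥ ∨ ∃ i : Fin p, A i j ≠ ⊥)
    (hnd2 : ∃ j : Fin n, c j ≠ ⊥)
    (hnd3 : ∀ i : Fin p, ∃ j : Fin n, B i j ≠ ⊥)
    (hdeg : ∀ x : Fin n → Rmax, (∀ i, tdot (A i) x ≤ tdot (B i) x) →
      tdot c x = ⊥ → tdot d x = ⊥ → x = ⊥)
    (hL : ∀ x : Fin n → Rmax,
        (∀ i, tdot (A i) x ≤ tdot (B i) x) → tdot c x ≤ tdot d x) :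
    ∃ sig : Fin n → Option (Fin p),
      (∀ j : Fin n, (∀ i : Fin p, sig j = some i → A i j ≠ ⊥) ∧
        (sig j = none → d j ≠ ⊥)) ∧
      ∀ (m : ℕ) (js : Fin (m + 1) → Fin n),
        (∀ t : Fin (m + 1), arcOK B c sig (js t) (js (t + 1))) →
        (∑ t : Fin (m + 1),
            (outW A d sig (js t) + inW B c sig (js t) (js (t + 1)))) ≤ 0 ∧
        ((∑ t : Fin (m + 1),
            (outW A d sig (js t) + inW B c sig (js t) (js (t + 1)))) = 0 →
          ∃ t : Fin (m + 1), sig (js t) = none) := by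
  classical
  obtain ⟨j₀, hj₀⟩ := hnd2
  by_contra hR
  -- every valid strategy has a bad circuit
  have hR' : ∀ sig : Fin n → Option (Fin p),
      (∀ j : Fin n, (∀ i : Fin p, sig j = some i → A i j ≠ ⊥) ∧
        (sig j = none → d j ≠ ⊥)) →
      ∃ (m : ℕ) (js : Fin (m+1) → Fin n),
        (∀ t : Fin (m+1), arcOK B c sig (js t) (js (t+1))) ∧
        ((∑ t : Fin (m+1),
            (outW A d sig (js t) + inW B c sig (js t) (js (t + 1)))) ≤ 0 →
          (∑ t : Fin (m+1),
            (outW A d sig (js t) + inW B c sig (js t) (js (t + 1)))) = 0 ∧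
          ∀ t : Fin (m+1), sig (js t) ≠ none) := by
    intro sig hval
    by_contra hcon
    push_neg at hcon
    exact hR ⟨sig, hval, fun m js harc => hcon m js harc⟩
  -- choose a bad circuit for every strategy (junk if invalid)
  have hchoice : ∀ sig : Fin n → Option (Fin p),
      ∃ (m : ℕ) (js : Fin (m+1) → Fin n),
        (∀ j : Fin n, (∀ i : Fin p, sig j = some i → A i j ≠ ⊥) ∧
          (sig j = none → d j ≠ ⊥)) →
        ((∀ t : Fin (m+1), arcOK B c sig (js t) (js (t+1))) ∧
        ((∑ t : Fin (m+1),
            (outW A d sig (js t) + inW B c sig (js t) (js (t + 1)))) ≤ 0 →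
          (∑ t : Fin (m+1),
            (outW A d sig (js t) + inW B c sig (js t) (js (t + 1)))) = 0 ∧
          ∀ t : Fin (m+1), sig (js t) ≠ none)) := by
    intro sig
    by_cases hv : ∀ j : Fin n, (∀ i : Fin p, sig j = some i → A i j ≠ ⊥) ∧
        (sig j = none → d j ≠ ⊥)
    · obtain ⟨m, js, h1, h2⟩ := hR' sig hv
      exact ⟨m, js, fun _ => ⟨h1, h2⟩⟩
    · exact ⟨0, fun _ => j₀, fun h => absurd h hv⟩
  choose mc jsc hch using hchoice
  set W0 : (Fin n → Option (Fin p)) → ℝ := fun sig =>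
    ∑ t : Fin (mc sig + 1),
      (outW A d sig (jsc sig t) + inW B c sig (jsc sig t) (jsc sig (t+1)))
    with hW0
  set eps : (Fin n → Option (Fin p)) → ℝ := fun sig =>
    if 0 < W0 sig then W0 sig / (mc sig + 2) else 1 with heps
  have hepseq : ∀ sig, eps sig = if 0 < W0 sig then W0 sig / (mc sig + 2) else 1 :=
    fun _ => rfl
  have hW0eq : ∀ sig, W0 sig = ∑ t : Fin (mc sig + 1),
      (outW A d sig (jsc sig t) + inW B c sig (jsc sig t) (jsc sig (t+1))) :=
    fun _ => rfl
  have hne : (univ : Finset (Fin n → Option (Fin p))).Nonempty :=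
    ⟨fun _ => none, mem_univ _⟩
  set lam : ℝ := min 1 (univ.inf' hne eps) with hlam_def
  have hlam : 0 < lam := by
    apply lt_min one_pos
    rw [Finset.lt_inf'_iff]
    intro sig _
    rw [hepseq sig]
    split_ifs with h
    · apply div_pos h (by positivity)
    · exact one_pos
  have hlamle : ∀ sig, lam ≤ eps sig := fun sig =>
    le_trans (min_le_right _ _) (Finset.inf'_le _ (mem_univ sig))
  -- all valid strategies have a circuit of nonnegative λ-weight
  have Hcir : ∀ sig : Fin n → Option (Fin p),
      (∀ j : Fin n, (∀ i : Fin p, sig j = some i → A i j ≠ ⊥) ∧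
        (sig j = none → d j ≠ ⊥)) →
      ∃ (m : ℕ) (js : Fin (m+1) → Fin n),
        (∀ t : Fin (m+1), arcOK B c sig (js t) (js (t+1))) ∧
        0 ≤ ∑ t : Fin (m+1),
            (outW A d sig (js t) + inW B c sig (js t) (js (t + 1)) -
              if sig (js t) = none then lam else 0) := by
    intro sig hv
    refine ⟨mc sig, jsc sig, (hch sig hv).1, ?_⟩
    have hsplit : ∑ t : Fin (mc sig + 1),
        (outW A d sig (jsc sig t) + inW B c sig (jsc sig t) (jsc sig (t+1)) -
          if sig (jsc sig t) = none then lam else 0) =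
        W0 sig - ∑ t : Fin (mc sig + 1),
          (if sig (jsc sig t) = none then lam else 0) := by
      rw [Finset.sum_sub_distrib, hW0eq]
    rcases le_or_gt (W0 sig) 0 with h0 | h0
    · obtain ⟨heq, hnone⟩ := (hch sig hv).2 (by rw [← hW0eq]; exact h0)
      have hz : ∑ t : Fin (mc sig + 1),
          (if sig (jsc sig t) = none then lam else (0:ℝ)) = 0 :=
        Finset.sum_eq_zero (fun t _ => if_neg (hnone t))
      rw [hsplit, hz, hW0eq, heq]
      norm_num
    · have hub : ∑ t : Fin (mc sig + 1),
          (if sig (jsc sig t) = none then lam else (0:ℝ)) ≤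
          ((mc sig : ℝ) + 1) * lam := by
        calc ∑ t : Fin (mc sig + 1), (if sig (jsc sig t) = none then lam else (0:ℝ))
            ≤ ∑ _t : Fin (mc sig + 1), lam :=
              Finset.sum_le_sum (fun t _ => by
                split_ifs
                · exact le_rfl
                · exact le_of_lt hlam)
          _ = ((mc sig : ℝ) + 1) * lam := by
              rw [Finset.sum_const, card_univ, Fintype.card_fin, nsmul_eq_mul]
              push_cast
              ring
      have hle2 : lam ≤ W0 sig / ((mc sig : ℝ) + 2) := by
        have := hlamle sig
        rw [hepseq sig, if_pos h0] at this
        exact this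
      have hpos2 : (0:ℝ) < (mc sig : ℝ) + 2 := by positivity
      have h3 : ((mc sig : ℝ) + 1) * lam < W0 sig := by
        have h4 : ((mc sig : ℝ) + 1) * lam ≤
            ((mc sig : ℝ) + 1) * (W0 sig / ((mc sig : ℝ) + 2)) :=
          mul_le_mul_of_nonneg_left hle2 (by positivity)
        have h5 : ((mc sig : ℝ) + 1) * (W0 sig / ((mc sig : ℝ) + 2)) < W0 sig := by
          rw [div_eq_mul_inv]
          rw [show ((mc sig:ℝ)+1) * (W0 sig * ((mc sig:ℝ)+2)⁻¹) =
            W0 sig * (((mc sig:ℝ)+1) * ((mc sig:ℝ)+2)⁻¹) by ring]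
          have h6 : ((mc sig:ℝ)+1) * ((mc sig:ℝ)+2)⁻¹ < 1 := by
            rw [mul_inv_lt_iff₀ hpos2]
            linarith
          nlinarith [h0, h6]
        linarith
      rw [hsplit]
      linarith
  -- nonemptiness data for the dynamic operator
  have hB' : ∀ i, (SBf B i).Nonempty := fun i => by
    obtain ⟨j, hj⟩ := hnd3 i
    exact ⟨j, mem_SBf.mpr hj⟩
  have hc' : (Scf c).Nonempty := ⟨j₀, mem_Scf.mpr hj₀⟩
  have hV' : ∀ j, (VOf A d j).Nonempty := fun j => by
    rcases hnd1 j with h | ⟨i, hi⟩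
    · exact ⟨none, mem_VOf_none.mpr h⟩
    · exact ⟨some i, mem_VOf_some.mpr hi⟩
  -- dichotomy on the value iteration
  by_cases hcase : ∀ j, ∃ k, yit A B c d lam hB' hc' hV' k j < 0
  · obtain ⟨sig, hval, hneg⟩ := Hdiv A B c d lam hB' hc' hV' hcase
    obtain ⟨m, js, harc, hge⟩ := Hcir sig hval
    exact absurd (hneg m js harc) (not_lt.mpr hge)
  · push_neg at hcase
    obtain ⟨j₁, hj₁⟩ := hcase
    have hbb : BddBelow (Set.range fun k => yit A B c d lam hB' hc' hV' k j₁) :=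
      ⟨0, by rintro y ⟨k, rfl⟩; exact hj₁ k⟩
    obtain ⟨x, hx1, P1, P2⟩ := Hbdd A B c d lam hB' hc' hV' j₁ hbb
    have hcd := hL x P1
    by_cases hbot : tdot c x = ⊥
    · have hdbot : tdot d x = ⊥ := by
        have h7 := P2
        rw [hbot, WithBot.add_bot] at h7
        exact le_bot_iff.mp h7
      exact hx1 (congrFun (hdeg x P1 hbot hdbot) j₁)
    · obtain ⟨r, hr⟩ := WithBot.ne_bot_iff_exists.mp hbot
      have h1 : tdot d x ≤ ((-lam + r : ℝ) : Rmax) := by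
        rw [WithBot.coe_add]
        exact le_trans P2 (add_le_add le_rfl (le_of_eq hr.symm))
      have h2 : ((r:ℝ) : Rmax) ≤ ((-lam + r : ℝ) : Rmax) := by
        calc ((r:ℝ) : Rmax) = tdot c x := hr
          _ ≤ tdot d x := hcd
          _ ≤ _ := h1
      rw [WithBot.coe_le_coe] at h2
      linarith

/-- tropical Farkas lemma: under the nondegeneracy and
degeneracy assumptions, the implication `Ax ≤ Bx ⟹ cx ≤ dx` holds iff there is
a strategy `σ` for Player Min (`σ j = some i` selects row `i ∈ [p]`,
`σ j = none` selects the extra row node `p+1`) such that in `G_0^σ` every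
circuit (closed sequence of column nodes `js`) has nonpositive weight, and
every circuit of zero weight passes through row node `p+1`. -/
theorem statement16 {p n : ℕ} (A B : Fin p → Fin n → Rmax) (c d : Fin n → Rmax)
    (hnd1 : ∀ j : Fin n, d j ≠ ⊥ ∨ ∃ i : Fin p, A i j ≠ ⊥)
    (hnd2 : ∃ j : Fin n, c j ≠ ⊥)
    (hnd3 : ∀ i : Fin p, ∃ j : Fin n, B i j ≠ ⊥)
    (hdeg : ∀ x : Fin n → Rmax, (∀ i, tdot (A i) x ≤ tdot (B i) x) →
      tdot c x = ⊥ → tdot d x = ⊥ → x = ⊥) :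
    (∀ x : Fin n → Rmax,
        (∀ i, tdot (A i) x ≤ tdot (B i) x) → tdot c x ≤ tdot d x) ↔
    ∃ sig : Fin n → Option (Fin p),
      (∀ j : Fin n, (∀ i : Fin p, sig j = some i → A i j ≠ ⊥) ∧
        (sig j = none → d j ≠ ⊥)) ∧
      ∀ (m : ℕ) (js : Fin (m + 1) → Fin n),
        (∀ t : Fin (m + 1), arcOK B c sig (js t) (js (t + 1))) →
        (∑ t : Fin (m + 1),
            (outW A d sig (js t) + inW B c sig (js t) (js (t + 1)))) ≤ 0 ∧
        ((∑ t : Fin (m + 1),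
            (outW A d sig (js t) + inW B c sig (js t) (js (t + 1)))) = 0 →
          ∃ t : Fin (m + 1), sig (js t) = none) := by
  constructor
  · intro hL
    exact hard_dir A B c d hnd1 hnd2 hnd3 hdeg hL
  · rintro ⟨sig, hval, hcirc⟩ x hAB
    exact easy_dir A B c d sig hval hcirc x hAB
end

section
/- With the same setup, the implication Ax ≤ Bx ⟹ cx ≤ dx does NOT hold if, and only if, there exists a strategy π for Player Max (a map from row nodes [p+1] to column nodes selecting for each row node one outgoing arc), a column node j ∈ [n], and λ > 0 such that χ_j(g_λ^π) ≥ 0, where χ_j denotes the j-th entry of the cycle time vector lim_{k→∞} g^k(0)/k of the one-player operator g_λ^π. -/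
open Finset

/-- The one-player operator `g_λ^π` obtained from `g_λ` by fixing the strategy
`π` of Player Max (`π (some i)` is the column chosen at row `i`, `π none` the
column chosen at the extra row node `p+1`). -/
noncomputable def gPi {p n : ℕ} (A B : Fin p → Fin n → Rmax) (c d : Fin n → Rmax)
    (pi : Option (Fin p) → Fin n) (lam : ℝ) (x : Fin n → Rmax) :
    Fin n → Rmax := fun j =>
  if d j = ⊥ then
    (if hS : (univ.filter fun i => A i j ≠ ⊥).Nonempty then
      (univ.filter fun i => A i j ≠ ⊥).inf' hS fun i =>
        tdiv (B i (pi (some i)) + x (pi (some i))) (A i j)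
    else ⊥)
  else
    (if hS : (univ.filter fun i => A i j ≠ ⊥).Nonempty then
      min ((univ.filter fun i => A i j ≠ ⊥).inf' hS fun i =>
            tdiv (B i (pi (some i)) + x (pi (some i))) (A i j))
          (tdiv (c (pi none) + x (pi none)) ((lam : Rmax) + d j))
    else tdiv (c (pi none) + x (pi none)) ((lam : Rmax) + d j))


namespace MPG

variable {p n : ℕ}

/-- A path step structure: arcs out of node `j` are labelled by elements of `E j`;
the target of arc `a` is `π a` (independent of the source). -/
def isPath (π : Option (Fin p) → Fin n) (E : Fin n → Finset (Option (Fin p))) :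
    Fin n → List (Option (Fin p)) → Prop
  | _, [] => True
  | j, a :: l => a ∈ E j ∧ isPath π E (π a) l

def pend (π : Option (Fin p) → Fin n) : Fin n → List (Option (Fin p)) → Fin n
  | j, [] => j
  | _, a :: l => pend π (π a) l

def pw (π : Option (Fin p) → Fin n) (W : Fin n → Option (Fin p) → ℝ) :
    Fin n → List (Option (Fin p)) → ℝ
  | _, [] => 0
  | j, a :: l => W j a + pw π W (π a) l

def Reach (π : Option (Fin p) → Fin n) (E : Fin n → Finset (Option (Fin p)))
    (j s : Fin n) : Prop := ∃ l, isPath π E j l ∧ pend π j l = s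

noncomputable def useq (π : Option (Fin p) → Fin n) (E : Fin n → Finset (Option (Fin p)))
    (W : Fin n → Option (Fin p) → ℝ) (hE : ∀ j, (E j).Nonempty) : ℕ → Fin n → ℝ
  | 0, _ => 0
  | k+1, j => (E j).inf' (hE j) fun a => W j a + useq π E W hE k (π a)

variable {π : Option (Fin p) → Fin n} {E : Fin n → Finset (Option (Fin p))}
  {W : Fin n → Option (Fin p) → ℝ} {hE : ∀ j, (E j).Nonempty}

@[simp] lemma isPath_nil {j} : isPath π E j [] := trivial
@[simp] lemma isPath_cons {j a l} : isPath π E j (a :: l) ↔ a ∈ E j ∧ isPath π E (π a) l :=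
  Iff.rfl
@[simp] lemma pend_nil {j} : pend π j [] = j := rfl
@[simp] lemma pend_cons {j a l} : pend π j (a :: l) = pend π (π a) l := rfl
@[simp] lemma pw_nil {j} : pw π W j [] = 0 := rfl
@[simp] lemma pw_cons {j a l} : pw π W j (a :: l) = W j a + pw π W (π a) l := rfl

lemma pend_append (l1 l2 : List (Option (Fin p))) (j : Fin n) :
    pend π j (l1 ++ l2) = pend π (pend π j l1) l2 := by
  induction l1 generalizing j with
  | nil => rfl
  | cons a l ih => simp [ih]

lemma pw_append (l1 l2 : List (Option (Fin p))) (j : Fin n) :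
    pw π W j (l1 ++ l2) = pw π W j l1 + pw π W (pend π j l1) l2 := by
  induction l1 generalizing j with
  | nil => simp
  | cons a l ih => simp [ih, add_assoc]

lemma isPath_append {l1 l2 : List (Option (Fin p))} {j : Fin n} :
    isPath π E j (l1 ++ l2) ↔ isPath π E j l1 ∧ isPath π E (pend π j l1) l2 := by
  induction l1 generalizing j with
  | nil => simp
  | cons a l ih => simp [ih, and_assoc]

lemma Reach.refl (j : Fin n) : Reach π E j j := ⟨[], trivial, rfl⟩

lemma Reach.trans_path {j s : Fin n} {l : List (Option (Fin p))}
    (h : Reach π E j s) (hl : isPath π E s l) : Reach π E j (pend π s l) := by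
  obtain ⟨l0, hl0, rfl⟩ := h
  exact ⟨l0 ++ l, isPath_append.2 ⟨hl0, hl⟩, by rw [pend_append]⟩

lemma Reach.snoc {j s : Fin n} {a : Option (Fin p)} (h : Reach π E j s) (ha : a ∈ E s) :
    Reach π E j (π a) :=
  h.trans_path (l := [a]) ⟨ha, trivial⟩

lemma useq_le_path {l : List (Option (Fin p))} {j : Fin n} (hl : isPath π E j l) (m : ℕ) :
    useq π E W hE (l.length + m) j ≤ pw π W j l + useq π E W hE m (pend π j l) := by
  induction l generalizing j with
  | nil => simp [useq]
  | cons a l ih =>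
    have h1 : useq π E W hE (l.length + m + 1) j
        ≤ W j a + useq π E W hE (l.length + m) (π a) :=
      Finset.inf'_le _ hl.1
    have h2 := ih hl.2
    have hlen : (a :: l).length + m = l.length + m + 1 := by simp; omega
    calc useq π E W hE ((a :: l).length + m) j
        = useq π E W hE (l.length + m + 1) j := by rw [hlen]
      _ ≤ W j a + useq π E W hE (l.length + m) (π a) := h1
      _ ≤ W j a + (pw π W (π a) l + useq π E W hE m (pend π (π a) l)) := by linarith
      _ = pw π W j (a :: l) + useq π E W hE m (pend π j (a :: l)) := by
          simp [add_assoc]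

lemma exists_min_path (k : ℕ) (j : Fin n) :
    ∃ l, isPath π E j l ∧ l.length = k ∧ pw π W j l = useq π E W hE k j := by
  induction k generalizing j with
  | zero => exact ⟨[], trivial, rfl, rfl⟩
  | succ k ih =>
    obtain ⟨a, ha, hmin⟩ := Finset.exists_mem_eq_inf' (hE j)
      (fun a => W j a + useq π E W hE k (π a))
    obtain ⟨l, hl, hlen, hpw⟩ := ih (π a)
    exact ⟨a :: l, ⟨ha, hl⟩, by simp [hlen], by simp [hpw, hmin, useq]⟩

lemma abs_pw_le (Wm : ℝ) (hWm : ∀ j a, |W j a| ≤ Wm) (l : List (Option (Fin p))) (j : Fin n) :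
    |pw π W j l| ≤ l.length * Wm := by
  induction l generalizing j with
  | nil => simp
  | cons a l ih =>
    have h1 := hWm j a
    have h2 := ih (π a)
    calc |pw π W j (a :: l)| ≤ |W j a| + |pw π W (π a) l| := by
          simpa using abs_add_le (W j a) (pw π W (π a) l)
      _ ≤ Wm + l.length * Wm := by linarith
      _ = (a :: l).length * Wm := by simp [add_mul, add_comm]

/-- Pigeonhole: a path of length `n+1` contains a nonempty cycle of length `≤ n`
based at a node reachable from the start. -/
lemma exists_cycle_split {l : List (Option (Fin p))} {j : Fin n}
    (hl : isPath π E j l) (hlen : l.length = n + 1) :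
    ∃ l1 l2 l3 : List (Option (Fin p)), l = l1 ++ l2 ++ l3 ∧ l2 ≠ [] ∧ l2.length ≤ n ∧
      pend π j (l1 ++ l2) = pend π j l1 := by
  have key : ∀ a b : ℕ, a < b → b ≤ n → pend π j (l.take a) = pend π j (l.take b) →
      ∃ l1 l2 l3 : List (Option (Fin p)), l = l1 ++ l2 ++ l3 ∧ l2 ≠ [] ∧ l2.length ≤ n ∧
        pend π j (l1 ++ l2) = pend π j l1 := by
    intro a b hab hbn heq
    have htake : l.take a ++ (l.drop a).take (b - a) = l.take b := by
      rw [← List.take_add]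
      congr 1
      omega
    have hlen2 : ((l.drop a).take (b - a)).length = b - a := by
      rw [List.length_take, List.length_drop, hlen]
      omega
    refine ⟨l.take a, (l.drop a).take (b - a), l.drop b, ?_, ?_, ?_, ?_⟩
    · rw [htake, List.take_append_drop]
    · intro h
      rw [h] at hlen2
      simp at hlen2
      omega
    · rw [hlen2]; omega
    · rw [htake, heq.symm]
  have hcard : Fintype.card (Fin n) < Fintype.card (Fin (n + 1)) := by simp
  obtain ⟨a, b, hab, heq⟩ := Fintype.exists_ne_map_eq_of_card_lt
    (fun m : Fin (n + 1) => pend π j (l.take (m : ℕ))) hcard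
  have hab' : (a : ℕ) ≠ (b : ℕ) := fun h => hab (Fin.ext h)
  rcases Nat.lt_or_ge (a : ℕ) (b : ℕ) with h | h
  · exact key a b h (Nat.lt_succ_iff.mp b.isLt) heq
  · exact key b a (by omega) (Nat.lt_succ_iff.mp a.isLt) heq.symm


noncomputable def pot (π : Option (Fin p) → Fin n) (E : Fin n → Finset (Option (Fin p)))
    (W : Fin n → Option (Fin p) → ℝ) (hE : ∀ j, (E j).Nonempty) (s : Fin n) : ℝ :=
  (Finset.range (n+1)).inf' ⟨0, by simp⟩ fun k => useq π E W hE k s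

lemma pot_le {k : ℕ} (hk : k ≤ n) (s : Fin n) :
    pot π E W hE s ≤ useq π E W hE k s :=
  Finset.inf'_le _ (by simp [Nat.lt_succ_iff, hk])

/-- The set of mean weights of (short) cycles based at nodes reachable from `j`. -/
def CycMeans (π : Option (Fin p) → Fin n) (E : Fin n → Finset (Option (Fin p)))
    (W : Fin n → Option (Fin p) → ℝ) (j : Fin n) : Set ℝ :=
  {x | ∃ s l, Reach π E j s ∧ isPath π E s l ∧ pend π s l = s ∧ l ≠ [] ∧ l.length ≤ n ∧
    x = pw π W s l / l.length}

lemma pot_spec {j : Fin n}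
    (hcyc : ∀ s l, Reach π E j s → isPath π E s l → pend π s l = s → l ≠ [] →
      l.length ≤ n → 0 ≤ pw π W s l) :
    ∀ s, Reach π E j s → ∀ a ∈ E s, pot π E W hE s ≤ W s a + pot π E W hE (π a) := by
  intro s hs a ha
  obtain ⟨k, hk, hkeq⟩ := Finset.exists_mem_eq_inf' (⟨0, by simp⟩ : (Finset.range (n+1)).Nonempty)
    (fun k => useq π E W hE k (π a))
  rw [show pot π E W hE (π a) = useq π E W hE k (π a) from hkeq]
  have hkn : k ≤ n := by simpa [Nat.lt_succ_iff] using Finset.mem_range.1 hk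
  rcases Nat.lt_or_ge k n with hlt | hge
  · have h1 : useq π E W hE (k+1) s ≤ W s a + useq π E W hE k (π a) :=
      Finset.inf'_le _ ha
    exact le_trans (pot_le (by omega) s) h1
  · have hk' : k = n := le_antisymm hkn hge
    rw [hk']
    obtain ⟨l, hl, hlen, hpw⟩ := exists_min_path (W := W) (hE := hE) n (π a)
    have hfull : isPath π E s (a :: l) := ⟨ha, hl⟩
    obtain ⟨l1, l2, l3, hsplit, hne2, hl2n, hpend⟩ := exists_cycle_split hfull (by simp [hlen])
    set v := pend π s l1 with hv
    have hp12 : isPath π E s (l1 ++ l2) ∧ isPath π E (pend π s (l1 ++ l2)) l3 := by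
      rw [← isPath_append, ← hsplit]; exact hfull
    have hp1 : isPath π E s l1 := (isPath_append.1 hp12.1).1
    have hp2 : isPath π E v l2 := (isPath_append.1 hp12.1).2
    have hpendv : pend π v l2 = v := by
      have := hpend
      rwa [pend_append] at this
    have hp3 : isPath π E v l3 := by
      have := hp12.2
      rwa [hpend] at this
    have hreachv : Reach π E j v := by
      have := hs.trans_path hp1
      exact this
    have hcycle : 0 ≤ pw π W v l2 := hcyc v l2 hreachv hp2 hpendv hne2 hl2n
    have hp13 : isPath π E s (l1 ++ l3) := isPath_append.2 ⟨hp1, hp3⟩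
    have hlen13 : (l1 ++ l3).length ≤ n := by
      have h0 : (a :: l).length = l1.length + l2.length + l3.length := by
        rw [hsplit]; simp; omega
      have h1 : l.length = n := hlen
      have h2 : 1 ≤ l2.length := List.length_pos_iff.2 hne2
      simp only [List.length_cons, h1] at h0
      simp only [List.length_append]
      omega
    have hshort : pot π E W hE s ≤ pw π W s (l1 ++ l3) := by
      have h4 := useq_le_path (W := W) (hE := hE) hp13 0
      simp only [Nat.add_zero, useq, add_zero] at h4
      exact le_trans (pot_le hlen13 s) h4
    have hdecomp : W s a + useq π E W hE n (π a)
        = pw π W s l1 + pw π W v l2 + pw π W v l3 := by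
      have : W s a + pw π W (π a) l = pw π W s (a :: l) := by simp
      rw [← hpw, this, hsplit, pw_append, pw_append, hpend, ← hv]
      try ring
    have hpw13 : pw π W s (l1 ++ l3) = pw π W s l1 + pw π W v l3 := by
      rw [pw_append, ← hv]
    rw [hdecomp]
    rw [hpw13] at hshort
    linarith

lemma useq_lower {j : Fin n}
    (hcyc : ∀ s l, Reach π E j s → isPath π E s l → pend π s l = s → l ≠ [] →
      l.length ≤ n → 0 ≤ pw π W s l)
    (M : ℝ) (hM : ∀ s, pot π E W hE s ≤ M) :
    ∀ k s, Reach π E j s → pot π E W hE s - M ≤ useq π E W hE k s := by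
  intro k
  induction k with
  | zero =>
    intro s _
    have := hM s
    simp only [useq]
    linarith
  | succ k ih =>
    intro s hs
    simp only [useq]
    apply Finset.le_inf'
    intro a ha
    have h1 := pot_spec (hE := hE) hcyc s hs a ha
    have h2 := ih (π a) (hs.snoc ha)
    linarith

lemma useq_le_cycle {s : Fin n} {l : List (Option (Fin p))}
    (hl : isPath π E s l) (hc : pend π s l = s) :
    ∀ t m : ℕ, useq π E W hE (t * l.length + m) s
      ≤ (t : ℝ) * pw π W s l + useq π E W hE m s := by
  intro t
  induction t with
  | zero => intro m; simp
  | succ t ih =>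
    intro m
    have heq : (t+1) * l.length + m = l.length + (t * l.length + m) := by ring
    rw [heq]
    have h1 := useq_le_path (W := W) (hE := hE) hl (t * l.length + m)
    rw [hc] at h1
    have h2 := ih m
    push_cast
    linarith

lemma cycMeans_nonempty (hE' : ∀ j, (E j).Nonempty) (j : Fin n) :
    (CycMeans π E W j).Nonempty := by
  obtain ⟨l, hl, hlen, -⟩ := exists_min_path (W := W) (hE := hE') (n+1) j
  obtain ⟨l1, l2, l3, hsplit, hne2, hl2n, hpend⟩ := exists_cycle_split hl hlen
  have hp12 : isPath π E j (l1 ++ l2) ∧ isPath π E (pend π j (l1 ++ l2)) l3 := by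
    rw [← isPath_append, ← hsplit]; exact hl
  have hp1 : isPath π E j l1 := (isPath_append.1 hp12.1).1
  have hp2 : isPath π E (pend π j l1) l2 := (isPath_append.1 hp12.1).2
  have hpendv : pend π (pend π j l1) l2 = pend π j l1 := by
    have := hpend; rwa [pend_append] at this
  exact ⟨pw π W (pend π j l1) l2 / l2.length, pend π j l1, l2,
    ⟨l1, hp1, rfl⟩, hp2, hpendv, hne2, hl2n, rfl⟩

lemma cycMeans_finite (j : Fin n) : (CycMeans π E W j).Finite := by
  have hsub : CycMeans π E W j ⊆
      (fun q : Fin n × List (Option (Fin p)) => pw π W q.1 q.2 / q.2.length) ''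
        ((Set.univ : Set (Fin n)) ×ˢ {l | l.length ≤ n}) := by
    rintro x ⟨s, l, -, -, -, -, hlen, rfl⟩
    exact ⟨(s, l), ⟨Set.mem_univ _, hlen⟩, rfl⟩
  exact (((Set.finite_univ).prod (List.finite_length_le _ n)).image _).subset hsub

lemma inf'_sub_const {α : Type*} (s : Finset α) (h : s.Nonempty) (f : α → ℝ) (c : ℝ) :
    s.inf' h (fun a => f a - c) = s.inf' h f - c := by
  apply le_antisymm
  · obtain ⟨a, ha, hval⟩ := Finset.exists_mem_eq_inf' h f
    calc s.inf' h (fun a => f a - c) ≤ f a - c := Finset.inf'_le _ ha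
      _ = s.inf' h f - c := by rw [← hval]
  · apply Finset.le_inf'
    intro a ha
    have h2 : s.inf' h f ≤ f a := Finset.inf'_le f ha
    linarith

lemma useq_shift (μ : ℝ) :
    ∀ (k : ℕ) (s : Fin n), useq π E (fun s a => W s a - μ) hE k s
      = useq π E W hE k s - k * μ := by
  intro k
  induction k with
  | zero => intro s; simp [useq]
  | succ k ih =>
    intro s
    simp only [useq]
    rw [show ((E s).inf' (hE s) fun a => (fun s a => W s a - μ) s a
        + useq π E (fun s a => W s a - μ) hE k (π a))
        = (E s).inf' (hE s) fun a => (W s a + useq π E W hE k (π a)) - (k+1 : ℕ) * μ by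
      apply Finset.inf'_congr (hE s) rfl
      intro a _
      rw [ih (π a)]
      push_cast
      ring]
    rw [inf'_sub_const]

lemma pw_shift (μ : ℝ) :
    ∀ (l : List (Option (Fin p))) (s : Fin n),
      pw π (fun s a => W s a - μ) s l = pw π W s l - l.length * μ := by
  intro l
  induction l with
  | nil => intro s; simp
  | cons a l ih =>
    intro s
    simp only [pw_cons, ih (π a), List.length_cons]
    push_cast
    ring

theorem useq_tendsto (j : Fin n) :
    ∃ μ ∈ CycMeans π E W j, (∀ x ∈ CycMeans π E W j, μ ≤ x) ∧
      Filter.Tendsto (fun k : ℕ => useq π E W hE k j / k) Filter.atTop (nhds μ) := by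
  obtain ⟨μ, hμmem, hμmin⟩ := Set.exists_min_image _ id (cycMeans_finite j)
    (cycMeans_nonempty hE j)
  refine ⟨μ, hμmem, hμmin, ?_⟩
  have hneu : (univ : Finset (Fin n × Option (Fin p))).Nonempty := ⟨(j, none), mem_univ _⟩
  obtain ⟨Wm, hWm⟩ : ∃ Wm : ℝ, ∀ s a, |W s a| ≤ Wm :=
    ⟨univ.sup' hneu (fun q : Fin n × Option (Fin p) => |W q.1 q.2|),
      fun s a => Finset.le_sup' (fun q : Fin n × Option (Fin p) => |W q.1 q.2|)
        (mem_univ (s, a))⟩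
  have hWm0 : 0 ≤ Wm := le_trans (abs_nonneg _) (hWm j none)
  -- Lower bound
  have hcyc' : ∀ s l, Reach π E j s → isPath π E s l → pend π s l = s → l ≠ [] →
      l.length ≤ n → 0 ≤ pw π (fun s a => W s a - μ) s l := by
    intro s l h1 h2 h3 h4 h5
    have hmem : pw π W s l / l.length ∈ CycMeans π E W j := ⟨s, l, h1, h2, h3, h4, h5, rfl⟩
    have hle := hμmin _ hmem
    simp only [id] at hle
    have hlpos : 0 < (l.length : ℝ) := by
      have := List.length_pos_iff.2 h4
      exact_mod_cast this
    rw [pw_shift]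
    rw [le_div_iff₀ hlpos] at hle
    nlinarith
  obtain ⟨M, hM⟩ : ∃ M : ℝ, ∀ s, pot π E (fun s a => W s a - μ) hE s ≤ M :=
    ⟨univ.sup' ⟨j, mem_univ j⟩ (fun s => pot π E (fun s a => W s a - μ) hE s),
      fun s => Finset.le_sup' (fun s => pot π E (fun s a => W s a - μ) hE s) (mem_univ s)⟩
  set C1 := pot π E (fun s a => W s a - μ) hE j - M with hC1def
  have hlow : ∀ k : ℕ, (k : ℝ) * μ + C1 ≤ useq π E W hE k j := by
    intro k
    have h1 := useq_lower (hE := hE) hcyc' M hM k j (Reach.refl j)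
    rw [useq_shift] at h1
    linarith
  -- Upper bound
  obtain ⟨s0, l0, hreach, hl0, hpend0, hne0, hlen0, hμeq⟩ := hμmem
  obtain ⟨lp, hlp, hlppend⟩ := hreach
  have hl0pos : 0 < l0.length := List.length_pos_iff.2 hne0
  have hl0posR : 0 < (l0.length : ℝ) := by exact_mod_cast hl0pos
  have hcycw : pw π W s0 l0 = l0.length * μ := by
    rw [hμeq]
    field_simp
  set L := lp.length with hLdef
  set C2 := |pw π W j lp| + ((L : ℝ) + l0.length) * |μ| + l0.length * Wm with hC2def
  have hup : ∀ k : ℕ, L ≤ k → useq π E W hE k j ≤ (k : ℝ) * μ + C2 := by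
    intro k hk
    set t := (k - L) / l0.length with htdef
    set q := (k - L) % l0.length with hqdef
    have hq : q < l0.length := Nat.mod_lt _ hl0pos
    have hksplit : k = L + (t * l0.length + q) := by
      have h0 := Nat.div_add_mod (k - L) l0.length
      rw [← htdef, ← hqdef, Nat.mul_comm] at h0
      omega
    have h1 : useq π E W hE k j ≤ pw π W j lp + useq π E W hE (t * l0.length + q) s0 := by
      have h := useq_le_path (W := W) (hE := hE) hlp (t * l0.length + q)
      rw [hlppend] at h
      rw [show k = lp.length + (t * l0.length + q) from hksplit]
      exact h
    have h2 := useq_le_cycle (W := W) (hE := hE) hl0 hpend0 t q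
    have h3 : useq π E W hE q s0 ≤ (q : ℝ) * Wm := by
      have htk : isPath π E s0 (l0.take q) := by
        have : isPath π E s0 (l0.take q ++ l0.drop q) := by
          rw [List.take_append_drop]; exact hl0
        exact (isPath_append.1 this).1
      have hlentk : (l0.take q).length = q := by
        simp [List.length_take]
        omega
      have h4 := useq_le_path (W := W) (hE := hE) htk 0
      simp only [hlentk, Nat.add_zero, useq, add_zero] at h4
      have h5 := abs_pw_le (π := π) Wm hWm (l0.take q) s0
      rw [hlentk] at h5
      have h6 : pw π W s0 (l0.take q) ≤ (q : ℝ) * Wm := le_trans (le_abs_self _) h5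
      linarith
    have htl : (t : ℝ) * l0.length = (k : ℝ) - L - q := by
      have : (k : ℝ) = L + (t * l0.length + q) := by exact_mod_cast congrArg (Nat.cast (R := ℝ)) hksplit
      linarith
    have hcalc : (t : ℝ) * pw π W s0 l0 = ((k : ℝ) - L - q) * μ := by
      rw [hcycw, ← mul_assoc, htl]
    have habs : ((k : ℝ) - L - q) * μ ≤ (k : ℝ) * μ + ((L : ℝ) + q) * |μ| := by
      have h7 : -|μ| ≤ μ := neg_abs_le μ
      have h8 : μ ≤ |μ| := le_abs_self μ
      have h9 : (0 : ℝ) ≤ (L : ℝ) + q := by positivity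
      nlinarith
    have hqle : (q : ℝ) ≤ (l0.length : ℝ) := by exact_mod_cast hq.le
    have h10 : ((L : ℝ) + q) * |μ| ≤ ((L : ℝ) + l0.length) * |μ| := by
      have := abs_nonneg μ
      nlinarith
    have h11 : (q : ℝ) * Wm ≤ (l0.length : ℝ) * Wm := by nlinarith
    have h12 : pw π W j lp ≤ |pw π W j lp| := le_abs_self _
    rw [hC2def]
    linarith [h1, h2, h3]
  -- Squeeze
  have hlim1 : Filter.Tendsto (fun k : ℕ => μ + C1 / k) Filter.atTop (nhds μ) := by
    have := tendsto_const_nhds (x := μ) (f := Filter.atTop (α := ℕ))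
    simpa using this.add (tendsto_const_div_atTop_nhds_zero_nat C1)
  have hlim2 : Filter.Tendsto (fun k : ℕ => μ + C2 / k) Filter.atTop (nhds μ) := by
    have := tendsto_const_nhds (x := μ) (f := Filter.atTop (α := ℕ))
    simpa using this.add (tendsto_const_div_atTop_nhds_zero_nat C2)
  apply tendsto_of_tendsto_of_tendsto_of_le_of_le' hlim1 hlim2
  · filter_upwards [Filter.eventually_ge_atTop 1] with k hk
    have hkpos : 0 < (k : ℝ) := by exact_mod_cast hk
    have := hlow k
    rw [show μ + C1 / k = ((k : ℝ) * μ + C1) / k by field_simp]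
    exact (div_le_div_iff_of_pos_right hkpos).2 this
  · filter_upwards [Filter.eventually_ge_atTop (max 1 L)] with k hk
    have hk1 : 1 ≤ k := le_trans (le_max_left _ _) hk
    have hkL : L ≤ k := le_trans (le_max_right _ _) hk
    have hkpos : 0 < (k : ℝ) := by exact_mod_cast hk1
    have := hup k hkL
    rw [show μ + C2 / k = ((k : ℝ) * μ + C2) / k by field_simp]
    exact (div_le_div_iff_of_pos_right hkpos).2 this


/-- Chaining a potential inequality along a path. -/
lemma chain_potential {j : Fin n} {xr : Fin n → ℝ}
    (hx : ∀ s, Reach π E j s → ∀ a ∈ E s, xr s ≤ W s a + xr (π a)) :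
    ∀ l s, Reach π E j s → isPath π E s l → xr s ≤ pw π W s l + xr (pend π s l) := by
  intro l
  induction l with
  | nil => intro s _ _; simp
  | cons a l ih =>
    intro s hs hl
    have h1 := hx s hs a hl.1
    have h2 := ih (π a) (hs.snoc hl.1) hl.2
    simp only [pw_cons, pend_cons]
    linarith

end MPG

open MPG

section Inst

variable {p n : ℕ} (A B : Fin p → Fin n → Rmax) (c d : Fin n → Rmax)
  (pi : Option (Fin p) → Fin n) (lam : ℝ)

/-- Arc labels out of node `j` for the one-player graph of `gPi`. -/
noncomputable def Earc (j : Fin n) : Finset (Option (Fin p)) :=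
  ((univ.filter fun i => A i j ≠ ⊥).image some) ∪ (if d j ≠ ⊥ then {none} else ∅)

/-- Real weight of arc `a` out of node `j`. -/
noncomputable def Wwt (j : Fin n) (a : Option (Fin p)) : ℝ :=
  match a with
  | some i => WithBot.unbotD 0 (B i (pi (some i))) - WithBot.unbotD 0 (A i j)
  | none => WithBot.unbotD 0 (c (pi none)) - lam - WithBot.unbotD 0 (d j)

/-- The tropical value of arc `a` out of node `j` applied to `x`. -/
noncomputable def aterm (x : Fin n → Rmax) (j : Fin n) (a : Option (Fin p)) : Rmax :=
  match a with
  | some i => tdiv (B i (pi (some i)) + x (pi (some i))) (A i j)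
  | none => tdiv (c (pi none) + x (pi none)) ((lam : Rmax) + d j)

lemma mem_Earc_some {j : Fin n} {i : Fin p} :
    some i ∈ Earc A d j ↔ A i j ≠ ⊥ := by
  by_cases h : d j = ⊥ <;> simp [Earc, h]

lemma mem_Earc_none {j : Fin n} : (none : Option (Fin p)) ∈ Earc A d j ↔ d j ≠ ⊥ := by
  by_cases h : d j = ⊥ <;> simp [Earc, h]

lemma Earc_nonempty (hnd1 : ∀ j : Fin n, d j ≠ ⊥ ∨ ∃ i : Fin p, A i j ≠ ⊥) (j : Fin n) :
    (Earc A d j).Nonempty := by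
  rcases hnd1 j with h | ⟨i, h⟩
  · exact ⟨none, (mem_Earc_none A d).2 h⟩
  · exact ⟨some i, (mem_Earc_some A d).2 h⟩

lemma gPi_eq (hE : ∀ j, (Earc A d (p := p) j).Nonempty) (x : Fin n → Rmax) (j : Fin n) :
    gPi A B c d pi lam x j = (Earc A d j).inf' (hE j) (aterm A B c d pi lam x j) := by
  by_cases hd : d j = ⊥
  · have hEj : Earc A d (p := p) j = (univ.filter fun i => A i j ≠ ⊥).image some := by
      simp [Earc, hd]
    have hS : (univ.filter fun i => A i j ≠ ⊥).Nonempty := by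
      obtain ⟨a, ha⟩ := hE j
      rw [hEj] at ha
      obtain ⟨i, hi, rfl⟩ := Finset.mem_image.1 ha
      exact ⟨i, hi⟩
    rw [gPi]
    rw [if_pos hd, dif_pos hS]
    rw [Finset.inf'_congr (H := hE j) hEj (fun a _ => rfl), Finset.inf'_image]
    rfl
  · by_cases hS : (univ.filter fun i => A i j ≠ ⊥).Nonempty
    · have hEj : Earc A d (p := p) j
          = ((univ.filter fun i => A i j ≠ ⊥).image some) ∪ {none} := by
        simp [Earc, hd]
      have h1 : ((univ.filter fun i => A i j ≠ ⊥).image some).Nonempty :=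
        hS.image some
      rw [gPi, if_neg hd, dif_pos hS]
      rw [Finset.inf'_congr (H := hE j) hEj (fun a _ => rfl),
        Finset.inf'_union h1 (Finset.singleton_nonempty _),
        Finset.inf'_image, Finset.inf'_singleton]
      rfl
    · have hempty : (univ.filter fun i => A i j ≠ ⊥).image some = ∅ := by
        rw [Finset.image_eq_empty]
        exact Finset.not_nonempty_iff_eq_empty.1 hS
      have hEj : Earc A d (p := p) j = {none} := by
        simp [Earc, hd, hempty]
      rw [gPi, if_neg hd, dif_neg hS]
      rw [Finset.inf'_congr (H := hE j) hEj (fun a _ => rfl), Finset.inf'_singleton]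
      rfl

lemma tdiv_coe (u v : ℝ) : tdiv (u : Rmax) (v : Rmax) = ((u - v : ℝ) : Rmax) := by
  simp [tdiv]

lemma aterm_real (hB : ∀ i : Fin p, B i (pi (some i)) ≠ ⊥) (hc : c (pi none) ≠ ⊥)
    (x : Fin n → Rmax) (y : Fin n → ℝ) {j : Fin n} {a : Option (Fin p)}
    (ha : a ∈ Earc A d j) (hx : x (pi a) = ((y (pi a) : ℝ) : Rmax)) :
    aterm A B c d pi lam x j a = ((Wwt A B c d pi lam j a + y (pi a) : ℝ) : Rmax) := by
  cases a with
  | some i =>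
    have hA : A i j ≠ ⊥ := (mem_Earc_some A d).1 ha
    obtain ⟨rB, hrB⟩ := WithBot.ne_bot_iff_exists.1 (hB i)
    obtain ⟨rA, hrA⟩ := WithBot.ne_bot_iff_exists.1 hA
    simp only [aterm, Wwt, hx, ← hrB, ← hrA, ← WithBot.coe_add, tdiv_coe,
      WithBot.unbotD_coe]
    congr 1
    ring
  | none =>
    have hd : d j ≠ ⊥ := (mem_Earc_none A d).1 ha
    obtain ⟨rc, hrc⟩ := WithBot.ne_bot_iff_exists.1 hc
    obtain ⟨rd, hrd⟩ := WithBot.ne_bot_iff_exists.1 hd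
    simp only [aterm, Wwt, hx, ← hrc, ← hrd, ← WithBot.coe_add, tdiv_coe,
      WithBot.unbotD_coe]
    congr 1
    ring

lemma coe_inf' {α : Type*} (s : Finset α) (h : s.Nonempty) (f : α → ℝ) :
    ((s.inf' h f : ℝ) : Rmax) = s.inf' h (fun a => ((f a : ℝ) : Rmax)) := by
  apply le_antisymm
  · apply Finset.le_inf'
    intro a ha
    exact_mod_cast Finset.inf'_le f ha
  · obtain ⟨a, ha, hval⟩ := Finset.exists_mem_eq_inf' h f
    calc s.inf' h (fun a => ((f a : ℝ) : Rmax)) ≤ ((f a : ℝ) : Rmax) :=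
          Finset.inf'_le _ ha
      _ = ((s.inf' h f : ℝ) : Rmax) := by rw [← hval]

lemma iter_eq_useq (hE : ∀ j, (Earc A d (p := p) j).Nonempty)
    (hB : ∀ i : Fin p, B i (pi (some i)) ≠ ⊥) (hc : c (pi none) ≠ ⊥) :
    ∀ k : ℕ, (gPi A B c d pi lam)^[k] (fun _ => (0 : Rmax))
      = fun j => ((useq pi (Earc A d) (Wwt A B c d pi lam) hE k j : ℝ) : Rmax) := by
  intro k
  induction k with
  | zero =>
    funext j
    simp [MPG.useq]
  | succ k ih =>
    rw [Function.iterate_succ_apply', ih]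
    funext j
    rw [gPi_eq A B c d pi lam hE]
    rw [Finset.inf'_congr (H := hE j) rfl
      (fun a ha => aterm_real A B c d pi lam hB hc _ _ ha rfl)]
    rw [← coe_inf']
    rfl

lemma le_tdot_s17 (f x : Fin n → Rmax) (k : Fin n) : f k + x k ≤ tdot f x := by
  unfold tdot
  exact Finset.le_sup (f := fun j => f j + x j) (mem_univ k)

lemma tdot_le {f x : Fin n → Rmax} {y : Rmax} (h : ∀ k, f k + x k ≤ y) : tdot f x ≤ y := by
  unfold tdot
  exact Finset.sup_le fun k _ => h k

lemma tdot_ne_bot {f x : Fin n → Rmax} (h : tdot f x ≠ ⊥) :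
    ∃ k, f k ≠ ⊥ ∧ x k ≠ ⊥ ∧ tdot f x = f k + x k := by
  have h0 : ¬ ∀ b ∈ (univ : Finset (Fin n)), f b + x b = ⊥ := by
    intro hall
    exact h (by simpa [tdot, Finset.sup_eq_bot_iff] using hall)
  push_neg at h0
  obtain ⟨k0, _, hk0⟩ := h0
  have hne : (univ : Finset (Fin n)).Nonempty := ⟨k0, mem_univ _⟩
  obtain ⟨k, _, hval⟩ := Finset.exists_mem_eq_sup' hne (fun k => f k + x k)
  have hval' : tdot f x = f k + x k := by
    rw [tdot, ← Finset.sup'_eq_sup hne]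
    exact hval
  have hkb : f k + x k ≠ ⊥ := by rw [← hval']; exact h
  refine ⟨k, ?_, ?_, hval'⟩ <;> intro hb <;> exact hkb (by simp [hb])

lemma tdot_eq_restrict {f x : Fin n → Rmax}
    (hS : ((univ : Finset (Fin n)).filter fun k => f k ≠ ⊥).Nonempty) :
    tdot f x = ((univ : Finset (Fin n)).filter fun k => f k ≠ ⊥).sup' hS
      (fun k => f k + x k) := by
  unfold tdot
  apply le_antisymm
  · apply Finset.sup_le
    intro k _
    by_cases h : f k = ⊥
    · rw [h, WithBot.bot_add]
      exact bot_le
    · exact Finset.le_sup' (fun k => f k + x k) (by simp [h])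
  · exact Finset.sup'_le _ _ fun k _ =>
      Finset.le_sup (f := fun j => f j + x j) (mem_univ k)

end Inst

/-- under the same setup, the implication `Ax ≤ Bx ⟹ cx ≤ dx`
fails iff there exist a strategy `π` for Player Max, a column node `j` and a
scalar `λ > 0` such that the `j`-th entry of the cycle time vector
`lim_k g_λ^π{}^k(0)/k` is nonnegative. -/
theorem statement17 {p n : ℕ} (A B : Fin p → Fin n → Rmax) (c d : Fin n → Rmax)
    (hnd1 : ∀ j : Fin n, d j ≠ ⊥ ∨ ∃ i : Fin p, A i j ≠ ⊥)
    (hnd2 : ∃ j : Fin n, c j ≠ ⊥)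
    (hnd3 : ∀ i : Fin p, ∃ j : Fin n, B i j ≠ ⊥)
    (hdeg : ∀ x : Fin n → Rmax, (∀ i, tdot (A i) x ≤ tdot (B i) x) →
      tdot c x = ⊥ → tdot d x = ⊥ → x = ⊥) :
    (¬ ∀ x : Fin n → Rmax,
        (∀ i, tdot (A i) x ≤ tdot (B i) x) → tdot c x ≤ tdot d x) ↔
    ∃ pi : Option (Fin p) → Fin n,
      (∀ i : Fin p, B i (pi (some i)) ≠ ⊥) ∧ c (pi none) ≠ ⊥ ∧
      ∃ (j : Fin n) (lam : ℝ), 0 < lam ∧ ∃ chi : ℝ, 0 ≤ chi ∧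
        Filter.Tendsto
          (fun k : ℕ =>
            WithBot.unbotD 0 (((gPi A B c d pi lam)^[k] (fun _ => (0 : Rmax))) j) / (k : ℝ))
          Filter.atTop (nhds chi) := by
  have hE := Earc_nonempty A d hnd1
  constructor
  · -- the implication fails ⇒ nonnegative cycle-time for some strategy
    intro hnot
    push_neg at hnot
    obtain ⟨x, hA, hcd⟩ := hnot
    have hcx : tdot c x ≠ ⊥ := ne_bot_of_gt hcd
    -- construct the strategy: argmax choices for Player Max
    have hπBex : ∀ i : Fin p, ∃ k, B i k ≠ ⊥ ∧ tdot (B i) x = B i k + x k := by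
      intro i
      have hS : ((univ : Finset (Fin n)).filter fun k => B i k ≠ ⊥).Nonempty := by
        obtain ⟨k, hk⟩ := hnd3 i
        exact ⟨k, by simp [hk]⟩
      obtain ⟨k, hk, hval⟩ := Finset.exists_mem_eq_sup' hS (fun k => B i k + x k)
      refine ⟨k, (Finset.mem_filter.1 hk).2, ?_⟩
      rw [tdot_eq_restrict hS]
      exact hval
    have hπcex : ∃ k, c k ≠ ⊥ ∧ tdot c x = c k + x k := by
      have hS : ((univ : Finset (Fin n)).filter fun k => c k ≠ ⊥).Nonempty := by
        obtain ⟨k, hk⟩ := hnd2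
        exact ⟨k, by simp [hk]⟩
      obtain ⟨k, hk, hval⟩ := Finset.exists_mem_eq_sup' hS (fun k => c k + x k)
      refine ⟨k, (Finset.mem_filter.1 hk).2, ?_⟩
      rw [tdot_eq_restrict hS]
      exact hval
    choose πB hπB1 hπB2 using hπBex
    obtain ⟨kc, hkc1, hkc2⟩ := hπcex
    obtain ⟨π, hπB, hπc⟩ : ∃ π : Option (Fin p) → Fin n,
        (∀ i, B i (π (some i)) ≠ ⊥ ∧ tdot (B i) x = B i (π (some i)) + x (π (some i))) ∧
        (c (π none) ≠ ⊥ ∧ tdot c x = c (π none) + x (π none)) :=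
      ⟨fun a => a.elim kc πB, fun i => ⟨hπB1 i, hπB2 i⟩, hkc1, hkc2⟩
    have hBpi : ∀ i : Fin p, B i (π (some i)) ≠ ⊥ := fun i => (hπB i).1
    have hcpi : c (π none) ≠ ⊥ := hπc.1
    -- construct lambda
    obtain ⟨lam, hlam0, hlamle⟩ : ∃ lam : ℝ, 0 < lam ∧ ∀ jj : Fin n, d jj ≠ ⊥ → x jj ≠ ⊥ →
        (lam : Rmax) + d jj + x jj ≤ tdot c x := by
      by_cases hdx : tdot d x = ⊥
      · refine ⟨1, one_pos, ?_⟩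
        intro jj hdj hxj
        have h1 : d jj + x jj ≤ ⊥ := hdx ▸ le_tdot_s17 d x jj
        have h2 : d jj + x jj = ⊥ := le_bot_iff.1 h1
        rw [WithBot.add_eq_bot] at h2
        tauto
      · obtain ⟨rd, hrd⟩ := WithBot.ne_bot_iff_exists.1 hdx
        obtain ⟨rc, hrc⟩ := WithBot.ne_bot_iff_exists.1 hcx
        have hlt : rd < rc := by
          rw [← hrc, ← hrd] at hcd
          exact_mod_cast hcd
        refine ⟨rc - rd, by linarith, ?_⟩
        intro jj hdj hxj
        have h1 : d jj + x jj ≤ tdot d x := le_tdot_s17 d x jj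
        calc ((rc - rd : ℝ) : Rmax) + d jj + x jj
            ≤ ((rc - rd : ℝ) : Rmax) + tdot d x := by
              rw [add_assoc]; exact add_le_add_right h1 _
          _ = ((rc : ℝ) : Rmax) := by
              rw [← hrd, ← WithBot.coe_add]
              norm_num
          _ = tdot c x := hrc
    -- key inequality: x ≤ per-arc terms
    have hkey : ∀ jj a, a ∈ Earc A d jj → x jj ≤ aterm A B c d π lam x jj a := by
      intro jj a ha
      by_cases hxj : x jj = ⊥
      · rw [hxj]; exact bot_le
      obtain ⟨rx, hrx⟩ := WithBot.ne_bot_iff_exists.1 hxj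
      cases a with
      | some i =>
        have hAij : A i jj ≠ ⊥ := (mem_Earc_some A d).1 ha
        obtain ⟨rA, hrA⟩ := WithBot.ne_bot_iff_exists.1 hAij
        have h1 : A i jj + x jj ≤ B i (π (some i)) + x (π (some i)) := by
          calc A i jj + x jj ≤ tdot (A i) x := le_tdot_s17 _ _ _
            _ ≤ tdot (B i) x := hA i
            _ = B i (π (some i)) + x (π (some i)) := (hπB i).2
        have h2 : B i (π (some i)) + x (π (some i)) ≠ ⊥ := by
          intro hb
          rw [hb, le_bot_iff, ← hrA, ← hrx, ← WithBot.coe_add] at h1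
          exact WithBot.coe_ne_bot h1
        obtain ⟨rS, hrS⟩ := WithBot.ne_bot_iff_exists.1 h2
        show x jj ≤ tdiv (B i (π (some i)) + x (π (some i))) (A i jj)
        rw [← hrS, ← hrA, ← hrx, ← WithBot.coe_add] at h1
        have h3 : rA + rx ≤ rS := by exact_mod_cast h1
        rw [← hrS, ← hrA, tdiv_coe, ← hrx]
        exact_mod_cast (by linarith : rx ≤ rS - rA)
      | none =>
        have hdj : d jj ≠ ⊥ := (mem_Earc_none A d).1 ha
        obtain ⟨rd2, hrd2⟩ := WithBot.ne_bot_iff_exists.1 hdj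
        obtain ⟨rc, hrc⟩ := WithBot.ne_bot_iff_exists.1 hcx
        have h1 : (lam : Rmax) + d jj + x jj ≤ tdot c x := hlamle jj hdj hxj
        rw [← hrc, ← hrd2, ← hrx, ← WithBot.coe_add, ← WithBot.coe_add] at h1
        have h3 : lam + rd2 + rx ≤ rc := by exact_mod_cast h1
        show x jj ≤ tdiv (c (π none) + x (π none)) ((lam : Rmax) + d jj)
        rw [show c (π none) + x (π none) = tdot c x from hπc.2.symm, ← hrc, ← hrd2,
          ← WithBot.coe_add, tdiv_coe, ← hrx]
        exact_mod_cast (by linarith : rx ≤ rc - (lam + rd2))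
    -- support analysis
    obtain ⟨j0, hj0c, hj0x, -⟩ := tdot_ne_bot hcx
    have hstep : ∀ s a, x s ≠ ⊥ → a ∈ Earc A d s →
        x (π a) ≠ ⊥ ∧ WithBot.unbotD 0 (x s) ≤ Wwt A B c d π lam s a + WithBot.unbotD 0 (x (π a)) := by
      intro s a hxs ha
      have h1 := hkey s a ha
      by_cases hxpa : x (π a) = ⊥
      · exfalso
        have hbot : aterm A B c d π lam x s a = ⊥ := by
          cases a <;> simp [aterm, hxpa, tdiv]
        rw [hbot, le_bot_iff] at h1
        exact hxs h1
      · refine ⟨hxpa, ?_⟩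
        have hcoe : x (π a) = ((WithBot.unbotD 0 (x (π a)) : ℝ) : Rmax) := by
          obtain ⟨r, hr⟩ := WithBot.ne_bot_iff_exists.1 hxpa
          rw [← hr, WithBot.unbotD_coe]
        have h2 := aterm_real A B c d π lam hBpi hcpi x
          (fun t => WithBot.unbotD 0 (x t)) ha hcoe
        rw [h2] at h1
        obtain ⟨rs, hrs⟩ := WithBot.ne_bot_iff_exists.1 hxs
        rw [← hrs] at h1
        rw [← hrs, WithBot.unbotD_coe]
        exact_mod_cast h1
    have hchain : ∀ (l : List (Option (Fin p))) (s : Fin n), x s ≠ ⊥ →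
        isPath π (Earc A d) s l →
        x (pend π s l) ≠ ⊥ ∧ WithBot.unbotD 0 (x s)
          ≤ pw π (Wwt A B c d π lam) s l + WithBot.unbotD 0 (x (pend π s l)) := by
      intro l
      induction l with
      | nil => intro s h _; exact ⟨h, by simp⟩
      | cons a l ih =>
        intro s hxs hl
        obtain ⟨h1, h2⟩ := hstep s a hxs hl.1
        obtain ⟨h3, h4⟩ := ih (π a) h1 hl.2
        refine ⟨h3, ?_⟩
        simp only [MPG.pw_cons, MPG.pend_cons]
        linarith
    have hcyc : ∀ s l, Reach π (Earc A d) j0 s → isPath π (Earc A d) s l →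
        pend π s l = s → l ≠ [] → l.length ≤ n →
        0 ≤ pw π (Wwt A B c d π lam) s l := by
      intro s l hr hl hp _ _
      obtain ⟨l0, hl0, hp0⟩ := hr
      have hxs : x s ≠ ⊥ := by
        have h5 := hchain l0 j0 hj0x hl0
        rw [hp0] at h5
        exact h5.1
      have h6 := hchain l s hxs hl
      rw [hp] at h6
      linarith [h6.2]
    obtain ⟨μ, hμmem, hμmin, htend⟩ :=
      useq_tendsto (π := π) (E := Earc A d) (W := Wwt A B c d π lam) (hE := hE) j0
    have hμ0 : 0 ≤ μ := by
      obtain ⟨s, l, hr, hl, hp, hne', hlen, hval⟩ := hμmem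
      have h0 := hcyc s l hr hl hp hne' hlen
      have hlpos : (0 : ℝ) < l.length := by exact_mod_cast List.length_pos_iff.2 hne'
      rw [hval]
      exact div_nonneg h0 hlpos.le
    refine ⟨π, hBpi, hcpi, j0, lam, hlam0, μ, hμ0, ?_⟩
    have hiter := iter_eq_useq A B c d π lam hE hBpi hcpi
    have hfun : (fun k : ℕ =>
        WithBot.unbotD 0 (((gPi A B c d π lam)^[k] fun _ => (0 : Rmax)) j0) / (k : ℝ))
        = fun k : ℕ => useq π (Earc A d) (Wwt A B c d π lam) hE k j0 / (k : ℝ) := by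
      funext k
      rw [hiter k]
      simp
    rw [hfun]
    exact htend
  · rintro ⟨π, hBpi, hcpi, j, lam, hlam0, chi, hchi, htend⟩
    intro hfa
    obtain ⟨μ, hμmem, hμmin, htend'⟩ :=
      useq_tendsto (π := π) (E := Earc A d) (W := Wwt A B c d π lam) (hE := hE) j
    have hiter := iter_eq_useq A B c d π lam hE hBpi hcpi
    have hfun : (fun k : ℕ =>
        WithBot.unbotD 0 (((gPi A B c d π lam)^[k] fun _ => (0 : Rmax)) j) / (k : ℝ))
        = fun k : ℕ => useq π (Earc A d) (Wwt A B c d π lam) hE k j / (k : ℝ) := by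
      funext k
      rw [hiter k]
      simp
    rw [hfun] at htend
    have hchimu : chi = μ := tendsto_nhds_unique htend htend'
    have hμ0 : 0 ≤ μ := hchimu ▸ hchi
    -- all short reachable cycles have nonnegative weight
    have hcyc : ∀ s l, Reach π (Earc A d) j s → isPath π (Earc A d) s l →
        pend π s l = s → l ≠ [] → l.length ≤ n →
        0 ≤ pw π (Wwt A B c d π lam) s l := by
      intro s l h1 h2 h3 h4 h5
      have hmean := hμmin _ ⟨s, l, h1, h2, h3, h4, h5, rfl⟩
      have hlpos : (0 : ℝ) < l.length := by exact_mod_cast List.length_pos_iff.2 h4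
      have h6 : 0 ≤ pw π (Wwt A B c d π lam) s l / l.length := le_trans hμ0 hmean
      have h7 := mul_nonneg h6 hlpos.le
      rwa [div_mul_cancel₀ _ (ne_of_gt hlpos)] at h7
    have hpot := pot_spec (π := π) (E := Earc A d) (W := Wwt A B c d π lam)
      (hE := hE) (j := j) hcyc
    classical
    set y := pot π (Earc A d) (Wwt A B c d π lam) hE with hydef
    set x : Fin n → Rmax :=
      fun s => if Reach π (Earc A d) j s then ((y s : ℝ) : Rmax) else ⊥ with hxdef
    have hxreach : ∀ s, Reach π (Earc A d) j s → x s = ((y s : ℝ) : Rmax) := by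
      intro s h
      rw [hxdef]
      simp only [if_pos h]
    have hkey : ∀ s a, a ∈ Earc A d s → x s ≤ aterm A B c d π lam x s a := by
      intro s a ha
      by_cases hr : Reach π (Earc A d) j s
      · have hrpa : Reach π (Earc A d) j (π a) := hr.snoc ha
        have h2 := aterm_real A B c d π lam hBpi hcpi x y ha (hxreach _ hrpa)
        rw [h2, hxreach s hr]
        exact WithBot.coe_le_coe.2 (hpot s hr a ha)
      · have : x s = ⊥ := by rw [hxdef]; simp only [if_neg hr]
        rw [this]
        exact bot_le
    have hxj : x j ≠ ⊥ := by
      rw [hxreach j (Reach.refl j)]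
      exact WithBot.coe_ne_bot
    -- Ax ≤ Bx
    have hAB : ∀ i, tdot (A i) x ≤ tdot (B i) x := by
      intro i
      apply tdot_le
      intro k
      by_cases hAik : A i k = ⊥
      · rw [hAik, WithBot.bot_add]; exact bot_le
      by_cases hxk : x k = ⊥
      · rw [hxk, WithBot.add_bot]; exact bot_le
      have h1 := hkey k (some i) ((mem_Earc_some A d).2 hAik)
      have hSb : B i (π (some i)) + x (π (some i)) ≠ ⊥ := by
        intro hb
        have hbot : aterm A B c d π lam x k (some i) = ⊥ := by simp [aterm, hb, tdiv]
        rw [hbot, le_bot_iff] at h1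
        exact hxk h1
      obtain ⟨rS, hrS⟩ := WithBot.ne_bot_iff_exists.1 hSb
      obtain ⟨rA, hrA⟩ := WithBot.ne_bot_iff_exists.1 hAik
      obtain ⟨rx, hrx⟩ := WithBot.ne_bot_iff_exists.1 hxk
      have h2 : rx ≤ rS - rA := by
        have h1' := h1
        rw [show aterm A B c d π lam x k (some i)
            = tdiv (B i (π (some i)) + x (π (some i))) (A i k) from rfl,
          ← hrS, ← hrA, tdiv_coe, ← hrx] at h1'
        exact_mod_cast h1'
      calc A i k + x k = ((rA + rx : ℝ) : Rmax) := by
            rw [← hrA, ← hrx, WithBot.coe_add]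
        _ ≤ ((rS : ℝ) : Rmax) := by exact_mod_cast (by linarith : rA + rx ≤ rS)
        _ = B i (π (some i)) + x (π (some i)) := hrS
        _ ≤ tdot (B i) x := le_tdot_s17 _ _ _
    have hcdle := hfa x hAB
    by_cases hdx : tdot d x = ⊥
    · have hcxbot : tdot c x = ⊥ := le_bot_iff.1 (hdx ▸ hcdle)
      have hzero := hdeg x hAB hcxbot hdx
      exact hxj (congrFun hzero j)
    · obtain ⟨kd, hkd1, hkd2, hkd3⟩ := tdot_ne_bot hdx
      have h1 := hkey kd none ((mem_Earc_none A d).2 hkd1)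
      have hCb : c (π none) + x (π none) ≠ ⊥ := by
        intro hb
        have hbot : aterm A B c d π lam x kd none = ⊥ := by simp [aterm, hb, tdiv]
        rw [hbot, le_bot_iff] at h1
        exact hkd2 h1
      obtain ⟨rC, hrC⟩ := WithBot.ne_bot_iff_exists.1 hCb
      obtain ⟨rd2, hrd2⟩ := WithBot.ne_bot_iff_exists.1 hkd1
      obtain ⟨rx, hrx⟩ := WithBot.ne_bot_iff_exists.1 hkd2
      have h2 : rx ≤ rC - (lam + rd2) := by
        have h1' := h1
        rw [show aterm A B c d π lam x kd none
            = tdiv (c (π none) + x (π none)) ((lam : Rmax) + d kd) from rfl,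
          ← hrC, ← hrd2, ← WithBot.coe_add, tdiv_coe, ← hrx] at h1'
        exact_mod_cast h1'
      have h4 : ((rC : ℝ) : Rmax) ≤ tdot c x := hrC ▸ le_tdot_s17 c x (π none)
      have h5 : tdot d x = ((rd2 + rx : ℝ) : Rmax) := by
        rw [hkd3, ← hrd2, ← hrx, WithBot.coe_add]
      have h6 : ((rC : ℝ) : Rmax) ≤ ((rd2 + rx : ℝ) : Rmax) :=
        le_trans h4 (le_of_le_of_eq hcdle h5)
      have h7 : rC ≤ rd2 + rx := by exact_mod_cast h6
      linarith
end

section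
/- Let a hypergraph on node set [n-1] have hyperedges E = {M_1, ..., M_p}, and let F be the p×(n-1) matrix over R_max with F_{ij} = 0 if j ∈ M_i and F_{ij} = -∞ otherwise, and let e be the p-vector of zeros. Then every minimal element of the tropical polyhedron { z ∈ R_max^{n-1} : Fz ≥ e } has all entries in {0, -∞}, and z ∈ {0, -∞}^{n-1} is a minimal element of this polyhedron if, and only if, the set { j : z_j ≠ -∞ } is a minimal transversal of the hypergraph. -/
open Finset

/-- The tropical polyhedron `{z : Fz ≥ e}` associated with a hypergraph with
hyperedges `M i`, where `F_{ij} = 0` if `j ∈ M i` and `⊥` otherwise, and `e`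
is the vector of zeros. -/
def hgPoly {p n : ℕ} (M : Fin p → Finset (Fin (n - 1))) :
    Set (Fin (n - 1) → Rmax) :=
  { z | ∀ i : Fin p,
      (0 : Rmax) ≤ univ.sup fun j => (if j ∈ M i then (0 : Rmax) else ⊥) + z j }


lemma le_sup_aux {m : ℕ} (S : Finset (Fin m)) (z : Fin m → Rmax) :
    (0 : Rmax) ≤ univ.sup (fun j => (if j ∈ S then (0 : Rmax) else ⊥) + z j) ↔
      ∃ j ∈ S, (0 : Rmax) ≤ z j := by
  rw [Finset.le_sup_iff (show (⊥ : Rmax) < 0 from WithBot.bot_lt_coe (0 : ℝ))]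
  constructor
  · rintro ⟨j, -, hj⟩
    by_cases h : j ∈ S
    · exact ⟨j, h, by simpa [h] using hj⟩
    · simp [h] at hj
  · rintro ⟨j, hj, h0⟩
    exact ⟨j, mem_univ j, by simpa [hj] using h0⟩

lemma mem_hgPoly_iff {p n : ℕ} (M : Fin p → Finset (Fin (n - 1)))
    (z : Fin (n - 1) → Rmax) :
    z ∈ hgPoly M ↔ ∀ i : Fin p, ∃ j ∈ M i, (0 : Rmax) ≤ z j := by
  simp only [hgPoly, Set.mem_setOf_eq, le_sup_aux]

/-- every minimal element of `{z : Fz ≥ e}` has entries in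
`{0, ⊥}`, and a `{0, ⊥}`-vector is a minimal element of this polyhedron iff
its support is a minimal transversal of the hypergraph. -/
theorem statement18 {p n : ℕ} (M : Fin p → Finset (Fin (n - 1))) :
    (∀ z ∈ hgPoly M, (∀ z' ∈ hgPoly M, z' ≤ z → z' = z) →
      ∀ j, z j = (0 : Rmax) ∨ z j = ⊥) ∧
    (∀ z : Fin (n - 1) → Rmax, (∀ j, z j = (0 : Rmax) ∨ z j = ⊥) →
      ((z ∈ hgPoly M ∧ ∀ z' ∈ hgPoly M, z' ≤ z → z' = z) ↔
        ((∀ i : Fin p, ∃ j ∈ M i, z j ≠ ⊥) ∧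
          ∀ T : Set (Fin (n - 1)), T ⊆ { j | z j ≠ ⊥ } →
            (∀ i : Fin p, ∃ j ∈ T, j ∈ M i) → T = { j | z j ≠ ⊥ }))) := by
  classical
  constructor
  · intro z hz hmin j
    set z' : Fin (n - 1) → Rmax := fun j => if (0 : Rmax) ≤ z j then 0 else ⊥ with hz'def
    have hle : z' ≤ z := fun j => by by_cases h : (0 : Rmax) ≤ z j <;> simp [z', h]
    have hz'mem : z' ∈ hgPoly M := by
      rw [mem_hgPoly_iff]
      intro i
      obtain ⟨j, hj, h0⟩ := (mem_hgPoly_iff M z).mp hz i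
      exact ⟨j, hj, by simp [z', h0]⟩
    have heq := hmin z' hz'mem hle
    rw [← heq]
    by_cases h : (0 : Rmax) ≤ z j <;> simp [z', h]
  · intro z hz01
    have hsupp : ∀ j, z j ≠ ⊥ ↔ (0 : Rmax) ≤ z j := by
      intro j; rcases hz01 j with h | h <;> simp [h]
    constructor
    · rintro ⟨hmem, hmin⟩
      refine ⟨fun i => ?_, ?_⟩
      · obtain ⟨j, hj, h0⟩ := (mem_hgPoly_iff M z).mp hmem i
        exact ⟨j, hj, (hsupp j).mpr h0⟩
      · intro T hT htrans
        set z' : Fin (n - 1) → Rmax := fun j => if j ∈ T then z j else ⊥ with hz'def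
        have hle : z' ≤ z := fun j => by by_cases h : j ∈ T <;> simp [z', h]
        have hz'mem : z' ∈ hgPoly M := by
          rw [mem_hgPoly_iff]
          intro i
          obtain ⟨j, hjT, hjM⟩ := htrans i
          refine ⟨j, hjM, ?_⟩
          simp only [z', if_pos hjT]
          exact (hsupp j).mp (hT hjT)
        have heq := hmin z' hz'mem hle
        ext j
        simp only [Set.mem_setOf_eq]
        constructor
        · exact fun hj => hT hj
        · intro hj
          by_contra hjT
          have : z' j = ⊥ := by simp [z', hjT]
          rw [heq] at this
          exact hj this
    · rintro ⟨htrans, hminT⟩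
      have hzmem : z ∈ hgPoly M := by
        rw [mem_hgPoly_iff]
        intro i
        obtain ⟨j, hj, h0⟩ := htrans i
        exact ⟨j, hj, (hsupp j).mp h0⟩
      refine ⟨hzmem, ?_⟩
      intro z' hz' hle
      set T : Set (Fin (n - 1)) := { j | (0 : Rmax) ≤ z' j } with hTdef
      have hTsub : T ⊆ { j | z j ≠ ⊥ } := fun j hj =>
        (hsupp j).mpr (le_trans hj (hle j))
      have hTtrans : ∀ i : Fin p, ∃ j ∈ T, j ∈ M i := by
        intro i
        obtain ⟨j, hjM, h0⟩ := (mem_hgPoly_iff M z').mp hz' i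
        exact ⟨j, h0, hjM⟩
      have hTeq := hminT T hTsub hTtrans
      funext j
      rcases hz01 j with h | h
      · have hj : j ∈ T := by
          rw [hTeq]; simp only [Set.mem_setOf_eq, h]; simp
        have h1 : (0 : Rmax) ≤ z' j := hj
        have h2 : z' j ≤ z j := hle j
        rw [h] at h2
        rw [h]; exact le_antisymm h2 h1
      · have h2 : z' j ≤ z j := hle j
        rw [h] at h2
        rw [h]; exact le_bot_iff.mp h2
end
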